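/- arXiv:2407.02578 — 6 statements merged into one kernel-verified Lean document; each statement's English description precedes it below -/
import Mathlib

section
/- Let d ≥ 1 and 0 < α < 1. Let u : ℝ^d → ℝ^d be continuously differentiable and divergence-free with A := sup_x ‖Du(x)‖ < ∞ (operator norm of the derivative). Let F : ℝ^d → ℝ be continuously differentiable and bounded, with bounded gradient and finite Hölder seminorm [F]_α. Let K : ℝ^d → ℝ be a Schwartz function. Define C(x) := ∫_{ℝ^d} (u(x−h) − u(x)) · (∇F)(x−h) K(h) dh. Then both of the following hold: sup_x |C(x)| ≤ A · [F]_α · ∫_{ℝ^d} |h|^{1+α} |∇K(h)| dh, and sup_x |C(x)| ≤ A · (sup_x |F(x)|) · ∫_{ℝ^d} |h| |∇K(h)| dh. -/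
open MeasureTheory
open scoped SchwartzMap

/-!
Write `v(h) = u(x - h) - u(x)`; it is divergence-free in `h` and `|v(h)| ≤ A |h|`. For `g`
decaying fast enough, `∫ ∇g · v = Σᵢ ∫ ∂ᵢ (g vᵢ) = 0`, each term vanishing by integration by
parts along a coordinate direction. Taking `g = (F(x - ·) - c) K` moves the derivative from `F`
onto `K`: the commutator equals `∫ (F(x - h) - c) ∇K(h) · v(h) dh` for every constant `c`.
The choice `c = F(x)` together with the Hölder bound gives the first estimate, and `c = 0`
together with `|F| ≤ MF` the second.
-/

section IntegrationByParts

variable {E : Type*} [NormedAddCommGroup E] [NormedSpace ℝ E] [FiniteDimensional ℝ E]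
  [MeasurableSpace E] [BorelSpace E] {μ : Measure E} [μ.IsAddHaarMeasure]

theorem integral_fderiv_apply_eq_zero_of_integrable {φ : E → ℝ} (v : E)
    (hφ : Differentiable ℝ φ) (hφi : Integrable φ μ)
    (hφ'i : Integrable (fun x => fderiv ℝ φ x v) μ) :
    ∫ x, fderiv ℝ φ x v ∂μ = 0 := by
  simpa using integral_mul_fderiv_eq_neg_fderiv_mul_of_integrable (μ := μ) (f := fun _ => 1)
    (v := v) (by simp) (by simpa using hφ'i) (by simpa using hφi)
    (fun x _ => differentiableAt_const _) (fun x _ => hφ x)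

end IntegrationByParts

section DivergenceFree

variable {ι : Type*} [Fintype ι] {g : EuclideanSpace ℝ ι → ℝ}
  {w : EuclideanSpace ℝ ι → EuclideanSpace ℝ ι}

theorem differentiableAt_euclidean_apply {x : EuclideanSpace ℝ ι} (hw : DifferentiableAt ℝ w x)
    (i : ι) : DifferentiableAt ℝ (fun y => w y i) x :=
  (EuclideanSpace.proj (𝕜 := ℝ) i).differentiableAt.comp x hw

theorem fderiv_euclidean_apply_apply {x : EuclideanSpace ℝ ι} (hw : DifferentiableAt ℝ w x)
    (i : ι) (v : EuclideanSpace ℝ ι) :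
    fderiv ℝ (fun y => w y i) x v = fderiv ℝ w x v i := by
  change fderiv ℝ (EuclideanSpace.proj i ∘ w) x v = _
  rw [((EuclideanSpace.proj i).hasFDerivAt.comp x hw.hasFDerivAt).fderiv]
  rfl

theorem fderiv_apply_eq_sum_fderiv_mul_apply [DecidableEq ι] (hg : Differentiable ℝ g)
    (hw : Differentiable ℝ w)
    (hdiv : ∀ x, ∑ i, fderiv ℝ (fun y => w y i) x (EuclideanSpace.single i 1) = 0)
    (x : EuclideanSpace ℝ ι) :
    fderiv ℝ g x (w x) =
      ∑ i, fderiv ℝ (fun y => g y * w y i) x (EuclideanSpace.single i 1) := by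
  simp only [fderiv_fun_mul (hg x) (differentiableAt_euclidean_apply (hw x) _), add_apply,
    smul_apply, smul_eq_mul, Finset.sum_add_distrib, ← Finset.mul_sum, hdiv, mul_zero, zero_add]
  conv_lhs => rw [← (EuclideanSpace.basisFun ι ℝ).sum_repr (w x)]
  simp [map_sum]

theorem integral_fderiv_apply_eq_zero_of_divergence_free [DecidableEq ι] (hg : Differentiable ℝ g)
    (hw : Differentiable ℝ w)
    (hdiv : ∀ x, ∑ i, fderiv ℝ (fun y => w y i) x (EuclideanSpace.single i 1) = 0)
    (hgw : ∀ i, Integrable fun x => g x * w x i)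
    (hgw' : ∀ i,
      Integrable fun x => fderiv ℝ (fun y => g y * w y i) x (EuclideanSpace.single i 1)) :
    ∫ x, fderiv ℝ g x (w x) = 0 := by
  simp_rw [fderiv_apply_eq_sum_fderiv_mul_apply hg hw hdiv]
  rw [integral_finsetSum _ fun i _ => hgw' i]
  exact Finset.sum_eq_zero fun i _ => integral_fderiv_apply_eq_zero_of_integrable _
    (hg.mul fun x => differentiableAt_euclidean_apply (hw x) i) (hgw i) (hgw' i)

theorem integral_fderiv_apply_eq_zero_of_divergence_free_of_norm_le [DecidableEq ι] {A : ℝ}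
    (hg : Differentiable ℝ g) (hw : Differentiable ℝ w)
    (hdiv : ∀ x, ∑ i, fderiv ℝ (fun y => w y i) x (EuclideanSpace.single i 1) = 0)
    (hwA : ∀ x, ‖w x‖ ≤ A * ‖x‖) (hw'A : ∀ x, ‖fderiv ℝ w x‖ ≤ A)
    (hg0 : Integrable g) (hg1 : Integrable fun x => ‖x‖ * ‖g x‖)
    (hg'1 : Integrable fun x => ‖x‖ * ‖fderiv ℝ g x‖) :
    ∫ x, fderiv ℝ g x (w x) = 0 := by
  have hwi : ∀ x i, ‖w x i‖ ≤ A * ‖x‖ := fun x i => (PiLp.norm_apply_le _ _).trans (hwA x)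
  refine integral_fderiv_apply_eq_zero_of_divergence_free hg hw hdiv (fun i => ?_) (fun i => ?_)
  · refine (hg1.const_mul A).mono' (hg.continuous.mul
      ((EuclideanSpace.proj i).continuous.comp hw.continuous)).aestronglyMeasurable
      (ae_of_all _ fun x => ?_)
    calc ‖g x * w x i‖ = ‖g x‖ * ‖w x i‖ := norm_mul _ _
      _ ≤ ‖g x‖ * (A * ‖x‖) := by gcongr; exact hwi x i
      _ = A * (‖x‖ * ‖g x‖) := by ring
  · refine ((hg0.norm.const_mul A).add (hg'1.const_mul A)).mono'
      (measurable_fderiv_apply_const ℝ _ _).aestronglyMeasurable (ae_of_all _ fun x => ?_)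
    have hw' : ‖fderiv ℝ w x (EuclideanSpace.single i 1) i‖ ≤ A :=
      (PiLp.norm_apply_le _ _).trans
        ((ContinuousLinearMap.le_opNorm _ _).trans (by simpa using hw'A x))
    have hg' : ‖fderiv ℝ g x (EuclideanSpace.single i 1)‖ ≤ ‖fderiv ℝ g x‖ := by
      simpa using (fderiv ℝ g x).le_opNorm (EuclideanSpace.single i 1)
    rw [fderiv_fun_mul (hg x) (differentiableAt_euclidean_apply (hw x) i)]
    simp only [add_apply, smul_apply, smul_eq_mul, fderiv_euclidean_apply_apply (hw x)]
    calc ‖g x * fderiv ℝ w x (EuclideanSpace.single i 1) i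
          + w x i * fderiv ℝ g x (EuclideanSpace.single i 1)‖
        ≤ ‖g x‖ * A + A * ‖x‖ * ‖fderiv ℝ g x‖ := by
          refine (norm_add_le _ _).trans (add_le_add ?_ ?_) <;> rw [norm_mul]
          · gcongr
          · exact mul_le_mul (hwi x i) hg' (norm_nonneg _) ((norm_nonneg _).trans (hwi x i))
      _ = A * ‖g x‖ + A * (‖x‖ * ‖fderiv ℝ g x‖) := by ring

end DivergenceFree

section Schwartz

variable {D V : Type*} [NormedAddCommGroup D] [NormedSpace ℝ D] [NormedAddCommGroup V]
  [NormedSpace ℝ V] [MeasurableSpace D] [BorelSpace D] [SecondCountableTopology D]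
  {μ : Measure D} [μ.HasTemperateGrowth]

theorem SchwartzMap.integrable_rpow_mul (f : 𝓢(D, V)) {s : ℝ} (hs : 0 ≤ s) :
    Integrable (fun x => ‖x‖ ^ s * ‖f x‖) μ := by
  refine ((f.integrable_pow_mul μ 0).add (f.integrable_pow_mul μ ⌈s⌉₊)).mono'
    ((continuous_norm.rpow_const fun _ => Or.inr hs).mul f.continuous.norm).aestronglyMeasurable
    (ae_of_all _ fun x => ?_)
  have hpow : ‖x‖ ^ s ≤ 1 + ‖x‖ ^ ⌈s⌉₊ := by
    rcases le_total ‖x‖ 1 with hx | hx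
    · linarith [Real.rpow_le_one (norm_nonneg x) hx hs, pow_nonneg (norm_nonneg x) ⌈s⌉₊]
    · rw [← Real.rpow_natCast]
      linarith [Real.rpow_le_rpow_of_exponent_le hx (Nat.le_ceil s)]
  rw [Real.norm_of_nonneg (by positivity), Pi.add_apply, pow_zero, one_mul]
  nlinarith [norm_nonneg (f x)]

theorem SchwartzMap.integrable_pow_mul_norm_mul (K : 𝓢(D, ℝ)) {φ : D → ℝ} (hφ : Continuous φ)
    {M : ℝ} (hM : ∀ x, ‖φ x‖ ≤ M) (k : ℕ) :
    Integrable (fun x => ‖x‖ ^ k * ‖φ x * K x‖) μ := by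
  refine ((K.integrable_pow_mul μ k).const_mul M).mono'
    ((continuous_norm.pow k).mul (hφ.mul K.continuous).norm).aestronglyMeasurable
    (ae_of_all _ fun x => ?_)
  rw [Real.norm_of_nonneg (by positivity), norm_mul]
  calc ‖x‖ ^ k * (‖φ x‖ * ‖K x‖) ≤ ‖x‖ ^ k * (M * ‖K x‖) := by gcongr; exact hM x
    _ = M * (‖x‖ ^ k * ‖K x‖) := by ring

theorem SchwartzMap.integrable_pow_mul_norm_fderiv_mul (K : 𝓢(D, ℝ)) {φ : D → ℝ}
    (hφ : Differentiable ℝ φ) {M M' : ℝ} (hM : ∀ x, ‖φ x‖ ≤ M)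
    (hM' : ∀ x, ‖fderiv ℝ φ x‖ ≤ M') (k : ℕ) :
    Integrable (fun x => ‖x‖ ^ k * ‖fderiv ℝ (fun y => φ y * K y) x‖) μ := by
  have hK' := (fderivCLM ℝ D ℝ K).integrable_pow_mul μ k
  simp only [fderivCLM_apply] at hK'
  refine ((hK'.const_mul M).add ((K.integrable_pow_mul μ k).const_mul M')).mono'
    ((continuous_norm.pow k).aestronglyMeasurable.mul
      (measurable_fderiv ℝ _).norm.aestronglyMeasurable) (ae_of_all _ fun x => ?_)
  rw [Real.norm_of_nonneg (by positivity), fderiv_fun_mul (hφ x) (K.differentiableAt)]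
  calc ‖x‖ ^ k * ‖φ x • fderiv ℝ K x + K x • fderiv ℝ φ x‖
      ≤ ‖x‖ ^ k * (M * ‖fderiv ℝ K x‖ + ‖K x‖ * M') := by
        gcongr
        refine (norm_add_le _ _).trans (add_le_add ?_ ?_) <;> rw [norm_smul]
        · gcongr; exact hM x
        · gcongr; exact hM' x
    _ = M * (‖x‖ ^ k * ‖fderiv ℝ K x‖) + M' * (‖x‖ ^ k * ‖K x‖) := by ring

end Schwartz

section Shift

variable {E G : Type*} [NormedAddCommGroup E] [NormedSpace ℝ E] [NormedAddCommGroup G]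
  [NormedSpace ℝ G] {f : E → G}

theorem fderiv_comp_const_sub {a x : E} (hf : DifferentiableAt ℝ f (a - x)) :
    fderiv ℝ (fun y => f (a - y)) x = -fderiv ℝ f (a - x) := by
  have : HasFDerivAt (fun y => f (a - y)) ((fderiv ℝ f (a - x)).comp (-.id ℝ E)) x :=
    hf.hasFDerivAt.comp x ((hasFDerivAt_id x).const_sub a)
  rw [this.fderiv]
  ext v
  simp

theorem norm_apply_sub_sub_apply_le {A : ℝ} (hf : Differentiable ℝ f)
    (hA : ∀ x, ‖fderiv ℝ f x‖ ≤ A) (x h : E) : ‖f (x - h) - f x‖ ≤ A * ‖h‖ := by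
  simpa using convex_univ.norm_image_sub_le_of_norm_fderiv_le (fun y _ => hf y)
    (fun y _ => hA y) (Set.mem_univ x) (Set.mem_univ (x - h))

end Shift

section Commutator

variable {ι : Type*} [Fintype ι] {u : EuclideanSpace ℝ ι → EuclideanSpace ℝ ι}
  {F : EuclideanSpace ℝ ι → ℝ} {K : 𝓢(EuclideanSpace ℝ ι, ℝ)} {A : ℝ}

noncomputable def advectiveCommutator (u : EuclideanSpace ℝ ι → EuclideanSpace ℝ ι)
    (F : EuclideanSpace ℝ ι → ℝ) (K : 𝓢(EuclideanSpace ℝ ι, ℝ)) (x : EuclideanSpace ℝ ι) : ℝ :=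
  ∫ h, fderiv ℝ F (x - h) (u (x - h) - u x) * K h

theorem integral_fderiv_mul_schwartz_apply_shift_eq_zero [DecidableEq ι]
    (hu : Differentiable ℝ u)
    (hdiv : ∀ x, ∑ i, fderiv ℝ (fun y => u y i) x (EuclideanSpace.single i 1) = 0)
    (hA : ∀ x, ‖fderiv ℝ u x‖ ≤ A) {φ : EuclideanSpace ℝ ι → ℝ} (hφ : Differentiable ℝ φ)
    {M M' : ℝ} (hM : ∀ x, ‖φ x‖ ≤ M) (hM' : ∀ x, ‖fderiv ℝ φ x‖ ≤ M')
    (K : 𝓢(EuclideanSpace ℝ ι, ℝ)) (x : EuclideanSpace ℝ ι) :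
    ∫ h, fderiv ℝ (fun y => φ y * K y) h (u (x - h) - u x) = 0 := by
  have hw : Differentiable ℝ fun h => u (x - h) - u x :=
    (hu.comp (differentiable_const x |>.sub differentiable_id)).sub_const _
  have hw' : ∀ h, fderiv ℝ (fun h => u (x - h) - u x) h = -fderiv ℝ u (x - h) := fun h => by
    rw [fderiv_sub_const, fderiv_comp_const_sub (hu _)]
  refine integral_fderiv_apply_eq_zero_of_divergence_free_of_norm_le (hφ.mul K.differentiable) hw
    (fun h => ?_) (norm_apply_sub_sub_apply_le hu hA x) (fun h => by rw [hw', norm_neg]; exact hA _)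
    ((integrable_norm_iff (hφ.continuous.mul K.continuous).aestronglyMeasurable).1
      (by simpa using K.integrable_pow_mul_norm_mul hφ.continuous hM 0))
    (by simpa using K.integrable_pow_mul_norm_mul hφ.continuous hM 1)
    (by simpa using K.integrable_pow_mul_norm_fderiv_mul hφ hM hM' 1)
  simp only [fderiv_euclidean_apply_apply (hw h), hw', neg_apply,
    PiLp.neg_apply, Finset.sum_neg_distrib, ← fderiv_euclidean_apply_apply (hu (x - h)), hdiv,
    neg_zero]

theorem advectiveCommutator_eq_integral_sub_mul_fderiv [DecidableEq ι]
    (hu : Differentiable ℝ u)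
    (hdiv : ∀ x, ∑ i, fderiv ℝ (fun y => u y i) x (EuclideanSpace.single i 1) = 0)
    (hA : ∀ x, ‖fderiv ℝ u x‖ ≤ A) (hF : ContDiff ℝ 1 F) {MF MG : ℝ} (hMF : ∀ x, |F x| ≤ MF)
    (hMG : ∀ x, ‖fderiv ℝ F x‖ ≤ MG) (x : EuclideanSpace ℝ ι) (c : ℝ) :
    advectiveCommutator u F K x = ∫ h, (F (x - h) - c) * fderiv ℝ K h (u (x - h) - u x) := by
  have hFd := hF.differentiable one_ne_zero
  have hφ : Differentiable ℝ fun y => F (x - y) - c :=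
    (hFd.comp (differentiable_const x |>.sub differentiable_id)).sub_const c
  have hφ' : ∀ h, fderiv ℝ (fun y => F (x - y) - c) h = -fderiv ℝ F (x - h) := fun h => by
    rw [fderiv_sub_const, fderiv_comp_const_sub (hFd _)]
  have hφM : ∀ y, |F (x - y) - c| ≤ MF + |c| := fun y =>
    (abs_sub _ _).trans (add_le_add_left (hMF _) _)
  have hv : ∀ h, ‖u (x - h) - u x‖ ≤ A * ‖h‖ := norm_apply_sub_sub_apply_le hu hA x
  have hv_cont : Continuous fun h => u (x - h) - u x :=
    (hu.continuous.comp (continuous_const.sub continuous_id)).sub continuous_const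
  have hadv : Integrable fun h => fderiv ℝ F (x - h) (u (x - h) - u x) * K h := by
    refine ((K.integrable_pow_mul volume 1).const_mul (MG * A)).mono'
      ((((hF.continuous_fderiv one_ne_zero).comp (continuous_const.sub continuous_id)).clm_apply
        hv_cont).mul K.continuous).aestronglyMeasurable (ae_of_all _ fun h => ?_)
    calc ‖fderiv ℝ F (x - h) (u (x - h) - u x) * K h‖
        ≤ MG * (A * ‖h‖) * ‖K h‖ := by
          rw [norm_mul]
          gcongr
          exact (ContinuousLinearMap.le_opNorm _ _).trans (mul_le_mul (hMG _) (hv h)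
            (norm_nonneg _) ((norm_nonneg _).trans (hMG (x - h))))
      _ = MG * A * (‖h‖ ^ 1 * ‖K h‖) := by ring
  have hKv : Integrable fun h => (F (x - h) - c) * fderiv ℝ K h (u (x - h) - u x) := by
    have hK' := (SchwartzMap.fderivCLM ℝ _ ℝ K).integrable_pow_mul volume 1
    simp only [SchwartzMap.fderivCLM_apply, pow_one] at hK'
    refine (hK'.const_mul ((MF + |c|) * A)).mono' ((hφ.continuous.mul
      (((K.smooth 1).continuous_fderiv one_ne_zero).clm_apply hv_cont))).aestronglyMeasurable
      (ae_of_all _ fun h => ?_)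
    rw [norm_mul, Real.norm_eq_abs]
    calc |F (x - h) - c| * ‖fderiv ℝ K h (u (x - h) - u x)‖
        ≤ (MF + |c|) * (‖fderiv ℝ K h‖ * (A * ‖h‖)) := by
          refine mul_le_mul (hφM h) ((ContinuousLinearMap.le_opNorm _ _).trans ?_)
            (norm_nonneg _) ((abs_nonneg _).trans (hφM h))
          gcongr
          exact hv h
      _ = (MF + |c|) * A * (‖h‖ * ‖fderiv ℝ K h‖) := by ring
  have hzero := integral_fderiv_mul_schwartz_apply_shift_eq_zero hu hdiv hA hφ hφM
    (fun h => by rw [hφ', norm_neg]; exact hMG _) K x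
  have hprod : ∀ h, fderiv ℝ (fun y => (F (x - y) - c) * K y) h (u (x - h) - u x) =
      (F (x - h) - c) * fderiv ℝ K h (u (x - h) - u x) -
        fderiv ℝ F (x - h) (u (x - h) - u x) * K h := fun h => by
    rw [fderiv_fun_mul (hφ h) K.differentiableAt, hφ']
    simp only [add_apply, smul_apply, neg_apply, smul_eq_mul]
    ring
  simp only [hprod] at hzero
  rw [integral_sub hKv hadv, sub_eq_zero] at hzero
  exact hzero.symm

theorem abs_advectiveCommutator_le [DecidableEq ι] (hu : Differentiable ℝ u)
    (hdiv : ∀ x, ∑ i, fderiv ℝ (fun y => u y i) x (EuclideanSpace.single i 1) = 0)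
    (hA : ∀ x, ‖fderiv ℝ u x‖ ≤ A) (hF : ContDiff ℝ 1 F) {MF MG : ℝ} (hMF : ∀ x, |F x| ≤ MF)
    (hMG : ∀ x, ‖fderiv ℝ F x‖ ≤ MG) (x : EuclideanSpace ℝ ι) (c : ℝ)
    {ρ : EuclideanSpace ℝ ι → ℝ} (hρ : ∀ h, |F (x - h) - c| * ‖h‖ ≤ ρ h)
    (hρK : Integrable fun h => ρ h * ‖fderiv ℝ K h‖) :
    |advectiveCommutator u F K x| ≤ A * ∫ h, ρ h * ‖fderiv ℝ K h‖ := by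
  have hA0 : 0 ≤ A := (norm_nonneg _).trans (hA 0)
  rw [advectiveCommutator_eq_integral_sub_mul_fderiv hu hdiv hA hF hMF hMG x c,
    ← integral_const_mul, ← Real.norm_eq_abs]
  refine (norm_integral_le_integral_norm _).trans (integral_mono_of_nonneg
    (ae_of_all _ fun _ => norm_nonneg _) (hρK.const_mul A) (ae_of_all _ fun h => ?_))
  calc ‖(F (x - h) - c) * fderiv ℝ K h (u (x - h) - u x)‖
      ≤ |F (x - h) - c| * (‖fderiv ℝ K h‖ * (A * ‖h‖)) := by
        rw [norm_mul, Real.norm_eq_abs]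
        gcongr
        exact (ContinuousLinearMap.le_opNorm _ _).trans
          (mul_le_mul_of_nonneg_left (norm_apply_sub_sub_apply_le hu hA x h) (norm_nonneg _))
    _ = A * (|F (x - h) - c| * ‖h‖) * ‖fderiv ℝ K h‖ := by ring
    _ ≤ A * ρ h * ‖fderiv ℝ K h‖ := by gcongr; exact hρ h
    _ = A * (ρ h * ‖fderiv ℝ K h‖) := by ring

end Commutator

theorem advective_convolution_commutator_estimate_general
    (d : ℕ) (α : ℝ) (hα0 : 0 < α)
    (u : EuclideanSpace ℝ (Fin d) → EuclideanSpace ℝ (Fin d))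
    (hu : ContDiff ℝ 1 u)
    (hdiv : ∀ x, ∑ i : Fin d,
      fderiv ℝ (fun y => u y i) x (EuclideanSpace.single i 1) = 0)
    (A : ℝ) (hA : ∀ x, ‖fderiv ℝ u x‖ ≤ A)
    (F : EuclideanSpace ℝ (Fin d) → ℝ) (hF : ContDiff ℝ 1 F)
    (MF : ℝ) (hMF : ∀ x, |F x| ≤ MF)
    (MG : ℝ) (hMG : ∀ x, ‖fderiv ℝ F x‖ ≤ MG)
    (Hα : ℝ) (hHα : ∀ x y, |F x - F y| ≤ Hα * ‖x - y‖ ^ α)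
    (K : SchwartzMap (EuclideanSpace ℝ (Fin d)) ℝ) :
    (∀ x, |∫ h, fderiv ℝ F (x - h) (u (x - h) - u x) * K h| ≤
        A * Hα * ∫ h, ‖h‖ ^ (1 + α) * ‖fderiv ℝ (⇑K) h‖) ∧
    (∀ x, |∫ h, fderiv ℝ F (x - h) (u (x - h) - u x) * K h| ≤
        A * MF * ∫ h, ‖h‖ * ‖fderiv ℝ (⇑K) h‖) := by
  have hu' := hu.differentiable one_ne_zero
  have hK'_int : ∀ s : ℝ, 0 ≤ s → Integrable fun h => ‖h‖ ^ s * ‖fderiv ℝ K h‖ := fun s hs => by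
    simpa using (SchwartzMap.fderivCLM ℝ _ ℝ K).integrable_rpow_mul (μ := volume) hs
  refine ⟨fun x => ?_, fun x => ?_⟩
  · have hHölder : ∀ h, |F (x - h) - F x| * ‖h‖ ≤ Hα * ‖h‖ ^ (1 + α) := fun h => by
      have := hHα (x - h) x
      rw [sub_sub_cancel_left, norm_neg] at this
      rw [Real.rpow_add' (norm_nonneg h) (by positivity), Real.rpow_one]
      nlinarith [norm_nonneg h]
    calc |∫ h, fderiv ℝ F (x - h) (u (x - h) - u x) * K h| = |advectiveCommutator u F K x| := rfl
      _ ≤ A * ∫ h, Hα * ‖h‖ ^ (1 + α) * ‖fderiv ℝ K h‖ :=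
        abs_advectiveCommutator_le hu' hdiv hA hF hMF hMG x (F x) hHölder
          (by simpa only [mul_assoc] using (hK'_int _ (by positivity)).const_mul Hα)
      _ = A * Hα * ∫ h, ‖h‖ ^ (1 + α) * ‖fderiv ℝ K h‖ := by
        simp only [mul_assoc, integral_const_mul]
  · calc |∫ h, fderiv ℝ F (x - h) (u (x - h) - u x) * K h| = |advectiveCommutator u F K x| := rfl
      _ ≤ A * ∫ h, MF * ‖h‖ * ‖fderiv ℝ K h‖ :=
        abs_advectiveCommutator_le hu' hdiv hA hF hMF hMG x 0
          (fun h => by rw [sub_zero]; gcongr; exact hMF _)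
          (by simpa only [mul_assoc, Real.rpow_one] using (hK'_int 1 zero_le_one).const_mul MF)
      _ = A * MF * ∫ h, ‖h‖ * ‖fderiv ℝ K h‖ := by
        simp only [mul_assoc, integral_const_mul]

/-- Commutator estimate between advection by a divergence-free `C¹` vector field `u`
and convolution with a Schwartz kernel `K`:
for `C(x) = ∫ (u(x-h) - u(x)) · ∇F(x-h) K(h) dh` one has both
`|C(x)| ≤ A [F]_α ∫ |h|^{1+α} |∇K(h)| dh` and `|C(x)| ≤ A ‖F‖_{C⁰} ∫ |h| |∇K(h)| dh`. -/
theorem advective_convolution_commutator_estimate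
    (d : ℕ) (hd : 1 ≤ d) (α : ℝ) (hα0 : 0 < α) (hα1 : α < 1)
    (u : EuclideanSpace ℝ (Fin d) → EuclideanSpace ℝ (Fin d))
    (hu : ContDiff ℝ 1 u)
    (hdiv : ∀ x, ∑ i : Fin d,
      fderiv ℝ (fun y => u y i) x (EuclideanSpace.single i 1) = 0)
    (A : ℝ) (hA : ∀ x, ‖fderiv ℝ u x‖ ≤ A)
    (F : EuclideanSpace ℝ (Fin d) → ℝ) (hF : ContDiff ℝ 1 F)
    (MF : ℝ) (hMF : ∀ x, |F x| ≤ MF)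
    (MG : ℝ) (hMG : ∀ x, ‖fderiv ℝ F x‖ ≤ MG)
    (Hα : ℝ) (hHα : ∀ x y, |F x - F y| ≤ Hα * ‖x - y‖ ^ α)
    (K : SchwartzMap (EuclideanSpace ℝ (Fin d)) ℝ) :
    (∀ x, |∫ h, fderiv ℝ F (x - h) (u (x - h) - u x) * K h| ≤
        A * Hα * ∫ h, ‖h‖ ^ (1 + α) * ‖fderiv ℝ (⇑K) h‖) ∧
    (∀ x, |∫ h, fderiv ℝ F (x - h) (u (x - h) - u x) * K h| ≤
        A * MF * ∫ h, ‖h‖ * ‖fderiv ℝ (⇑K) h‖) :=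
  advective_convolution_commutator_estimate_general d α hα0 u hu hdiv A hA F hF MF hMF MG hMG Hα hHα
    K
end

section
/- Let d, n ≥ 1, let L̲ ≥ 0 and L' ≥ 1 be integers, and let N̂ ≥ 1, Ξ ≥ 1, ζ > 0, H ≥ 0 be real numbers. Let u : ℝ × ℝ^d → ℝ^d be smooth and let D_t = ∂_t + u·∇. Let F : ℝ × ℝ^d → ℝ^n be smooth, taking values in a compact set V ⊂ ℝ^n, and suppose that for every r ∈ {0,1}, every multi-index a with |a| + r ≤ L', and every t: ‖∇_a D_t^r F(t,·)‖_{C⁰} ≤ N̂^{(|a|+r−L̲)₊} Ξ^{|a|} ζ^r H. Let G be a smooth real-valued function defined on an open neighborhood of V. Then there is a constant C depending only on d, n, L', G and V such that for every r ∈ {0,1}, every multi-index a with |a| + r ≤ L', and every t: ‖∇_a D_t^r (G ∘ F)(t,·)‖_{C⁰} ≤ C N̂^{(|a|+r−L̲)₊} Ξ^{|a|} ζ^r (1 + H)^{L'}. -/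
/-- Spatial partial derivative `∂_i` of a time-dependent function on `ℝ × ℝ^d`. -/
noncomputable def pderivE (d : ℕ) (i : Fin d)
    (F : ℝ × EuclideanSpace ℝ (Fin d) → ℝ) : ℝ × EuclideanSpace ℝ (Fin d) → ℝ :=
  fun p => fderiv ℝ (fun x => F (p.1, x)) p.2 (EuclideanSpace.single i 1)

/-- Iterated spatial derivative `∇_a` along a multi-index `a`. -/
noncomputable def nablaE (d : ℕ) :
    List (Fin d) → (ℝ × EuclideanSpace ℝ (Fin d) → ℝ) → ℝ × EuclideanSpace ℝ (Fin d) → ℝ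
  | [], F => F
  | i :: a, F => pderivE d i (nablaE d a F)

/-- The advective derivative `D_t F = ∂_t F + u · ∇F`. -/
noncomputable def advE (d : ℕ) (u : ℝ × EuclideanSpace ℝ (Fin d) → EuclideanSpace ℝ (Fin d))
    (F : ℝ × EuclideanSpace ℝ (Fin d) → ℝ) : ℝ × EuclideanSpace ℝ (Fin d) → ℝ :=
  fun p => deriv (fun t => F (t, p.2)) p.1 + ∑ j : Fin d, u p j * pderivE d j F p

namespace WNCR

abbrev EE (d : ℕ) := ℝ × EuclideanSpace ℝ (Fin d)

variable {d n : ℕ}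

lemma hasFDerivAt_sliceX {Φ : EE d → ℝ} {p : EE d} (hΦ : DifferentiableAt ℝ Φ p) :
    HasFDerivAt (fun x => Φ (p.1, x))
      ((fderiv ℝ Φ p).comp (ContinuousLinearMap.inr ℝ ℝ (EuclideanSpace ℝ (Fin d)))) p.2 := by
  have h1 : HasFDerivAt (fun x : EuclideanSpace ℝ (Fin d) => (p.1, x))
      (ContinuousLinearMap.inr ℝ ℝ (EuclideanSpace ℝ (Fin d))) p.2 :=
    hasFDerivAt_prodMk_right p.1 p.2
  have h2 : HasFDerivAt Φ (fderiv ℝ Φ p) ((fun x : EuclideanSpace ℝ (Fin d) => (p.1, x)) p.2) := by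
    simpa using hΦ.hasFDerivAt
  exact h2.comp p.2 h1

lemma pderivE_eq {Φ : EE d → ℝ} {p : EE d} (hΦ : DifferentiableAt ℝ Φ p) (i : Fin d) :
    pderivE d i Φ p = fderiv ℝ Φ p (0, EuclideanSpace.single i 1) := by
  have h := (hasFDerivAt_sliceX hΦ).fderiv
  simp only [pderivE, h]
  rfl

lemma hasDerivAt_sliceT {Φ : EE d → ℝ} {p : EE d} (hΦ : DifferentiableAt ℝ Φ p) :
    HasDerivAt (fun t => Φ (t, p.2)) (fderiv ℝ Φ p (1, 0)) p.1 := by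
  have h1 : HasDerivAt (fun t : ℝ => (t, p.2)) ((1 : ℝ), (0 : EuclideanSpace ℝ (Fin d))) p.1 :=
    (hasDerivAt_id p.1).prodMk (hasDerivAt_const _ _)
  have h2 : HasFDerivAt Φ (fderiv ℝ Φ p) ((fun t : ℝ => (t, p.2)) p.1) := by
    simpa using hΦ.hasFDerivAt
  have := h2.comp_hasDerivAt p.1 h1
  exact this

lemma derivT_eq {Φ : EE d → ℝ} {p : EE d} (hΦ : DifferentiableAt ℝ Φ p) :
    deriv (fun t => Φ (t, p.2)) p.1 = fderiv ℝ Φ p (1, 0) :=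
  (hasDerivAt_sliceT hΦ).deriv

lemma one_le_inftyS : ((⊤ : ℕ∞) : WithTop ℕ∞) ≠ 0 := by
  simp

lemma contDiff_pderivE {Φ : EE d → ℝ} (hΦ : ContDiff ℝ ((⊤:ℕ∞) : WithTop ℕ∞) Φ) (i : Fin d) :
    ContDiff ℝ ((⊤:ℕ∞) : WithTop ℕ∞) (pderivE d i Φ) := by
  have h := (contDiff_infty_iff_fderiv.mp hΦ).2
  have he : pderivE d i Φ = fun p => fderiv ℝ Φ p (0, EuclideanSpace.single i 1) :=
    funext fun p => pderivE_eq ((hΦ.differentiable one_le_inftyS) p) i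
  rw [he]
  exact h.clm_apply contDiff_const

lemma contDiff_nablaE {Φ : EE d → ℝ} (hΦ : ContDiff ℝ ((⊤:ℕ∞) : WithTop ℕ∞) Φ) :
    ∀ a : List (Fin d), ContDiff ℝ ((⊤:ℕ∞) : WithTop ℕ∞) (nablaE d a Φ)
  | [] => hΦ
  | i :: a => contDiff_pderivE (contDiff_nablaE hΦ a) i

lemma contDiff_advE {u : EE d → EuclideanSpace ℝ (Fin d)} {Φ : EE d → ℝ}
    (hu : ContDiff ℝ ((⊤:ℕ∞) : WithTop ℕ∞) u) (hΦ : ContDiff ℝ ((⊤:ℕ∞) : WithTop ℕ∞) Φ) :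
    ContDiff ℝ ((⊤:ℕ∞) : WithTop ℕ∞) (advE d u Φ) := by
  have he : advE d u Φ = fun p =>
      fderiv ℝ Φ p (1, 0) + ∑ j : Fin d, u p j * pderivE d j Φ p := by
    funext p
    simp only [advE, derivT_eq ((hΦ.differentiable one_le_inftyS) p)]
  rw [he]
  have h1 : ContDiff ℝ ((⊤:ℕ∞) : WithTop ℕ∞) (fun p : EE d => fderiv ℝ Φ p (1, 0)) :=
    (contDiff_infty_iff_fderiv.mp hΦ).2.clm_apply contDiff_const
  refine h1.add (ContDiff.sum fun j _ => ?_)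
  have hj : ContDiff ℝ ((⊤:ℕ∞) : WithTop ℕ∞) (fun p : EE d => u p j) := by
    have := ((EuclideanSpace.proj (𝕜 := ℝ) j).contDiff).comp hu
    exact this
  exact hj.mul (contDiff_pderivE hΦ j)

lemma contDiff_advE_iter {u : EE d → EuclideanSpace ℝ (Fin d)} {Φ : EE d → ℝ}
    (hu : ContDiff ℝ ((⊤:ℕ∞) : WithTop ℕ∞) u) (hΦ : ContDiff ℝ ((⊤:ℕ∞) : WithTop ℕ∞) Φ) :
    ∀ s : ℕ, ContDiff ℝ ((⊤:ℕ∞) : WithTop ℕ∞) ((advE d u)^[s] Φ)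
  | 0 => hΦ
  | s + 1 => by
    rw [Function.iterate_succ_apply']
    exact contDiff_advE hu (contDiff_advE_iter hu hΦ s)


lemma clm_expand (L : (Fin n → ℝ) →L[ℝ] ℝ) (w : Fin n → ℝ) :
    L w = ∑ j, w j * L (Pi.single j 1) := by
  have hw : (∑ j, w j • (Pi.single j (1:ℝ) : Fin n → ℝ)) = w := by
    ext j0
    simp [Finset.sum_apply, Pi.single_apply]
  conv_lhs => rw [← hw]
  rw [map_sum]
  simp [smul_eq_mul]

lemma pderivE_mul {Φ Ψ : EE d → ℝ} (hΦ : ContDiff ℝ ((⊤:ℕ∞) : WithTop ℕ∞) Φ)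
    (hΨ : ContDiff ℝ ((⊤:ℕ∞) : WithTop ℕ∞) Ψ) (i : Fin d) (p : EE d) :
    pderivE d i (fun q => Φ q * Ψ q) p = pderivE d i Φ p * Ψ p + Φ p * pderivE d i Ψ p := by
  have hΦ' : DifferentiableAt ℝ (fun x => Φ (p.1, x)) p.2 :=
    (hasFDerivAt_sliceX ((hΦ.differentiable one_le_inftyS) p)).differentiableAt
  have hΨ' : DifferentiableAt ℝ (fun x => Ψ (p.1, x)) p.2 :=
    (hasFDerivAt_sliceX ((hΨ.differentiable one_le_inftyS) p)).differentiableAt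
  have : (fun x => (fun q => Φ q * Ψ q) (p.1, x)) = fun x => Φ (p.1, x) * Ψ (p.1, x) := rfl
  simp only [pderivE, this, fderiv_fun_mul hΦ' hΨ', ContinuousLinearMap.add_apply,
    ContinuousLinearMap.smul_apply, smul_eq_mul]
  ring

lemma pderivE_add {Φ Ψ : EE d → ℝ} (hΦ : ContDiff ℝ ((⊤:ℕ∞) : WithTop ℕ∞) Φ)
    (hΨ : ContDiff ℝ ((⊤:ℕ∞) : WithTop ℕ∞) Ψ) (i : Fin d) (p : EE d) :
    pderivE d i (fun q => Φ q + Ψ q) p = pderivE d i Φ p + pderivE d i Ψ p := by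
  have hΦ' : DifferentiableAt ℝ (fun x => Φ (p.1, x)) p.2 :=
    (hasFDerivAt_sliceX ((hΦ.differentiable one_le_inftyS) p)).differentiableAt
  have hΨ' : DifferentiableAt ℝ (fun x => Ψ (p.1, x)) p.2 :=
    (hasFDerivAt_sliceX ((hΨ.differentiable one_le_inftyS) p)).differentiableAt
  have : (fun x => (fun q => Φ q + Ψ q) (p.1, x)) = fun x => Φ (p.1, x) + Ψ (p.1, x) := rfl
  simp only [pderivE, this, fderiv_fun_add hΦ' hΨ', ContinuousLinearMap.add_apply]

lemma smooth_funSum : ∀ (l : List (EE d → ℝ)),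
    (∀ Φ ∈ l, ContDiff ℝ ((⊤:ℕ∞) : WithTop ℕ∞) Φ) →
    ContDiff ℝ ((⊤:ℕ∞) : WithTop ℕ∞) (fun q => (l.map (· q)).sum)
  | [], _ => by simpa using contDiff_const
  | Φ :: l, h => by
    have h1 : ContDiff ℝ ((⊤:ℕ∞) : WithTop ℕ∞) (fun q => (l.map (· q)).sum) :=
      smooth_funSum l fun Ψ hΨ => h Ψ (List.mem_cons_of_mem _ hΨ)
    have : (fun q => ((Φ :: l).map (· q)).sum) = fun q => Φ q + (l.map (· q)).sum := rfl
    rw [this]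
    exact (h Φ (List.mem_cons_self)).add h1

lemma smooth_funProd : ∀ (l : List (EE d → ℝ)),
    (∀ Φ ∈ l, ContDiff ℝ ((⊤:ℕ∞) : WithTop ℕ∞) Φ) →
    ContDiff ℝ ((⊤:ℕ∞) : WithTop ℕ∞) (fun q => (l.map (· q)).prod)
  | [], _ => by simpa using contDiff_const
  | Φ :: l, h => by
    have h1 : ContDiff ℝ ((⊤:ℕ∞) : WithTop ℕ∞) (fun q => (l.map (· q)).prod) :=
      smooth_funProd l fun Ψ hΨ => h Ψ (List.mem_cons_of_mem _ hΨ)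
    have : (fun q => ((Φ :: l).map (· q)).prod) = fun q => Φ q * (l.map (· q)).prod := rfl
    rw [this]
    exact (h Φ (List.mem_cons_self)).mul h1

lemma pderivE_funSum (i : Fin d) : ∀ (l : List (EE d → ℝ)),
    (∀ Φ ∈ l, ContDiff ℝ ((⊤:ℕ∞) : WithTop ℕ∞) Φ) → ∀ p : EE d,
    pderivE d i (fun q => (l.map (· q)).sum) p = (l.map (fun Φ => pderivE d i Φ p)).sum
  | [], _, p => by
    have : (fun q : EE d => (([] : List (EE d → ℝ)).map (· q)).sum) = fun _ => (0:ℝ) := rfl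
    simp [this, pderivE]
  | Φ :: l, h, p => by
    have h1 : ContDiff ℝ ((⊤:ℕ∞) : WithTop ℕ∞) (fun q => (l.map (· q)).sum) :=
      smooth_funSum l fun Ψ hΨ => h Ψ (List.mem_cons_of_mem _ hΨ)
    have he : (fun q => ((Φ :: l).map (· q)).sum) = fun q => Φ q + (l.map (· q)).sum := rfl
    rw [he, pderivE_add (h Φ (List.mem_cons_self)) h1,
      pderivE_funSum i l (fun Ψ hΨ => h Ψ (List.mem_cons_of_mem _ hΨ)) p]
    rfl


section Chain

variable {F : Fin n → (EE d → ℝ)} {u : EE d → EuclideanSpace ℝ (Fin d)}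

lemma pderivE_comp (hF : ∀ j, ContDiff ℝ ((⊤:ℕ∞) : WithTop ℕ∞) (F j))
    {h : (Fin n → ℝ) → ℝ} {p : EE d} (hh : DifferentiableAt ℝ h (fun j => F j p)) (i : Fin d) :
    pderivE d i (fun q => h (fun j => F j q)) p
      = ∑ j, fderiv ℝ h (fun j => F j p) (Pi.single j 1) * pderivE d i (F j) p := by
  have hgj : ∀ j, HasFDerivAt (fun x => F j (p.1, x))
      ((fderiv ℝ (F j) p).comp (ContinuousLinearMap.inr ℝ ℝ (EuclideanSpace ℝ (Fin d)))) p.2 :=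
    fun j => hasFDerivAt_sliceX (((hF j).differentiable one_le_inftyS) p)
  have hg : HasFDerivAt (fun x => (fun j => F j (p.1, x)))
      (ContinuousLinearMap.pi fun j =>
        (fderiv ℝ (F j) p).comp (ContinuousLinearMap.inr ℝ ℝ (EuclideanSpace ℝ (Fin d)))) p.2 :=
    hasFDerivAt_pi.mpr hgj
  have hhy : HasFDerivAt h (fderiv ℝ h (fun j => F j p))
      ((fun x => (fun j => F j (p.1, x))) p.2) := by
    simpa using hh.hasFDerivAt
  have hcomp := hhy.comp p.2 hg
  have h1 : pderivE d i (fun q => h (fun j => F j q)) p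
      = fderiv ℝ h (fun j => F j p)
          ((ContinuousLinearMap.pi fun j =>
            (fderiv ℝ (F j) p).comp (ContinuousLinearMap.inr ℝ ℝ (EuclideanSpace ℝ (Fin d))))
            (EuclideanSpace.single i 1)) := by
    have he : (fun x => (fun q => h (fun j => F j q)) (p.1, x))
        = h ∘ (fun x => (fun j => F j (p.1, x))) := rfl
    simp only [pderivE, he, hcomp.fderiv]
    rfl
  rw [h1, clm_expand]
  refine Finset.sum_congr rfl fun j _ => ?_
  rw [pderivE_eq (((hF j).differentiable one_le_inftyS) p) i]
  simp [mul_comm]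

lemma advE_comp (hu : ContDiff ℝ ((⊤:ℕ∞) : WithTop ℕ∞) u)
    (hF : ∀ j, ContDiff ℝ ((⊤:ℕ∞) : WithTop ℕ∞) (F j))
    {h : (Fin n → ℝ) → ℝ} {p : EE d}
    (hh : DifferentiableAt ℝ h (fun j => F j p))
    (hsm : ContDiff ℝ ((⊤:ℕ∞) : WithTop ℕ∞) (fun q => h (fun j => F j q))) :
    advE d u (fun q => h (fun j => F j q)) p
      = ∑ j, fderiv ℝ h (fun j => F j p) (Pi.single j 1) * advE d u (F j) p := by
  classical
  set y : Fin n → ℝ := fun j => F j p with hy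
  set L : (Fin n → ℝ) →L[ℝ] ℝ := fderiv ℝ h y with hL
  -- time derivative part
  have hgt : HasDerivAt (fun t => (fun j => F j (t, p.2)))
      (fun j => fderiv ℝ (F j) p (1, 0)) p.1 :=
    hasDerivAt_pi.mpr fun j => hasDerivAt_sliceT (((hF j).differentiable one_le_inftyS) p)
  have hhy : HasFDerivAt h L ((fun t => (fun j => F j (t, p.2))) p.1) := by
    simpa [hy] using hh.hasFDerivAt
  have hdt : deriv (fun t => (fun q => h (fun j => F j q)) (t, p.2)) p.1
      = L (fun j => fderiv ℝ (F j) p (1, 0)) := by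
    have := (hhy.comp_hasDerivAt p.1 hgt).deriv
    exact this
  have hpd : ∀ k : Fin d, pderivE d k (fun q => h (fun j => F j q)) p
      = ∑ j, L (Pi.single j 1) * pderivE d k (F j) p := fun k => pderivE_comp hF hh k
  simp only [advE, hdt, hpd]
  rw [clm_expand]
  have hderiv : ∀ j : Fin n, deriv (fun t => F j (t, p.2)) p.1 = fderiv ℝ (F j) p (1, 0) :=
    fun j => derivT_eq (((hF j).differentiable one_le_inftyS) p)
  simp only [hderiv, mul_add, Finset.mul_sum, Finset.sum_add_distrib]
  congr 1
  · exact Finset.sum_congr rfl fun j _ => mul_comm _ _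
  · rw [Finset.sum_comm]
    refine Finset.sum_congr rfl fun k _ => ?_
    refine Finset.sum_congr rfl fun j _ => ?_
    ring

end Chain


noncomputable def Gd (n : ℕ) (G : (Fin n → ℝ) → ℝ) : List (Fin n) → ((Fin n → ℝ) → ℝ)
  | [] => G
  | j :: β => fun y => fderiv ℝ (Gd n G β) y (Pi.single j 1)

section GdProps

variable {G : (Fin n → ℝ) → ℝ} {U : Set (Fin n → ℝ)}

lemma contDiffOn_Gd (hU : IsOpen U) (hG : ContDiffOn ℝ ((⊤:ℕ∞) : WithTop ℕ∞) G U) :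
    ∀ β : List (Fin n), ContDiffOn ℝ ((⊤:ℕ∞) : WithTop ℕ∞) (Gd n G β) U
  | [] => hG
  | j :: β => by
    have IH := contDiffOn_Gd hU hG β
    have h1 : ContDiffOn ℝ ((⊤:ℕ∞) : WithTop ℕ∞) (fderiv ℝ (Gd n G β)) U :=
      IH.fderiv_of_isOpen hU (by exact_mod_cast le_top)
    exact h1.clm_apply contDiffOn_const

lemma differentiableAt_Gd (hU : IsOpen U) (hG : ContDiffOn ℝ ((⊤:ℕ∞) : WithTop ℕ∞) G U)
    (β : List (Fin n)) {y : Fin n → ℝ} (hy : y ∈ U) : DifferentiableAt ℝ (Gd n G β) y := by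
  have := (contDiffOn_Gd hU hG β).contDiffAt (hU.mem_nhds hy)
  exact this.differentiableAt one_le_inftyS

end GdProps

/-- A factor: index of the component of `F`, spatial multi-index, advective order. -/
abbrev Fac (d n : ℕ) := Fin n × List (Fin d) × ℕ

/-- A term: derivative multi-index for `G` and a list of factors. -/
abbrev Tm (d n : ℕ) := List (Fin n) × List (Fac d n)

noncomputable def fval (u : EE d → EuclideanSpace ℝ (Fin d)) (F : Fin n → (EE d → ℝ))
    (f : Fac d n) : EE d → ℝ := nablaE d f.2.1 ((advE d u)^[f.2.2] (F f.1))

noncomputable def tval (G : (Fin n → ℝ) → ℝ) (u : EE d → EuclideanSpace ℝ (Fin d))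
    (F : Fin n → (EE d → ℝ)) (T : Tm d n) : EE d → ℝ :=
  fun p => Gd n G T.1 (fun j => F j p) * (T.2.map (fun f => fval u F f p)).prod

def bsum (l : List (Fac d n)) : ℕ := (l.map fun f => f.2.1.length).sum
def ssum (l : List (Fac d n)) : ℕ := (l.map fun f => f.2.2).sum
def wfl (l : List (Fac d n)) : Prop := ∀ f ∈ l, f.2.2 ≤ 1 ∧ 1 ≤ f.2.1.length + f.2.2

@[simp] lemma bsum_nil : bsum ([] : List (Fac d n)) = 0 := rfl
@[simp] lemma ssum_nil : ssum ([] : List (Fac d n)) = 0 := rfl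
@[simp] lemma bsum_cons (f : Fac d n) (l) : bsum (f :: l) = f.2.1.length + bsum l := rfl
@[simp] lemma ssum_cons (f : Fac d n) (l) : ssum (f :: l) = f.2.2 + ssum l := rfl

lemma wfl_length_le : ∀ {l : List (Fac d n)}, wfl l → l.length ≤ bsum l + ssum l
  | [], _ => by simp
  | f :: l, h => by
    have h1 := h f (List.mem_cons_self)
    have h2 := wfl_length_le (fun g hg => h g (List.mem_cons_of_mem _ hg))
    simp only [List.length_cons, bsum_cons, ssum_cons]
    omega

section Terms

variable {u : EE d → EuclideanSpace ℝ (Fin d)} {F : Fin n → (EE d → ℝ)}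
  {G : (Fin n → ℝ) → ℝ} {U : Set (Fin n → ℝ)}

lemma smooth_fval (hu : ContDiff ℝ ((⊤:ℕ∞) : WithTop ℕ∞) u)
    (hF : ∀ i, ContDiff ℝ ((⊤:ℕ∞) : WithTop ℕ∞) (F i)) (f : Fac d n) :
    ContDiff ℝ ((⊤:ℕ∞) : WithTop ℕ∞) (fval u F f) :=
  contDiff_nablaE (contDiff_advE_iter hu (hF f.1) f.2.2) f.2.1

lemma smooth_compGd (hU : IsOpen U) (hG : ContDiffOn ℝ ((⊤:ℕ∞) : WithTop ℕ∞) G U)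
    (hF : ∀ i, ContDiff ℝ ((⊤:ℕ∞) : WithTop ℕ∞) (F i)) (hFU : ∀ p : EE d, (fun i => F i p) ∈ U)
    (β : List (Fin n)) :
    ContDiff ℝ ((⊤:ℕ∞) : WithTop ℕ∞) (fun p : EE d => Gd n G β (fun j => F j p)) := by
  rw [contDiff_iff_contDiffAt]
  intro p
  have h1 : ContDiffAt ℝ ((⊤:ℕ∞) : WithTop ℕ∞) (Gd n G β) (fun j => F j p) :=
    (contDiffOn_Gd hU hG β).contDiffAt (hU.mem_nhds (hFU p))
  have h2 : ContDiffAt ℝ ((⊤:ℕ∞) : WithTop ℕ∞) (fun p : EE d => fun j => F j p) p :=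
    (contDiff_pi.mpr hF).contDiffAt
  exact h1.comp p h2

lemma smooth_tval (hU : IsOpen U) (hG : ContDiffOn ℝ ((⊤:ℕ∞) : WithTop ℕ∞) G U)
    (hu : ContDiff ℝ ((⊤:ℕ∞) : WithTop ℕ∞) u)
    (hF : ∀ i, ContDiff ℝ ((⊤:ℕ∞) : WithTop ℕ∞) (F i)) (hFU : ∀ p : EE d, (fun i => F i p) ∈ U)
    (T : Tm d n) : ContDiff ℝ ((⊤:ℕ∞) : WithTop ℕ∞) (tval G u F T) := by
  have h2 : ContDiff ℝ ((⊤:ℕ∞) : WithTop ℕ∞) (fun p => ((T.2.map (fun f => fval u F f)).map (· p)).prod) := by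
    refine smooth_funProd _ fun Φ hΦ => ?_
    obtain ⟨f, _, rfl⟩ := List.mem_map.mp hΦ
    exact smooth_fval hu hF f
  have he : tval G u F T
      = fun p => Gd n G T.1 (fun j => F j p) * ((T.2.map (fun f => fval u F f)).map (· p)).prod := by
    funext p
    simp only [tval, List.map_map]
    rfl
  rw [he]
  exact (smooth_compGd hU hG hF hFU T.1).mul h2

lemma tval_cons (f : Fac d n) (β : List (Fin n)) (l : List (Fac d n)) (q : EE d) :
    tval G u F (β, f :: l) q = fval u F f q * tval G u F (β, l) q := by
  simp only [tval, List.map_cons, List.prod_cons]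
  ring

end Terms


def stepRel (T T' : Tm d n) : Prop :=
  T'.1.length + T.2.length = T.1.length + T'.2.length ∧
  (wfl T.2 → wfl T'.2) ∧ ssum T'.2 = ssum T.2 ∧ bsum T'.2 = bsum T.2 + 1 ∧
  T'.2.length ≤ T.2.length + 1

def expRel (k : ℕ) (T T' : Tm d n) : Prop :=
  T'.1.length + T.2.length = T.1.length + T'.2.length ∧
  (wfl T.2 → wfl T'.2) ∧ ssum T'.2 = ssum T.2 ∧ bsum T'.2 = bsum T.2 + k ∧
  T'.2.length ≤ T.2.length + k

lemma expRel_refl (T : Tm d n) : expRel 0 T T := ⟨rfl, fun h => h, rfl, rfl, by omega⟩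

lemma expRel_step {k : ℕ} {T T' T'' : Tm d n} (h1 : expRel k T T') (h2 : stepRel T' T'') :
    expRel (k + 1) T T'' := by
  obtain ⟨a1, b1, c1, d1, e1⟩ := h1
  obtain ⟨a2, b2, c2, d2, e2⟩ := h2
  exact ⟨by omega, fun h => b2 (b1 h), by omega, by omega, by omega⟩

section Step

variable {u : EE d → EuclideanSpace ℝ (Fin d)} {F : Fin n → (EE d → ℝ)}
  {G : (Fin n → ℝ) → ℝ} {U : Set (Fin n → ℝ)}
variable (hU : IsOpen U) (hG : ContDiffOn ℝ ((⊤:ℕ∞) : WithTop ℕ∞) G U)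
  (hu : ContDiff ℝ ((⊤:ℕ∞) : WithTop ℕ∞) u)
  (hF : ∀ i, ContDiff ℝ ((⊤:ℕ∞) : WithTop ℕ∞) (F i))
  (hFU : ∀ p : EE d, (fun i => F i p) ∈ U)

include hU hG hu hF hFU

lemma fval_bump (i : Fin d) (f : Fac d n) :
    fval u F (f.1, i :: f.2.1, f.2.2) = pderivE d i (fval u F f) := rfl

lemma step (i : Fin d) : ∀ (fs : List (Fac d n)) (β : List (Fin n)),
    ∃ Ts : List (Tm d n),
      (∀ p, pderivE d i (tval G u F (β, fs)) p = (Ts.map (fun T' => tval G u F T' p)).sum) ∧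
      Ts.length = n + fs.length ∧ (∀ T' ∈ Ts, stepRel (β, fs) T')
  | [], β => by
    refine ⟨List.ofFn (fun j : Fin n => (j :: β, [(j, [i], 0)])), ?_, by simp, ?_⟩
    · intro p
      have he : tval G u F (β, ([] : List (Fac d n))) = fun q => Gd n G β (fun j => F j q) := by
        funext q; simp [tval]
      rw [he, pderivE_comp hF (differentiableAt_Gd hU hG β (hFU p)) i]
      rw [List.map_ofFn, List.sum_ofFn]
      refine Finset.sum_congr rfl fun j _ => ?_
      have h1 : tval G u F (j :: β, [(j, [i], 0)]) p
          = Gd n G (j :: β) (fun k => F k p) * pderivE d i (F j) p := by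
        simp [tval, fval, nablaE]
      have h2 : fderiv ℝ (Gd n G β) (fun k => F k p) (Pi.single j 1)
          = Gd n G (j :: β) (fun k => F k p) := rfl
      rw [h2] at *
      simp only [Function.comp]
      rw [h1]
    · intro T' hT'
      rw [List.mem_ofFn] at hT'
      obtain ⟨j, rfl⟩ := hT'
      refine ⟨by simp, fun _ => ?_, by simp [ssum], by simp [bsum], by simp⟩
      intro f hf
      simp only [List.mem_singleton] at hf
      subst hf
      simp
  | f :: rest, β => by
    obtain ⟨Ts₀, hpt, hlen, hrel⟩ := step i rest β
    refine ⟨(β, (f.1, i :: f.2.1, f.2.2) :: rest) :: Ts₀.map (fun T' => (T'.1, f :: T'.2)),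
      ?_, ?_, ?_⟩
    · intro p
      have hfun : tval G u F (β, f :: rest) = fun q => fval u F f q * tval G u F (β, rest) q :=
        funext fun q => tval_cons f β rest q
      rw [hfun, pderivE_mul (smooth_fval hu hF f) (smooth_tval hU hG hu hF hFU (β, rest)) i p]
      have h1 : pderivE d i (fval u F f) p * tval G u F (β, rest) p
          = tval G u F (β, (f.1, i :: f.2.1, f.2.2) :: rest) p := by
        rw [tval_cons, fval_bump hU hG hu hF hFU]
      have h2 : fval u F f p * pderivE d i (tval G u F (β, rest)) p
          = ((Ts₀.map (fun T' => (T'.1, f :: T'.2))).map (fun T' => tval G u F T' p)).sum := by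
        rw [hpt p, List.map_map, ← List.sum_map_mul_left]
        refine congrArg List.sum ?_
        refine List.map_congr_left fun T' _ => ?_
        simp only [Function.comp]
        rw [tval_cons]
      rw [List.map_cons, List.sum_cons, h1, h2]
    · simp [hlen]; omega
    · intro T' hT'
      rcases List.mem_cons.mp hT' with h | h
      · subst h
        refine ⟨by simp, fun hwf => ?_, by simp [ssum], by simp [bsum]; omega, by simp⟩
        intro g hg
        rcases List.mem_cons.mp hg with h | h
        · subst h
          have := hwf f (List.mem_cons_self)
          simp only [List.length_cons]
          omega
        · exact hwf g (List.mem_cons_of_mem _ h)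
      · obtain ⟨T₀, hT₀, rfl⟩ := List.mem_map.mp h
        obtain ⟨a1, b1, c1, d1, e1⟩ := hrel T₀ hT₀
        refine ⟨by simp at a1 ⊢; omega, fun hwf => ?_, by simp [ssum] at c1 ⊢; omega,
          by simp [bsum] at d1 ⊢; omega, by simp at e1 ⊢; omega⟩
        have hwf' : wfl rest := fun g hg => hwf g (List.mem_cons_of_mem _ hg)
        intro g hg
        rcases List.mem_cons.mp hg with h | h
        · subst h; exact hwf g (List.mem_cons_self)
        · exact b1 hwf' g h


lemma stepList (i : Fin d) : ∀ (Ts : List (Tm d n)),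
    ∃ Ts' : List (Tm d n),
      (∀ p, (Ts.map (fun T' => pderivE d i (tval G u F T') p)).sum
          = (Ts'.map (fun T'' => tval G u F T'' p)).sum) ∧
      (∀ T'' ∈ Ts', ∃ T' ∈ Ts, stepRel T' T'') ∧
      ∀ K, (∀ T' ∈ Ts, T'.2.length ≤ K) → Ts'.length ≤ Ts.length * (n + K)
  | [] => ⟨[], by simp, by simp, by simp⟩
  | T :: Ts => by
    obtain ⟨TsT, hptT, hlenT, hrelT⟩ := step hU hG hu hF hFU i T.2 T.1
    obtain ⟨Ts', hpt, hrel, hlen⟩ := stepList i Ts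
    refine ⟨TsT ++ Ts', ?_, ?_, ?_⟩
    · intro p
      rw [List.map_cons, List.sum_cons, List.map_append, List.sum_append, hpt p, ← hptT p]
    · intro T'' hT''
      rcases List.mem_append.mp hT'' with h | h
      · exact ⟨T, List.mem_cons_self, by simpa using hrelT T'' h⟩
      · obtain ⟨T', hT', hr⟩ := hrel T'' h
        exact ⟨T', List.mem_cons_of_mem _ hT', hr⟩
    · intro K hK
      have h1 : T.2.length ≤ K := hK T (List.mem_cons_self)
      have h2 := hlen K fun T' hT' => hK T' (List.mem_cons_of_mem _ hT')
      simp only [List.length_append, List.length_cons, hlenT]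
      rw [Nat.succ_mul]
      omega

lemma expandTerm : ∀ (a : List (Fin d)) (T : Tm d n),
    ∃ Ts : List (Tm d n),
      (∀ p, nablaE d a (tval G u F T) p = (Ts.map (fun T' => tval G u F T' p)).sum) ∧
      (∀ T' ∈ Ts, expRel a.length T T') ∧
      Ts.length ≤ (n + T.2.length + a.length) ^ a.length
  | [], T => by
    refine ⟨[T], fun p => by simp [nablaE], fun T' hT' => ?_, by simp⟩
    rw [List.mem_singleton] at hT'
    subst hT'
    exact expRel_refl T'
  | i :: a, T => by
    obtain ⟨Ts, hpt, hrel, hlen⟩ := expandTerm a T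
    have hfun : nablaE d a (tval G u F T)
        = fun q => ((Ts.map (tval G u F)).map (· q)).sum := by
      funext q
      rw [hpt q, List.map_map]
      rfl
    obtain ⟨Ts', hpt', hrel', hlen'⟩ := stepList hU hG hu hF hFU i Ts
    refine ⟨Ts', ?_, ?_, ?_⟩
    · intro p
      have h1 : nablaE d (i :: a) (tval G u F T) p
          = pderivE d i (nablaE d a (tval G u F T)) p := rfl
      rw [h1, hfun, pderivE_funSum i (Ts.map (tval G u F)) ?hsm p]
      · rw [List.map_map, ← hpt' p]
        rfl
      · intro Φ hΦ
        obtain ⟨T', _, rfl⟩ := List.mem_map.mp hΦ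
        exact smooth_tval hU hG hu hF hFU T'
    · intro T'' hT''
      obtain ⟨T', hT', hr⟩ := hrel' T'' hT''
      have := expRel_step (hrel T' hT') hr
      simpa using this
    · have hK : ∀ T' ∈ Ts, T'.2.length ≤ T.2.length + a.length := fun T' hT' =>
        (hrel T' hT').2.2.2.2
      have h2 := hlen' (T.2.length + a.length) hK
      calc Ts'.length ≤ Ts.length * (n + (T.2.length + a.length)) := h2
        _ ≤ (n + T.2.length + a.length) ^ a.length * (n + T.2.length + a.length) := by
            refine Nat.mul_le_mul hlen ?_
            omega
        _ = (n + T.2.length + a.length) ^ (a.length + 1) := by rw [pow_succ]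
        _ ≤ (n + T.2.length + (i :: a).length) ^ (i :: a).length := by
            refine Nat.pow_le_pow_left ?_ _
            simp

lemma expandList (a : List (Fin d)) : ∀ (Ts₀ : List (Tm d n)),
    ∃ Ts : List (Tm d n),
      (∀ p, (Ts₀.map (fun T => nablaE d a (tval G u F T) p)).sum
          = (Ts.map (fun T' => tval G u F T' p)).sum) ∧
      (∀ T' ∈ Ts, ∃ T ∈ Ts₀, expRel a.length T T') ∧
      ∀ K, (∀ T ∈ Ts₀, T.2.length ≤ K) → Ts.length ≤ Ts₀.length * (n + K + a.length) ^ a.length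
  | [] => ⟨[], by simp, by simp, by simp⟩
  | T :: Ts₀ => by
    obtain ⟨TsT, hptT, hrelT, hlenT⟩ := expandTerm hU hG hu hF hFU a T
    obtain ⟨Ts, hpt, hrel, hlen⟩ := expandList a Ts₀
    refine ⟨TsT ++ Ts, ?_, ?_, ?_⟩
    · intro p
      rw [List.map_cons, List.sum_cons, List.map_append, List.sum_append, hpt p, ← hptT p]
    · intro T' hT'
      rcases List.mem_append.mp hT' with h | h
      · exact ⟨T, List.mem_cons_self, hrelT T' h⟩
      · obtain ⟨T₀, hT₀, hr⟩ := hrel T' h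
        exact ⟨T₀, List.mem_cons_of_mem _ hT₀, hr⟩
    · intro K hK
      have h1 : T.2.length ≤ K := hK T (List.mem_cons_self)
      have h2 := hlen K fun T' hT' => hK T' (List.mem_cons_of_mem _ hT')
      have h3 : TsT.length ≤ (n + K + a.length) ^ a.length := by
        refine le_trans hlenT (Nat.pow_le_pow_left (by omega) _)
      simp only [List.length_append, List.length_cons]
      rw [Nat.succ_mul]
      omega

end Step

section Numeric

lemma list_abs_sum : ∀ l : List ℝ, |l.sum| ≤ (l.map abs).sum
  | [] => by simp
  | x :: l => by
    simp only [List.sum_cons, List.map_cons]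
    exact le_trans (abs_add_le _ _) (by gcongr; exact list_abs_sum l)

lemma list_abs_prod : ∀ l : List ℝ, |l.prod| = (l.map abs).prod
  | [] => by simp
  | x :: l => by
    simp only [List.prod_cons, List.map_cons, abs_mul, list_abs_prod l]

lemma list_prod_le_prod {α : Type*} {f g : α → ℝ} : ∀ {l : List α},
    (∀ x ∈ l, 0 ≤ f x) → (∀ x ∈ l, f x ≤ g x) → (l.map f).prod ≤ (l.map g).prod
  | [], _, _ => le_rfl
  | x :: l, h0, h => by
    simp only [List.map_cons, List.prod_cons]
    have hf0 : 0 ≤ (l.map f).prod :=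
      List.prod_nonneg fun y hy => by
        obtain ⟨z, hz, rfl⟩ := List.mem_map.mp hy
        exact h0 z (List.mem_cons_of_mem _ hz)
    refine mul_le_mul (h x (List.mem_cons_self))
      (list_prod_le_prod (fun y hy => h0 y (List.mem_cons_of_mem _ hy))
        (fun y hy => h y (List.mem_cons_of_mem _ hy))) hf0
      (le_trans (h0 x (List.mem_cons_self)) (h x (List.mem_cons_self)))

lemma pow_listSum (x : ℝ) : ∀ l : List ℕ, x ^ l.sum = (l.map (x ^ ·)).prod
  | [] => by simp
  | k :: l => by simp [pow_add, pow_listSum x l]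

lemma rpow_listSum {x : ℝ} (hx : 0 < x) : ∀ l : List ℝ, x ^ l.sum = (l.map (x ^ ·)).prod
  | [] => by simp
  | c :: l => by
    simp only [List.sum_cons, List.map_cons, List.prod_cons, Real.rpow_add hx,
      rpow_listSum hx l]

lemma max_aux {x y c : ℝ} (hx : 0 ≤ x) (hy : 0 ≤ y) (hc : 0 ≤ c) :
    max (x - c) 0 + max (y - c) 0 ≤ max (x + y - c) 0 := by
  rcases le_total x c with h | h
  · rw [max_eq_right (by linarith : x - c ≤ 0), zero_add]
    exact max_le_max (by linarith) le_rfl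
  · rw [max_eq_left (by linarith : (0:ℝ) ≤ x - c)]
    have h2 : max (y - c) 0 ≤ y := max_le (by linarith) hy
    refine le_trans (by linarith) (le_max_left (x + y - c) 0)

lemma maxsum {c : ℝ} (hc : 0 ≤ c) : ∀ {l : List ℝ}, (∀ w ∈ l, 0 ≤ w) →
    (l.map (fun w => max (w - c) 0)).sum ≤ max (l.sum - c) 0
  | [], _ => by simp
  | w :: l, h => by
    simp only [List.map_cons, List.sum_cons]
    have h1 : (l.map (fun w => max (w - c) 0)).sum ≤ max (l.sum - c) 0 :=
      maxsum hc (fun v hv => h v (List.mem_cons_of_mem _ hv))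
    have h2 : 0 ≤ l.sum := List.sum_nonneg fun v hv => h v (List.mem_cons_of_mem _ hv)
    calc max (w - c) 0 + (l.map (fun w => max (w - c) 0)).sum
        ≤ max (w - c) 0 + max (l.sum - c) 0 := by linarith
      _ ≤ max (w + l.sum - c) 0 := max_aux (h w (List.mem_cons_self)) h2 hc
      _ = max ((w :: l).sum - c) 0 := by simp

lemma cast_wsum : ∀ l : List (Fac d n),
    (l.map (fun f => ((f.2.1.length : ℝ) + (f.2.2 : ℝ)))).sum = (bsum l : ℝ) + (ssum l : ℝ)
  | [] => by simp
  | f :: l => by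
    simp only [List.map_cons, List.sum_cons, bsum_cons, ssum_cons, cast_wsum l]
    push_cast
    ring

end Numeric

section Bound

variable {u : EE d → EuclideanSpace ℝ (Fin d)} {F : Fin n → (EE d → ℝ)}
  {G : (Fin n → ℝ) → ℝ}

lemma term_bound (L' Lb : ℕ) (Nh Ξ ζ H M : ℝ) (hNh : 1 ≤ Nh) (hΞ : 1 ≤ Ξ) (hζ : 0 < ζ)
    (hH : 0 ≤ H) (hM : 0 ≤ M)
    (hGb : ∀ β : List (Fin n), β.length ≤ L' → ∀ p : EE d, |Gd n G β (fun j => F j p)| ≤ M)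
    (hFb : ∀ f : Fac d n, f.2.2 ≤ 1 → f.2.1.length + f.2.2 ≤ L' → ∀ p : EE d,
      |fval u F f p| ≤
        Nh ^ (max ((f.2.1.length : ℝ) + (f.2.2 : ℝ) - (Lb : ℝ)) 0) * Ξ ^ f.2.1.length
          * ζ ^ f.2.2 * H)
    (T : Tm d n) (hwf : wfl T.2) (hβ : T.1.length ≤ L') (htot : bsum T.2 + ssum T.2 ≤ L')
    (p : EE d) :
    |tval G u F T p| ≤
      M * (Nh ^ (max ((bsum T.2 : ℝ) + (ssum T.2 : ℝ) - (Lb : ℝ)) 0) * Ξ ^ (bsum T.2)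
        * ζ ^ (ssum T.2) * (1 + H) ^ L') := by
  have hNh0 : (0:ℝ) < Nh := by linarith
  set l := T.2 with hl
  -- per factor bound applies
  have hfac : ∀ f ∈ l, f.2.2 ≤ 1 ∧ f.2.1.length + f.2.2 ≤ L' := by
    intro f hf
    refine ⟨(hwf f hf).1, ?_⟩
    have hb : f.2.1.length ≤ bsum l := by
      refine List.single_le_sum (fun x _ => Nat.zero_le x) _ ?_
      exact List.mem_map.mpr ⟨f, hf, rfl⟩
    have hs : f.2.2 ≤ ssum l := by
      refine List.single_le_sum (fun x _ => Nat.zero_le x) _ ?_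
      exact List.mem_map.mpr ⟨f, hf, rfl⟩
    omega
  -- step 1 : pull out M
  have h1 : |tval G u F T p| ≤ M * (l.map (fun f => |fval u F f p|)).prod := by
    have he : |tval G u F T p|
        = |Gd n G T.1 (fun j => F j p)| * (l.map (fun f => |fval u F f p|)).prod := by
      simp only [tval, abs_mul]
      rw [list_abs_prod, List.map_map]
      rfl
    rw [he]
    refine mul_le_mul_of_nonneg_right (hGb T.1 hβ p) ?_
    exact List.prod_nonneg fun y hy => by
      obtain ⟨f, _, rfl⟩ := List.mem_map.mp hy
      exact abs_nonneg _
  -- step 2 : bound each factor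
  set bnd : Fac d n → ℝ := fun f =>
    Nh ^ (max ((f.2.1.length : ℝ) + (f.2.2 : ℝ) - (Lb : ℝ)) 0) * Ξ ^ f.2.1.length
      * ζ ^ f.2.2 * H with hbnd
  have h2 : (l.map (fun f => |fval u F f p|)).prod ≤ (l.map bnd).prod := by
    refine list_prod_le_prod (fun f _ => abs_nonneg _) (fun f hf => ?_)
    exact hFb f (hfac f hf).1 (hfac f hf).2 p
  -- step 3 : compute the product of the bounds
  have h3 : (l.map bnd).prod ≤
      Nh ^ (max ((bsum l : ℝ) + (ssum l : ℝ) - (Lb : ℝ)) 0) * Ξ ^ (bsum l)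
        * ζ ^ (ssum l) * (1 + H) ^ L' := by
    have hsplit : (l.map bnd).prod
        = (l.map (fun f => Nh ^ (max ((f.2.1.length : ℝ) + (f.2.2 : ℝ) - (Lb : ℝ)) 0))).prod
          * (l.map (fun f => Ξ ^ f.2.1.length)).prod
          * (l.map (fun f => ζ ^ f.2.2)).prod
          * (l.map (fun _ => H)).prod := by
      rw [hbnd, ← List.prod_map_mul, ← List.prod_map_mul, ← List.prod_map_mul]
    have hP1 : (l.map (fun f =>
        Nh ^ (max ((f.2.1.length : ℝ) + (f.2.2 : ℝ) - (Lb : ℝ)) 0))).prod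
        ≤ Nh ^ (max ((bsum l : ℝ) + (ssum l : ℝ) - (Lb : ℝ)) 0) := by
      have he : (l.map (fun f =>
          Nh ^ (max ((f.2.1.length : ℝ) + (f.2.2 : ℝ) - (Lb : ℝ)) 0))).prod
          = Nh ^ ((l.map (fun f => max ((f.2.1.length : ℝ) + (f.2.2 : ℝ) - (Lb : ℝ)) 0)).sum) := by
        rw [rpow_listSum hNh0, List.map_map]
        rfl
      rw [he]
      refine Real.rpow_le_rpow_of_exponent_le hNh ?_
      have hm : (l.map (fun f => max ((f.2.1.length : ℝ) + (f.2.2 : ℝ) - (Lb : ℝ)) 0)).sum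
          = ((l.map (fun f => ((f.2.1.length : ℝ) + (f.2.2 : ℝ)))).map
              (fun w => max (w - (Lb : ℝ)) 0)).sum := by
        rw [List.map_map]; rfl
      rw [hm]
      refine le_trans (maxsum (by positivity) ?_) ?_
      · intro w hw
        obtain ⟨f, _, rfl⟩ := List.mem_map.mp hw
        positivity
      · rw [cast_wsum]
    have hP2 : (l.map (fun f => Ξ ^ f.2.1.length)).prod = Ξ ^ (bsum l) := by
      rw [bsum, pow_listSum, List.map_map]
      rfl
    have hP3 : (l.map (fun f => ζ ^ f.2.2)).prod = ζ ^ (ssum l) := by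
      rw [ssum, pow_listSum, List.map_map]
      rfl
    have hP4 : (l.map (fun _ => H)).prod ≤ (1 + H) ^ L' := by
      have he : (l.map (fun _ => H)).prod = H ^ l.length := by
        induction l with
        | nil => simp
        | cons f l ih => simp [ih, pow_succ]; ring
      rw [he]
      have hlen : l.length ≤ L' := le_trans (wfl_length_le hwf) htot
      calc H ^ l.length ≤ (1 + H) ^ l.length := by
            exact pow_le_pow_left₀ hH (by linarith) _
        _ ≤ (1 + H) ^ L' := by
            exact pow_le_pow_right₀ (by linarith) hlen
    rw [hsplit, hP2, hP3]
    have hA : (0:ℝ) < Nh ^ (max ((bsum l : ℝ) + (ssum l : ℝ) - (Lb : ℝ)) 0) :=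
      Real.rpow_pos_of_pos hNh0 _
    have hΞ0 : (0:ℝ) ≤ Ξ ^ (bsum l) := by positivity
    have hζ0 : (0:ℝ) < ζ ^ (ssum l) := by positivity
    have hP10 : (0:ℝ) ≤ (l.map (fun f =>
        Nh ^ (max ((f.2.1.length : ℝ) + (f.2.2 : ℝ) - (Lb : ℝ)) 0))).prod :=
      List.prod_nonneg fun y hy => by
        obtain ⟨f, _, rfl⟩ := List.mem_map.mp hy
        positivity
    have hP40 : (0:ℝ) ≤ (l.map (fun _ : Fac d n => H)).prod :=
      List.prod_nonneg fun y hy => by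
        obtain ⟨f, _, rfl⟩ := List.mem_map.mp hy
        exact hH
    calc (l.map (fun f => Nh ^ (max ((f.2.1.length : ℝ) + (f.2.2 : ℝ) - (Lb : ℝ)) 0))).prod
          * (Ξ ^ bsum l) * (ζ ^ ssum l) * (l.map (fun _ => H)).prod
        ≤ Nh ^ (max ((bsum l : ℝ) + (ssum l : ℝ) - (Lb : ℝ)) 0)
          * (Ξ ^ bsum l) * (ζ ^ ssum l) * (l.map (fun _ => H)).prod := by
          gcongr
      _ ≤ Nh ^ (max ((bsum l : ℝ) + (ssum l : ℝ) - (Lb : ℝ)) 0)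
          * (Ξ ^ bsum l) * (ζ ^ ssum l) * (1 + H) ^ L' := by
          gcongr
  -- combine
  have h4 : (0:ℝ) ≤ (l.map (fun f => |fval u F f p|)).prod :=
    List.prod_nonneg fun y hy => by
      obtain ⟨f, _, rfl⟩ := List.mem_map.mp hy
      exact abs_nonneg _
  calc |tval G u F T p| ≤ M * (l.map (fun f => |fval u F f p|)).prod := h1
    _ ≤ M * (l.map bnd).prod := by gcongr
    _ ≤ M * (Nh ^ (max ((bsum l : ℝ) + (ssum l : ℝ) - (Lb : ℝ)) 0) * Ξ ^ (bsum l)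
        * ζ ^ (ssum l) * (1 + H) ^ L') := by
        refine mul_le_mul_of_nonneg_left h3 hM


lemma nablaE_funSum : ∀ (a : List (Fin d)) (l : List (EE d → ℝ)),
    (∀ Φ ∈ l, ContDiff ℝ ((⊤:ℕ∞) : WithTop ℕ∞) Φ) → ∀ p : EE d,
    nablaE d a (fun q => (l.map (· q)).sum) p = (l.map (fun Φ => nablaE d a Φ p)).sum
  | [], l, _, p => by simp [nablaE]
  | i :: a, l, h, p => by
    have h1 : nablaE d a (fun q => (l.map (· q)).sum)
        = fun q => ((l.map (nablaE d a)).map (· q)).sum := by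
      funext q
      rw [nablaE_funSum a l h q, List.map_map]
      rfl
    have h2 : nablaE d (i :: a) (fun q => (l.map (· q)).sum)
        = pderivE d i (nablaE d a (fun q => (l.map (· q)).sum)) := rfl
    rw [h2, h1, pderivE_funSum i (l.map (nablaE d a)) ?hsm p, List.map_map]
    · rfl
    · intro Φ hΦ
      obtain ⟨Ψ, hΨ, rfl⟩ := List.mem_map.mp hΦ
      exact contDiff_nablaE (h Ψ hΨ) a

end Bound

end WNCR

open WNCR in
/-- Chain rule for the weighted norms `H_ζ`: if a smooth `ℝⁿ`-valued `F` takes values in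
a compact set `V` and obeys `‖∇_a D_t^r F‖_{C⁰} ≤ N̂^{(|a|+r-L̲)₊} Ξ^{|a|} ζ^r H` for
`r ∈ {0,1}`, `|a|+r ≤ L'`, and `G` is smooth on an open neighborhood of `V`, then
`‖∇_a D_t^r (G∘F)‖_{C⁰} ≤ C N̂^{(|a|+r-L̲)₊} Ξ^{|a|} ζ^r (1+H)^{L'}`, with
`C = C(d, n, L', G, V)`. -/
theorem weighted_norm_chain_rule (d n : ℕ) (hd : 1 ≤ d) (hn : 1 ≤ n)
    (L' : ℕ) (hL' : 1 ≤ L')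
    (V U : Set (Fin n → ℝ)) (hV : IsCompact V) (hU : IsOpen U) (hVU : V ⊆ U)
    (G : (Fin n → ℝ) → ℝ) (hG : ContDiffOn ℝ (⊤ : ℕ∞) G U) :
    ∃ C : ℝ, 0 < C ∧
      ∀ (Lb : ℕ) (Nh Ξ ζ H : ℝ), 1 ≤ Nh → 1 ≤ Ξ → 0 < ζ → 0 ≤ H →
      ∀ u : ℝ × EuclideanSpace ℝ (Fin d) → EuclideanSpace ℝ (Fin d),
        ContDiff ℝ (⊤ : ℕ∞) u →
      ∀ F : Fin n → (ℝ × EuclideanSpace ℝ (Fin d) → ℝ),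
        (∀ i, ContDiff ℝ (⊤ : ℕ∞) (F i)) →
        (∀ p, (fun i => F i p) ∈ V) →
        (∀ (i : Fin n) (r : ℕ) (a : List (Fin d)), r ≤ 1 → a.length + r ≤ L' →
          ∀ (t : ℝ) (x : EuclideanSpace ℝ (Fin d)),
            |nablaE d a ((advE d u)^[r] (F i)) (t, x)| ≤
              Nh ^ (max ((a.length : ℝ) + (r : ℝ) - (Lb : ℝ)) 0) * Ξ ^ a.length * ζ ^ r * H) →
      ∀ (r : ℕ) (a : List (Fin d)), r ≤ 1 → a.length + r ≤ L' →
        ∀ (t : ℝ) (x : EuclideanSpace ℝ (Fin d)),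
          |nablaE d a ((advE d u)^[r] (fun p => G (fun i => F i p))) (t, x)| ≤
            C * Nh ^ (max ((a.length : ℝ) + (r : ℝ) - (Lb : ℝ)) 0) * Ξ ^ a.length * ζ ^ r *
              (1 + H) ^ L' := by
  classical
  have hG' : ContDiffOn ℝ ((⊤:ℕ∞) : WithTop ℕ∞) G U := hG.of_le (by simp)
  -- a uniform bound for the derivatives of G of order ≤ L' on V
  have hfin : {l : List (Fin n) | l.length ≤ L'}.Finite := List.finite_length_le (Fin n) L'
  have hb : ∀ β : List (Fin n), ∃ Mb : ℝ, ∀ y ∈ V, |Gd n G β y| ≤ Mb := by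
    intro β
    obtain ⟨Mb, hMb⟩ := hV.exists_bound_of_continuousOn
      (((contDiffOn_Gd hU hG' β)).continuousOn.mono hVU)
    exact ⟨Mb, fun y hy => by simpa [Real.norm_eq_abs] using hMb y hy⟩
  choose Mb hMb using hb
  set M : ℝ := ((hfin.toFinset.sup fun β => ⌈Mb β⌉₊ : ℕ) : ℝ) with hMdef
  have hM0 : 0 ≤ M := Nat.cast_nonneg _
  have hGbV : ∀ β : List (Fin n), β.length ≤ L' → ∀ y ∈ V, |Gd n G β y| ≤ M := by
    intro β hβ y hy
    refine le_trans (hMb β y hy) (le_trans (Nat.le_ceil _) ?_)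
    exact_mod_cast Nat.cast_le.mpr (Finset.le_sup (f := fun β => ⌈Mb β⌉₊)
      (hfin.mem_toFinset.mpr hβ))
  set cnt : ℕ := n * (n + 1 + L') ^ L' with hcnt
  have hcnt0 : 0 < cnt := by
    have h1 : 0 < (n + 1 + L') ^ L' := Nat.pow_pos (by omega)
    exact Nat.mul_pos (by omega) h1
  refine ⟨(cnt : ℝ) * (M + 1), by positivity, ?_⟩
  intro Lb Nh Ξ ζ H hNh hΞ hζ hH u hu F hF hFV hbnd r a hr hra t x
  have hu' : ContDiff ℝ ((⊤:ℕ∞) : WithTop ℕ∞) u := hu.of_le (by simp)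
  have hF' : ∀ i, ContDiff ℝ ((⊤:ℕ∞) : WithTop ℕ∞) (F i) := fun i => (hF i).of_le (by simp)
  have hFU : ∀ p : EE d, (fun i => F i p) ∈ U := fun p => hVU (hFV p)
  -- initial expansion according to r
  have key : ∃ init : List (Tm d n),
      ((advE d u)^[r] (fun p => G (fun i => F i p))
        = fun q => (init.map (fun T => tval G u F T q)).sum) ∧
      init.length ≤ n ∧
      ∀ T ∈ init, T.1.length = T.2.length ∧ T.2.length ≤ 1 ∧ wfl T.2 ∧
        ssum T.2 = r ∧ bsum T.2 = 0 := by
    interval_cases r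
    · refine ⟨[(([] : List (Fin n)), ([] : List (Fac d n)))], ?_, by simpa using hn, ?_⟩
      · funext q
        simp only [Function.iterate_zero, id_eq, List.map_cons, List.map_nil,
          List.sum_cons, List.sum_nil, add_zero]
        simp [tval, Gd]
      · intro T hT
        rw [List.mem_singleton] at hT
        subst hT
        simp [wfl, ssum, bsum]
    · refine ⟨List.ofFn (fun j : Fin n => (([j] : List (Fin n)),
        [((j, ([] : List (Fin d)), 1) : Fac d n)])), ?_, by simp, ?_⟩
      · funext q
        rw [Function.iterate_one]
        have hcomp := advE_comp (F := F) (h := G) (p := q) hu' hF'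
          (differentiableAt_Gd hU hG' [] (hFU q)) (smooth_compGd hU hG' hF' hFU [])
        rw [hcomp, List.map_ofFn, List.sum_ofFn]
        refine Finset.sum_congr rfl fun j _ => ?_
        have h1 : tval G u F (([j] : List (Fin n)), [((j, ([] : List (Fin d)), 1) : Fac d n)]) q
            = Gd n G [j] (fun k => F k q) * advE d u (F j) q := by
          simp [tval, fval, nablaE]
        simp only [Function.comp]
        rw [h1]
        rfl
      · intro T hT
        rw [List.mem_ofFn] at hT
        obtain ⟨j, rfl⟩ := hT
        simp [wfl, ssum, bsum]
  obtain ⟨init, hfeq, hinitlen, hinit⟩ := key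
  obtain ⟨Ts, hpt, hrel, hlen⟩ := expandList hU hG' hu' hF' hFU a init
  -- pointwise expansion of the full derivative
  have hmain : ∀ p : EE d,
      nablaE d a ((advE d u)^[r] (fun p => G (fun i => F i p))) p
        = (Ts.map (fun T' => tval G u F T' p)).sum := by
    intro p
    rw [hfeq]
    have h1 : (fun q => (init.map (fun T => tval G u F T q)).sum)
        = fun q => ((init.map (tval G u F)).map (· q)).sum := by
      funext q
      rw [List.map_map]
      rfl
    rw [h1, nablaE_funSum a (init.map (tval G u F)) ?hsm p, List.map_map, ← hpt p]
    · rfl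
    · intro Φ hΦ
      obtain ⟨T, _, rfl⟩ := List.mem_map.mp hΦ
      exact smooth_tval hU hG' hu' hF' hFU T
  -- per-term bounds
  set W : ℝ := Nh ^ (max ((a.length : ℝ) + (r : ℝ) - (Lb : ℝ)) 0) * Ξ ^ a.length * ζ ^ r
    * (1 + H) ^ L' with hW
  have hW0 : 0 ≤ W := by
    have h1 : (0:ℝ) < Nh ^ (max ((a.length : ℝ) + (r : ℝ) - (Lb : ℝ)) 0) :=
      Real.rpow_pos_of_pos (by linarith) _
    have h2 : (0:ℝ) ≤ (1 + H) ^ L' := by positivity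
    positivity
  have hterm : ∀ T' ∈ Ts, ∀ p : EE d, |tval G u F T' p| ≤ M * W := by
    intro T' hT' p
    obtain ⟨T, hT, hrelT⟩ := hrel T' hT'
    obtain ⟨e1, e2, e3, e4, e5⟩ := hinit T hT
    obtain ⟨a1, b1, c1, d1, lenle⟩ := hrelT
    have hwf' : wfl T'.2 := b1 e3
    have hss : ssum T'.2 = r := by rw [c1, e4]
    have hbs : bsum T'.2 = a.length := by rw [d1, e5]; omega
    have hlen2 : T'.2.length ≤ a.length + r := by
      have := wfl_length_le hwf'
      omega
    have hβ : T'.1.length ≤ L' := by omega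
    have htot : bsum T'.2 + ssum T'.2 ≤ L' := by omega
    have hb := term_bound (u := u) (F := F) (G := G) L' Lb Nh Ξ ζ H M hNh hΞ hζ hH hM0
      (fun β hβ' p' => hGbV β hβ' _ (hFV p'))
      ?hFb T' hwf' hβ htot p
    · rw [hss, hbs] at hb
      exact le_trans hb (by rw [hW])
    · intro f hf1 hf2 p'
      have := hbnd f.1 f.2.2 f.2.1 hf1 hf2 p'.1 p'.2
      simpa [fval] using this
  -- counting
  have hcount : Ts.length ≤ cnt := by
    have h1 := hlen 1 fun T hT => (hinit T hT).2.1
    have h2 : (n + 1 + a.length) ^ a.length ≤ (n + 1 + L') ^ L' := by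
      calc (n + 1 + a.length) ^ a.length ≤ (n + 1 + L') ^ a.length :=
            Nat.pow_le_pow_left (by omega) _
        _ ≤ (n + 1 + L') ^ L' := Nat.pow_le_pow_right (by omega) (by omega)
    calc Ts.length ≤ init.length * (n + 1 + a.length) ^ a.length := h1
      _ ≤ n * (n + 1 + L') ^ L' := Nat.mul_le_mul hinitlen h2
  -- conclusion
  have hfinal := hmain (t, x)
  rw [hfinal]
  have h1 : |(Ts.map (fun T' => tval G u F T' (t, x))).sum|
      ≤ (Ts.map (fun T' => |tval G u F T' (t, x)|)).sum := by
    refine le_trans (list_abs_sum _) ?_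
    rw [List.map_map]
    exact le_rfl
  have h2 : (Ts.map (fun T' => |tval G u F T' (t, x)|)).sum ≤ Ts.length * (M * W) := by
    have := List.sum_le_card_nsmul (Ts.map (fun T' => |tval G u F T' (t, x)|)) (M * W) ?hb
    · simpa [nsmul_eq_mul] using this
    · intro y hy
      obtain ⟨T', hT', rfl⟩ := List.mem_map.mp hy
      exact hterm T' hT' (t, x)
  have h3 : (Ts.length : ℝ) * (M * W) ≤ (cnt : ℝ) * ((M + 1) * W) := by
    have hMW : M * W ≤ (M + 1) * W := by nlinarith
    have hc : (Ts.length : ℝ) ≤ (cnt : ℝ) := by exact_mod_cast hcount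
    have hMW0 : 0 ≤ (M + 1) * W := by positivity
    nlinarith [mul_nonneg hM0 hW0]
  calc |(Ts.map (fun T' => tval G u F T' (t, x))).sum|
      ≤ (Ts.map (fun T' => |tval G u F T' (t, x)|)).sum := h1
    _ ≤ Ts.length * (M * W) := h2
    _ ≤ (cnt : ℝ) * ((M + 1) * W) := h3
    _ = (cnt : ℝ) * (M + 1) * Nh ^ (max ((a.length : ℝ) + (r : ℝ) - (Lb : ℝ)) 0)
        * Ξ ^ a.length * ζ ^ r * (1 + H) ^ L' := by rw [hW]; ring
end

section
/- Let d ≥ 1, let L̲ ≥ 0 and L' ≥ 1 be integers, and let N̂ ≥ 1, Ξ ≥ 1, E > 0, H ≥ 0 be real numbers with ζ ≥ Ξ·E. Let u₁, u₂ : ℝ × ℝ^d → ℝ^d be smooth vector fields each satisfying ‖∇_c u_i(t,·)‖_{C⁰} ≤ N̂^{(|c|−L̲)₊} Ξ^{|c|} E for every t and every multi-index c with 0 ≤ |c| ≤ L', and write D_t^{(i)} = ∂_t + u_i·∇. Let F : ℝ × ℝ^d → ℝ be smooth and suppose that for every r ∈ {0,1}, every multi-index a with |a| + r ≤ L', and every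 t: ‖∇_a (D_t^{(1)})^r F(t,·)‖_{C⁰} ≤ N̂^{(|a|+r−L̲)₊} Ξ^{|a|} ζ^r H. Then there is a constant C depending only on d and L' such that for every r ∈ {0,1}, every multi-index a with |a| + r ≤ L', and every t: ‖∇_a (D_t^{(2)})^r F(t,·)‖_{C⁰} ≤ C N̂^{(|a|+r−L̲)₊} Ξ^{|a|} ζ^r H. In particular (taking u₂ = 0), the same weighted bounds hold with the pure time derivative ∂_t in place of the advective derivative D_t^{(1)}. -/
variable {d : ℕ}

abbrev Ed (d : ℕ) := EuclideanSpace ℝ (Fin d)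

lemma sliceHasFDeriv (F : ℝ × Ed d → ℝ) (hF : ContDiff ℝ (⊤ : ℕ∞) F) (t : ℝ) (x : Ed d) :
    HasFDerivAt (fun y => F (t, y))
      (((fderiv ℝ F) (t, x)).comp (((0 : Ed d →L[ℝ] ℝ)).prod (ContinuousLinearMap.id ℝ (Ed d)))) x := by
  have h1 : HasFDerivAt (fun y : Ed d => ((t, y) : ℝ × Ed d))
      (((0 : Ed d →L[ℝ] ℝ)).prod (ContinuousLinearMap.id ℝ (Ed d))) x :=
    (hasFDerivAt_const t x).prodMk (hasFDerivAt_id x)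
  exact ((hF.differentiable (by simp) (t, x)).hasFDerivAt).comp x h1

lemma pderivE_eq (i : Fin d) (F : ℝ × Ed d → ℝ) (hF : ContDiff ℝ (⊤ : ℕ∞) F) :
    pderivE d i F = fun p => fderiv ℝ F p ((0 : ℝ), EuclideanSpace.single i 1) := by
  funext p
  have := (sliceHasFDeriv F hF p.1 p.2).fderiv
  simp only [pderivE, this]
  rfl

lemma pderivE_contDiff (i : Fin d) (F : ℝ × Ed d → ℝ) (hF : ContDiff ℝ (⊤ : ℕ∞) F) :
    ContDiff ℝ (⊤ : ℕ∞) (pderivE d i F) := by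
  rw [pderivE_eq i F hF]
  exact (hF.fderiv_right (by simp)).clm_apply contDiff_const

lemma sliceDiffAt (F : ℝ × Ed d → ℝ) (hF : ContDiff ℝ (⊤ : ℕ∞) F) (t : ℝ) (x : Ed d) :
    DifferentiableAt ℝ (fun y => F (t, y)) x :=
  (sliceHasFDeriv F hF t x).differentiableAt

lemma pderivE_add (i : Fin d) (f g : ℝ × Ed d → ℝ) (hf : ContDiff ℝ (⊤ : ℕ∞) f) (hg : ContDiff ℝ (⊤ : ℕ∞) g) :
    pderivE d i (fun p => f p + g p) = fun p => pderivE d i f p + pderivE d i g p := by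
  funext p
  simp only [pderivE]
  rw [fderiv_fun_add (sliceDiffAt f hf p.1 p.2) (sliceDiffAt g hg p.1 p.2)]
  rfl

lemma pderivE_neg (i : Fin d) (f : ℝ × Ed d → ℝ) :
    pderivE d i (fun p => -f p) = fun p => -pderivE d i f p := by
  funext p
  simp only [pderivE]
  rw [fderiv_fun_neg]
  rfl

lemma pderivE_mul (i : Fin d) (f g : ℝ × Ed d → ℝ) (hf : ContDiff ℝ (⊤ : ℕ∞) f) (hg : ContDiff ℝ (⊤ : ℕ∞) g) :
    pderivE d i (fun p => f p * g p) =
      fun p => f p * pderivE d i g p + g p * pderivE d i f p := by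
  funext p
  simp only [pderivE]
  rw [fderiv_fun_mul (sliceDiffAt f hf p.1 p.2) (sliceDiffAt g hg p.1 p.2)]
  simp

lemma nablaE_contDiff (a : List (Fin d)) (F : ℝ × Ed d → ℝ) (hF : ContDiff ℝ (⊤ : ℕ∞) F) :
    ContDiff ℝ (⊤ : ℕ∞) (nablaE d a F) := by
  induction a with
  | nil => exact hF
  | cons i a ih => exact pderivE_contDiff i _ ih

lemma nablaE_add (a : List (Fin d)) (f g : ℝ × Ed d → ℝ)
    (hf : ContDiff ℝ (⊤ : ℕ∞) f) (hg : ContDiff ℝ (⊤ : ℕ∞) g) :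
    nablaE d a (fun p => f p + g p) = fun p => nablaE d a f p + nablaE d a g p := by
  induction a with
  | nil => rfl
  | cons i a ih =>
      show pderivE d i (nablaE d a fun p => f p + g p) = _
      rw [ih, pderivE_add i _ _ (nablaE_contDiff a f hf) (nablaE_contDiff a g hg)]
      rfl

lemma nablaE_neg (a : List (Fin d)) (f : ℝ × Ed d → ℝ) :
    nablaE d a (fun p => -f p) = fun p => -nablaE d a f p := by
  induction a with
  | nil => rfl
  | cons i a ih =>
      show pderivE d i (nablaE d a fun p => -f p) = _
      rw [ih, pderivE_neg i]
      rfl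

lemma nablaE_sub (a : List (Fin d)) (f g : ℝ × Ed d → ℝ)
    (hf : ContDiff ℝ (⊤ : ℕ∞) f) (hg : ContDiff ℝ (⊤ : ℕ∞) g) :
    nablaE d a (fun p => f p - g p) = fun p => nablaE d a f p - nablaE d a g p := by
  have : (fun p => f p - g p) = fun p => f p + -g p := by funext p; ring
  rw [this, nablaE_add a f (fun p => -g p) hf hg.neg]
  have := nablaE_neg a g
  simp only [this]
  funext p; ring

lemma contDiff_list_sum {α : Type*} (l : List α) (f : α → (ℝ × Ed d → ℝ))
    (hf : ∀ x ∈ l, ContDiff ℝ (⊤ : ℕ∞) (f x)) :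
    ContDiff ℝ (⊤ : ℕ∞) (fun p => (l.map (fun x => f x p)).sum) := by
  induction l with
  | nil => simpa using contDiff_const
  | cons x l ih =>
      simp only [List.map_cons, List.sum_cons]
      exact (hf x (by simp)).add (ih (fun y hy => hf y (by simp [hy])))

lemma nablaE_list_sum {α : Type*} (a : List (Fin d)) (l : List α) (f : α → (ℝ × Ed d → ℝ))
    (hf : ∀ x ∈ l, ContDiff ℝ (⊤ : ℕ∞) (f x)) :
    nablaE d a (fun p => (l.map (fun x => f x p)).sum) =
      fun p => (l.map (fun x => nablaE d a (f x) p)).sum := by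
  induction l with
  | nil =>
      simp only [List.map_nil, List.sum_nil]
      induction a with
      | nil => rfl
      | cons i a ih =>
          show pderivE d i (nablaE d a fun _ => (0:ℝ)) = _
          rw [ih]
          funext p
          simp [pderivE]
  | cons x l ih =>
      simp only [List.map_cons, List.sum_cons]
      rw [nablaE_add a _ _ (hf x (by simp))
        (contDiff_list_sum l f (fun y hy => hf y (by simp [hy]))),
        ih (fun y hy => hf y (by simp [hy]))]

lemma nablaE_append (a b : List (Fin d)) (F : ℝ × Ed d → ℝ) :
    nablaE d (a ++ b) F = nablaE d a (nablaE d b F) := by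
  induction a with
  | nil => rfl
  | cons i a ih => show pderivE d i (nablaE d (a ++ b) F) = _; rw [ih]; rfl

def splits : List (Fin d) → List (List (Fin d) × List (Fin d))
  | [] => [([], [])]
  | i :: a => ((splits a).map (fun bc => (i :: bc.1, bc.2)))
      ++ ((splits a).map (fun bc => (bc.1, i :: bc.2)))

lemma splits_len (a : List (Fin d)) :
    ∀ bc ∈ splits a, bc.1.length + bc.2.length = a.length := by
  induction a with
  | nil => intro bc h; simp [splits] at h; simp [h]
  | cons i a ih =>
      intro bc h
      simp only [splits, List.mem_append, List.mem_map] at h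
      rcases h with ⟨cd, hcd, rfl⟩ | ⟨cd, hcd, rfl⟩ <;> simp <;>
        have := ih cd hcd <;> omega

lemma splits_length (a : List (Fin d)) : (splits a).length = 2 ^ a.length := by
  induction a with
  | nil => simp [splits]
  | cons i a ih => simp [splits, ih]; ring

lemma nablaE_mul (a : List (Fin d)) (f g : ℝ × Ed d → ℝ)
    (hf : ContDiff ℝ (⊤ : ℕ∞) f) (hg : ContDiff ℝ (⊤ : ℕ∞) g) :
    nablaE d a (fun p => f p * g p) =
      fun p => ((splits a).map (fun bc => nablaE d bc.1 f p * nablaE d bc.2 g p)).sum := by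
  induction a with
  | nil => funext p; simp [splits, nablaE]
  | cons i a ih =>
      show pderivE d i (nablaE d a fun p => f p * g p) = _
      rw [ih]
      have hsum := nablaE_list_sum [i] (splits a)
        (fun bc => fun p => nablaE d bc.1 f p * nablaE d bc.2 g p)
        (fun bc _ => (nablaE_contDiff bc.1 f hf).mul (nablaE_contDiff bc.2 g hg))
      have : pderivE d i (fun p => ((splits a).map
          (fun bc => nablaE d bc.1 f p * nablaE d bc.2 g p)).sum) =
          fun p => ((splits a).map (fun bc =>
            pderivE d i (fun q => nablaE d bc.1 f q * nablaE d bc.2 g q) p)).sum := by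
        exact hsum
      rw [this]
      funext p
      simp only [splits, List.map_append, List.map_map, List.sum_append]
      have heach : ∀ bc ∈ splits a,
          pderivE d i (fun q => nablaE d bc.1 f q * nablaE d bc.2 g q) p =
          nablaE d (i :: bc.1) f p * nablaE d bc.2 g p
            + nablaE d bc.1 f p * nablaE d (i :: bc.2) g p := by
        intro bc _
        rw [pderivE_mul i _ _ (nablaE_contDiff bc.1 f hf) (nablaE_contDiff bc.2 g hg)]
        show nablaE d bc.1 f p * nablaE d (i :: bc.2) g p
            + nablaE d bc.2 g p * nablaE d (i :: bc.1) f p = _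
        ring
      rw [List.map_congr_left heach]
      have : ∀ (F G : List (Fin d) × List (Fin d) → ℝ) (l : List (List (Fin d) × List (Fin d))),
          (l.map (fun bc => F bc + G bc)).sum = (l.map F).sum + (l.map G).sum := by
        intro F G l
        induction l with
        | nil => simp
        | cons x l ihh => simp [ihh]; ring
      rw [this]
      rfl

lemma derivSlice (F : ℝ × Ed d → ℝ) (hF : ContDiff ℝ (⊤ : ℕ∞) F) (p : ℝ × Ed d) :
    deriv (fun t => F (t, p.2)) p.1 = fderiv ℝ F p ((1 : ℝ), (0 : Ed d)) := by
  have h1 : HasFDerivAt (fun t : ℝ => ((t, p.2) : ℝ × Ed d))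
      ((ContinuousLinearMap.id ℝ ℝ).prod (0 : ℝ →L[ℝ] Ed d)) p.1 :=
    (hasFDerivAt_id p.1).prodMk (hasFDerivAt_const p.2 p.1)
  have h2 : HasFDerivAt (fun t : ℝ => F (t, p.2))
      ((fderiv ℝ F p).comp ((ContinuousLinearMap.id ℝ ℝ).prod (0 : ℝ →L[ℝ] Ed d))) p.1 :=
    ((hF.differentiable (by simp) p).hasFDerivAt).comp p.1 h1
  have := h2.hasDerivAt.deriv
  rw [this]
  rfl

lemma advE_contDiff (u : ℝ × Ed d → Ed d) (F : ℝ × Ed d → ℝ)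
    (hu : ContDiff ℝ (⊤ : ℕ∞) u) (hF : ContDiff ℝ (⊤ : ℕ∞) F) : ContDiff ℝ (⊤ : ℕ∞) (advE d u F) := by
  have h1 : (fun p : ℝ × Ed d => deriv (fun t => F (t, p.2)) p.1) =
      fun p => fderiv ℝ F p ((1 : ℝ), (0 : Ed d)) := by
    funext p; exact derivSlice F hF p
  have : advE d u F = fun p => fderiv ℝ F p ((1 : ℝ), (0 : Ed d))
      + ∑ j : Fin d, u p j * pderivE d j F p := by
    funext p; simp only [advE]; rw [derivSlice F hF p]
  rw [this]
  refine ((hF.fderiv_right (by simp)).clm_apply contDiff_const).add (ContDiff.sum ?_)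
  intro j _
  exact (((EuclideanSpace.proj j).contDiff).comp hu).mul (pderivE_contDiff j F hF)

lemma abs_list_sum_le {α : Type*} (l : List α) (f : α → ℝ) (M : ℝ) (hM : 0 ≤ M)
    (h : ∀ x ∈ l, |f x| ≤ M) : |(l.map f).sum| ≤ l.length * M := by
  induction l with
  | nil => simpa using hM
  | cons x l ih =>
      simp only [List.map_cons, List.sum_cons, List.length_cons]
      calc |f x + (l.map f).sum| ≤ |f x| + |(l.map f).sum| := abs_add_le _ _
        _ ≤ M + l.length * M := by
            gcongr
            · exact h x (by simp)
            · exact ih (fun y hy => h y (by simp [hy]))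
        _ = ((l.length : ℝ) + 1) * M := by ring
        _ = ((l.length + 1 : ℕ) : ℝ) * M := by push_cast; ring
      
lemma rpow_pospart_mul {Nh : ℝ} (hNh : 1 ≤ Nh) (x y L : ℝ) (hL : 0 ≤ L)
    (hx : -L ≤ x) (hy : -L ≤ y) :
    Nh ^ max x 0 * Nh ^ max y 0 ≤ Nh ^ max (x + y + L) 0 := by
  rw [← Real.rpow_add (lt_of_lt_of_le one_pos hNh)]
  apply Real.rpow_le_rpow_of_exponent_le hNh
  rcases le_total x 0 with h1 | h1 <;> rcases le_total y 0 with h2 | h2 <;>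
    simp [max_def] <;> split_ifs <;> linarith

lemma prod_term_bound (L' Lb : ℕ) (Nh Ξ E ζ H : ℝ) (hNh : 1 ≤ Nh) (hΞ : 1 ≤ Ξ)
    (hE : 0 < E) (hH : 0 ≤ H) (hζ : Ξ * E ≤ ζ)
    (u : ℝ × Ed d → Ed d) (hu : ContDiff ℝ (⊤ : ℕ∞) u)
    (hub : ∀ c : List (Fin d), c.length ≤ L' → ∀ (j : Fin d) (t : ℝ) (x : Ed d),
      |nablaE d c (fun p => u p j) (t, x)| ≤
        Nh ^ max ((c.length : ℝ) - (Lb : ℝ)) 0 * Ξ ^ c.length * E)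
    (F : ℝ × Ed d → ℝ) (hF : ContDiff ℝ (⊤ : ℕ∞) F)
    (hFb : ∀ b : List (Fin d), b.length ≤ L' → ∀ (t : ℝ) (x : Ed d),
      |nablaE d b F (t, x)| ≤ Nh ^ max ((b.length : ℝ) - (Lb : ℝ)) 0 * Ξ ^ b.length * H)
    (a : List (Fin d)) (ha : a.length + 1 ≤ L') (j : Fin d) (t : ℝ) (x : Ed d) :
    |nablaE d a (fun p => u p j * pderivE d j F p) (t, x)| ≤
      (2 : ℝ) ^ a.length *
        (Nh ^ max ((a.length : ℝ) + 1 - (Lb : ℝ)) 0 * Ξ ^ a.length * ζ * H) := by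
  have hNh0 : (0 : ℝ) < Nh := lt_of_lt_of_le one_pos hNh
  have hΞ0 : (0 : ℝ) < Ξ := lt_of_lt_of_le one_pos hΞ
  have hζ0 : (0 : ℝ) < ζ := lt_of_lt_of_le (by positivity) hζ
  set M : ℝ := Nh ^ max ((a.length : ℝ) + 1 - (Lb : ℝ)) 0 * Ξ ^ a.length * ζ * H with hM
  have hM0 : 0 ≤ M := by
    apply mul_nonneg (mul_nonneg (mul_nonneg _ _) hζ0.le) hH
    · exact (Real.rpow_pos_of_pos hNh0 _).le
    · positivity
  have hg : ContDiff ℝ (⊤ : ℕ∞) (fun p : ℝ × Ed d => u p j) := by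
    have : (fun p : ℝ × Ed d => u p j) = (EuclideanSpace.proj j) ∘ u := rfl
    rw [this]
    exact ((EuclideanSpace.proj (𝕜 := ℝ) j).contDiff).comp hu
  have hh : ContDiff ℝ (⊤ : ℕ∞) (pderivE d j F) := pderivE_contDiff j F hF
  rw [nablaE_mul a _ _ hg hh]
  have hbound : ∀ bc ∈ splits a,
      |nablaE d bc.1 (fun p => u p j) (t, x) * nablaE d bc.2 (pderivE d j F) (t, x)| ≤ M := by
    intro bc hbc
    have hlen := splits_len a bc hbc
    have hb1 : bc.1.length ≤ L' := by omega
    have hb2 : (bc.2 ++ [j]).length ≤ L' := by simp; omega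
    have B1 := hub bc.1 hb1 j t x
    have happ : nablaE d bc.2 (pderivE d j F) = nablaE d (bc.2 ++ [j]) F := by
      rw [nablaE_append bc.2 [j] F]; rfl
    have B2 : |nablaE d bc.2 (pderivE d j F) (t, x)| ≤
        Nh ^ max ((bc.2.length : ℝ) + 1 - (Lb : ℝ)) 0 * Ξ ^ (bc.2.length + 1) * H := by
      rw [happ]
      have := hFb (bc.2 ++ [j]) hb2 t x
      simpa [add_comm] using this
    have he : ((bc.1.length : ℝ) - (Lb : ℝ)) + ((bc.2.length : ℝ) + 1 - (Lb : ℝ)) + (Lb : ℝ)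
        = (a.length : ℝ) + 1 - (Lb : ℝ) := by
      have : (bc.1.length : ℝ) + (bc.2.length : ℝ) = (a.length : ℝ) := by
        exact_mod_cast congrArg (Nat.cast (R := ℝ)) hlen
      linarith
    have h01 : (0 : ℝ) ≤ (bc.1.length : ℝ) := Nat.cast_nonneg _
    have h02 : (0 : ℝ) ≤ (bc.2.length : ℝ) := Nat.cast_nonneg _
    have h0L : (0 : ℝ) ≤ (Lb : ℝ) := Nat.cast_nonneg _
    have h3 : Nh ^ max ((bc.1.length : ℝ) - (Lb : ℝ)) 0
        * Nh ^ max ((bc.2.length : ℝ) + 1 - (Lb : ℝ)) 0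
        ≤ Nh ^ max ((a.length : ℝ) + 1 - (Lb : ℝ)) 0 := by
      have h := rpow_pospart_mul hNh ((bc.1.length : ℝ) - (Lb : ℝ))
        ((bc.2.length : ℝ) + 1 - (Lb : ℝ)) (Lb : ℝ) h0L (by linarith) (by linarith)
      rw [he] at h
      exact h
    have hpow : Ξ ^ bc.1.length * Ξ ^ (bc.2.length + 1) = Ξ ^ a.length * Ξ := by
      rw [← pow_add]
      have : bc.1.length + (bc.2.length + 1) = a.length + 1 := by omega
      rw [this, pow_succ]
    calc |nablaE d bc.1 (fun p => u p j) (t, x) * nablaE d bc.2 (pderivE d j F) (t, x)|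
        = |nablaE d bc.1 (fun p => u p j) (t, x)| * |nablaE d bc.2 (pderivE d j F) (t, x)| :=
          abs_mul _ _
      _ ≤ (Nh ^ max ((bc.1.length : ℝ) - (Lb : ℝ)) 0 * Ξ ^ bc.1.length * E)
          * (Nh ^ max ((bc.2.length : ℝ) + 1 - (Lb : ℝ)) 0 * Ξ ^ (bc.2.length + 1) * H) := by
          apply mul_le_mul B1 B2 (abs_nonneg _)
          positivity
      _ = (Nh ^ max ((bc.1.length : ℝ) - (Lb : ℝ)) 0
            * Nh ^ max ((bc.2.length : ℝ) + 1 - (Lb : ℝ)) 0)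
          * (Ξ ^ bc.1.length * Ξ ^ (bc.2.length + 1)) * (E * H) := by ring
      _ ≤ Nh ^ max ((a.length : ℝ) + 1 - (Lb : ℝ)) 0
          * (Ξ ^ bc.1.length * Ξ ^ (bc.2.length + 1)) * (E * H) := by
          have hEH : 0 ≤ E * H := by positivity
          have hΞp : 0 ≤ Ξ ^ bc.1.length * Ξ ^ (bc.2.length + 1) := by positivity
          exact mul_le_mul_of_nonneg_right (mul_le_mul_of_nonneg_right h3 hΞp) hEH
      _ = Nh ^ max ((a.length : ℝ) + 1 - (Lb : ℝ)) 0 * Ξ ^ a.length * ((Ξ * E) * H) := by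
          rw [hpow]; ring
      _ ≤ M := by
          rw [hM]
          have hNp : 0 ≤ Nh ^ max ((a.length : ℝ) + 1 - (Lb : ℝ)) 0 * Ξ ^ a.length := by
            have := (Real.rpow_pos_of_pos hNh0 (max ((a.length : ℝ) + 1 - (Lb : ℝ)) 0)).le
            positivity
          have : (Ξ * E) * H ≤ ζ * H := mul_le_mul_of_nonneg_right hζ hH
          calc Nh ^ max ((a.length : ℝ) + 1 - (Lb : ℝ)) 0 * Ξ ^ a.length * ((Ξ * E) * H)
              ≤ Nh ^ max ((a.length : ℝ) + 1 - (Lb : ℝ)) 0 * Ξ ^ a.length * (ζ * H) :=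
                mul_le_mul_of_nonneg_left this hNp
            _ = _ := by ring
  have := abs_list_sum_le (splits a) _ M hM0 hbound
  calc |((splits a).map fun bc =>
        nablaE d bc.1 (fun p => u p j) (t, x) * nablaE d bc.2 (pderivE d j F) (t, x)).sum|
      ≤ ((splits a).length : ℝ) * M := this
    _ = (2 : ℝ) ^ a.length * M := by rw [splits_length]; push_cast; ring


/-- Comparability of weighted norms taken with respect to different advective
derivatives: if `u₁, u₂` both obey frequency-energy-level bounds up to order `L'` and
`F` obeys the weighted bounds with respect to `D_t^{(1)} = ∂_t + u₁·∇`, then it obeys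
the same weighted bounds (up to a constant `C = C(d, L')`) with respect to
`D_t^{(2)} = ∂_t + u₂·∇`; taking `u₂ = 0` covers the pure time derivative. -/
theorem weighted_norm_comparability (d : ℕ) (hd : 1 ≤ d) (L' : ℕ) (hL' : 1 ≤ L') :
    ∃ C : ℝ, 0 < C ∧
      ∀ (Lb : ℕ) (Nh Ξ E ζ H : ℝ), 1 ≤ Nh → 1 ≤ Ξ → 0 < E → 0 ≤ H → Ξ * E ≤ ζ →
      ∀ u₁ u₂ : ℝ × EuclideanSpace ℝ (Fin d) → EuclideanSpace ℝ (Fin d),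
        ContDiff ℝ (⊤ : ℕ∞) u₁ → ContDiff ℝ (⊤ : ℕ∞) u₂ →
        (∀ (c : List (Fin d)), c.length ≤ L' →
          ∀ (j : Fin d) (t : ℝ) (x : EuclideanSpace ℝ (Fin d)),
            |nablaE d c (fun p => u₁ p j) (t, x)| ≤
              Nh ^ (max ((c.length : ℝ) - (Lb : ℝ)) 0) * Ξ ^ c.length * E) →
        (∀ (c : List (Fin d)), c.length ≤ L' →
          ∀ (j : Fin d) (t : ℝ) (x : EuclideanSpace ℝ (Fin d)),
            |nablaE d c (fun p => u₂ p j) (t, x)| ≤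
              Nh ^ (max ((c.length : ℝ) - (Lb : ℝ)) 0) * Ξ ^ c.length * E) →
      ∀ F : ℝ × EuclideanSpace ℝ (Fin d) → ℝ,
        ContDiff ℝ (⊤ : ℕ∞) F →
        (∀ (r : ℕ) (a : List (Fin d)), r ≤ 1 → a.length + r ≤ L' →
          ∀ (t : ℝ) (x : EuclideanSpace ℝ (Fin d)),
            |nablaE d a ((advE d u₁)^[r] F) (t, x)| ≤
              Nh ^ (max ((a.length : ℝ) + (r : ℝ) - (Lb : ℝ)) 0) * Ξ ^ a.length * ζ ^ r * H) →
      ∀ (r : ℕ) (a : List (Fin d)), r ≤ 1 → a.length + r ≤ L' →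
        ∀ (t : ℝ) (x : EuclideanSpace ℝ (Fin d)),
          |nablaE d a ((advE d u₂)^[r] F) (t, x)| ≤
            C * Nh ^ (max ((a.length : ℝ) + (r : ℝ) - (Lb : ℝ)) 0) * Ξ ^ a.length * ζ ^ r * H := by
  refine ⟨1 + 2 * d * 2 ^ L', by positivity, ?_⟩
  intro Lb Nh Ξ E ζ H hNh hΞ hE hH hζ u₁ u₂ hu₁ hu₂ hub₁ hub₂ F hF hF1 r a hr ha t x
  have hNh0 : (0 : ℝ) < Nh := lt_of_lt_of_le one_pos hNh
  have hΞ0 : (0 : ℝ) < Ξ := lt_of_lt_of_le one_pos hΞ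
  have hζ0 : (0 : ℝ) < ζ := lt_of_lt_of_le (by positivity) hζ
  have hC1 : (1 : ℝ) ≤ 1 + 2 * d * 2 ^ L' := by
    have : (0:ℝ) ≤ 2 * d * 2 ^ L' := by positivity
    linarith
  interval_cases r
  · -- r = 0
    simp only [Function.iterate_zero, id_eq, pow_zero, mul_one, Nat.cast_zero, add_zero] at *
    have h0 := hF1 0 a (by norm_num) (by omega) t x
    simp only [Function.iterate_zero, id_eq, pow_zero, mul_one, Nat.cast_zero, add_zero] at h0
    have hR : 0 ≤ Nh ^ max ((a.length : ℝ) - (Lb : ℝ)) 0 * Ξ ^ a.length * H := by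
      have := (Real.rpow_pos_of_pos hNh0 (max ((a.length : ℝ) - (Lb : ℝ)) 0)).le
      positivity
    calc |nablaE d a F (t, x)| ≤ Nh ^ max ((a.length : ℝ) - (Lb : ℝ)) 0 * Ξ ^ a.length * H := h0
      _ ≤ (1 + 2 * d * 2 ^ L') * (Nh ^ max ((a.length : ℝ) - (Lb : ℝ)) 0 * Ξ ^ a.length * H) :=
          le_mul_of_one_le_left hR hC1
      _ = _ := by ring
  · -- r = 1
    have ha1 : a.length + 1 ≤ L' := ha
    -- the F-bounds with r = 0
    have hFb : ∀ b : List (Fin d), b.length ≤ L' → ∀ (t : ℝ) (x : Ed d),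
        |nablaE d b F (t, x)| ≤ Nh ^ max ((b.length : ℝ) - (Lb : ℝ)) 0 * Ξ ^ b.length * H := by
      intro b hb t x
      have := hF1 0 b (by norm_num) (by omega) t x
      simpa using this
    set S₁ : ℝ × Ed d → ℝ :=
      fun p => ((List.finRange d).map (fun j => u₁ p j * pderivE d j F p)).sum with hS₁def
    set S₂ : ℝ × Ed d → ℝ :=
      fun p => ((List.finRange d).map (fun j => u₂ p j * pderivE d j F p)).sum with hS₂def
    have hterm : ∀ (u : ℝ × Ed d → Ed d), ContDiff ℝ (⊤ : ℕ∞) u → ∀ j : Fin d,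
        ContDiff ℝ (⊤ : ℕ∞) (fun p : ℝ × Ed d => u p j * pderivE d j F p) := by
      intro u hu j
      have hg : ContDiff ℝ (⊤ : ℕ∞) (fun p : ℝ × Ed d => u p j) := by
        have : (fun p : ℝ × Ed d => u p j) = (EuclideanSpace.proj j) ∘ u := rfl
        rw [this]
        exact ((EuclideanSpace.proj (𝕜 := ℝ) j).contDiff).comp hu
      exact hg.mul (pderivE_contDiff j F hF)
    have hS₁c : ContDiff ℝ (⊤ : ℕ∞) S₁ :=
      contDiff_list_sum (List.finRange d) _ (fun j _ => hterm u₁ hu₁ j)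
    have hS₂c : ContDiff ℝ (⊤ : ℕ∞) S₂ :=
      contDiff_list_sum (List.finRange d) _ (fun j _ => hterm u₂ hu₂ j)
    have key : advE d u₂ F = fun p => advE d u₁ F p + (S₂ p - S₁ p) := by
      funext p
      have e1 : (∑ j : Fin d, u₁ p j * pderivE d j F p) = S₁ p := rfl
      have e2 : (∑ j : Fin d, u₂ p j * pderivE d j F p) = S₂ p := rfl
      simp only [advE, e1, e2]
      ring
    have hdecomp : nablaE d a (advE d u₂ F) =
        fun p => nablaE d a (advE d u₁ F) p + (nablaE d a S₂ p - nablaE d a S₁ p) := by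
      rw [key, nablaE_add a _ _ (advE_contDiff u₁ F hu₁ hF) (hS₂c.sub hS₁c)]
      have := nablaE_sub a S₂ S₁ hS₂c hS₁c
      simp only [this]
    -- bounds
    set M : ℝ := Nh ^ max ((a.length : ℝ) + 1 - (Lb : ℝ)) 0 * Ξ ^ a.length * ζ * H with hMdef
    have hM0 : 0 ≤ M := by
      have := (Real.rpow_pos_of_pos hNh0 (max ((a.length : ℝ) + 1 - (Lb : ℝ)) 0)).le
      positivity
    have hSbound : ∀ (u : ℝ × Ed d → Ed d), ContDiff ℝ (⊤ : ℕ∞) u →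
        (∀ (c : List (Fin d)), c.length ≤ L' → ∀ (j : Fin d) (t : ℝ) (x : Ed d),
          |nablaE d c (fun p => u p j) (t, x)| ≤
            Nh ^ (max ((c.length : ℝ) - (Lb : ℝ)) 0) * Ξ ^ c.length * E) →
        ∀ (Su : ℝ × Ed d → ℝ),
          (Su = fun p => ((List.finRange d).map (fun j => u p j * pderivE d j F p)).sum) →
          |nablaE d a Su (t, x)| ≤ d * ((2 : ℝ) ^ a.length * M) := by
      intro u hu hub Su hSu
      subst hSu
      rw [nablaE_list_sum a (List.finRange d) _ (fun j _ => hterm u hu j)]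
      have hb : ∀ j ∈ List.finRange d,
          |nablaE d a (fun p => u p j * pderivE d j F p) (t, x)| ≤ (2 : ℝ) ^ a.length * M :=
        fun j _ => prod_term_bound L' Lb Nh Ξ E ζ H hNh hΞ hE hH hζ u hu hub F hF hFb a ha1 j t x
      have := abs_list_sum_le (List.finRange d) _ ((2 : ℝ) ^ a.length * M)
        (by positivity) hb
      simpa using this
    have hT2 := hSbound u₂ hu₂ hub₂ S₂ hS₂def
    have hT1b := hSbound u₁ hu₁ hub₁ S₁ hS₁def
    have hT0 := hF1 1 a hr ha t x
    simp only [Function.iterate_one, pow_one, Nat.cast_one] at hT0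
    have hMform : Nh ^ max ((a.length : ℝ) + 1 - (Lb : ℝ)) 0 * Ξ ^ a.length * ζ * H = M := rfl
    have h2L : (2 : ℝ) ^ a.length ≤ 2 ^ L' := by
      apply pow_le_pow_right₀ (by norm_num)
      omega
    have final : |nablaE d a (advE d u₂ F) (t, x)| ≤ (1 + 2 * d * 2 ^ L') * M := by
      rw [hdecomp]
      calc |nablaE d a (advE d u₁ F) (t, x) + (nablaE d a S₂ (t, x) - nablaE d a S₁ (t, x))|
          ≤ |nablaE d a (advE d u₁ F) (t, x)| + (|nablaE d a S₂ (t, x)| + |nablaE d a S₁ (t, x)|) := by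
            have h1 := abs_add_le (nablaE d a (advE d u₁ F) (t, x))
              (nablaE d a S₂ (t, x) - nablaE d a S₁ (t, x))
            have h2 : |nablaE d a S₂ (t, x) - nablaE d a S₁ (t, x)| ≤
                |nablaE d a S₂ (t, x)| + |nablaE d a S₁ (t, x)| := by
              rw [sub_eq_add_neg]
              refine (abs_add_le _ _).trans ?_
              rw [abs_neg]
            linarith
        _ ≤ M + (d * ((2 : ℝ) ^ a.length * M) + d * ((2 : ℝ) ^ a.length * M)) := by
            have hT0' : |nablaE d a (advE d u₁ F) (t, x)| ≤ M := by
              rw [hMform] at hT0; exact hT0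
            gcongr <;> assumption
        _ = (1 + 2 * d * (2 : ℝ) ^ a.length) * M := by ring
        _ ≤ (1 + 2 * d * 2 ^ L') * M := by
            apply mul_le_mul_of_nonneg_right _ hM0
            have : (0:ℝ) ≤ (d : ℝ) := Nat.cast_nonneg _
            nlinarith
    simp only [Function.iterate_one, pow_one, Nat.cast_one]
    calc |nablaE d a (advE d u₂ F) (t, x)| ≤ (1 + 2 * d * 2 ^ L') * M := final
      _ = (1 + 2 * ↑d * 2 ^ L') * Nh ^ max ((a.length : ℝ) + 1 - (Lb : ℝ)) 0
          * Ξ ^ a.length * ζ * H := by rw [hMdef]; ring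
end

section
/- Let d, m, n ≥ 1, let L ≥ 1 and M ≥ 0 be integers, let R ∈ {0,1}, and let N̂ ≥ 1, Ξ ≥ 1, E > 0 be real numbers. Let u : ℝ × ℝ^d → ℝ^d be smooth and let D_t = ∂_t + u·∇. Let F₁ : ℝ × ℝ^d → ℝ^m and F₂ : ℝ × ℝ^d → ℝ^n be smooth, taking values in compact sets V₁ ⊂ ℝ^m and V₂ ⊂ ℝ^n respectively, and suppose that for every 0 ≤ r ≤ R, every multi-index a with |a| + r ≤ M, and every t: ‖∇_a D_t^r F₁(t,·)‖_{C⁰} ≤ N̂^{(|a|+r−L)₊} Ξ^{|a|} (ΞE)^r and ‖∇_a D_t^r F₂(t,·)‖_{C⁰} ≤ N̂^{(|a|+1−L)₊} Ξ^{|a|} (ΞE)^r. Let G be a smooth real-valued function on an open neighborhood of V₁ × V₂. Then there is a constant C depending only on d, m, n, M, G, V₁, V₂ such that for every 0 ≤ r ≤ R, every multi-index a with |a| + r ≤ M, and every t: ‖∇_a D_t^r (G(F₁, F₂))(t,·)‖_{C⁰} ≤ C N̂^{(|a|+1−L)₊} Ξ^{|a|} (ΞE)^r. -/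
namespace SWCR


variable {d m n : ℕ}

abbrev PS (d : ℕ) := ℝ × EuclideanSpace ℝ (Fin d)
abbrev WS (m n : ℕ) := (Fin m → ℝ) × (Fin n → ℝ)

lemma slice_hasFDerivAt {F : PS d → ℝ} {p : PS d} (hF : DifferentiableAt ℝ F p) :
    HasFDerivAt (fun x => F (p.1, x))
      ((fderiv ℝ F p).comp (ContinuousLinearMap.inr ℝ ℝ (EuclideanSpace ℝ (Fin d)))) p.2 := by
  have h1 : HasFDerivAt (fun x : EuclideanSpace ℝ (Fin d) => ((p.1, x) : PS d))
      (ContinuousLinearMap.inr ℝ ℝ _) p.2 := hasFDerivAt_prodMk_right p.1 p.2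
  have h2 : HasFDerivAt F (fderiv ℝ F p)
      ((fun x : EuclideanSpace ℝ (Fin d) => ((p.1, x) : PS d)) p.2) := by
    simpa using hF.hasFDerivAt
  exact h2.comp p.2 h1

lemma pderivE_eq_fderiv {F : PS d → ℝ} {p : PS d} (hF : DifferentiableAt ℝ F p) (i : Fin d) :
    pderivE d i F p = fderiv ℝ F p (0, EuclideanSpace.single i 1) := by
  have := (slice_hasFDerivAt hF).fderiv
  simp only [pderivE, this]
  simp

lemma tslice_hasDerivAt {F : PS d → ℝ} {p : PS d} (hF : DifferentiableAt ℝ F p) :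
    HasDerivAt (fun t => F (t, p.2)) (fderiv ℝ F p (1, 0)) p.1 := by
  have h1 : HasFDerivAt (fun t : ℝ => ((t, p.2) : PS d))
      (ContinuousLinearMap.inl ℝ ℝ _) p.1 := hasFDerivAt_prodMk_left p.1 p.2
  have h2 : HasFDerivAt F (fderiv ℝ F p) ((fun t : ℝ => ((t, p.2) : PS d)) p.1) := by
    simpa using hF.hasFDerivAt
  have h3 := (h2.comp p.1 h1).hasDerivAt
  exact h3

lemma deriv_tslice {F : PS d → ℝ} {p : PS d} (hF : DifferentiableAt ℝ F p) :
    deriv (fun t => F (t, p.2)) p.1 = fderiv ℝ F p (1, 0) :=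
  (tslice_hasDerivAt hF).deriv

lemma contDiff_fderiv_apply {F : PS d → ℝ} (hF : ContDiff ℝ (⊤ : ℕ∞) F) (v : PS d) :
    ContDiff ℝ (⊤ : ℕ∞) (fun p => fderiv ℝ F p v) :=
  (hF.fderiv_right (by simp)).clm_apply contDiff_const

lemma contDiff_pderivE {F : PS d → ℝ} (hF : ContDiff ℝ (⊤ : ℕ∞) F) (i : Fin d) :
    ContDiff ℝ (⊤ : ℕ∞) (pderivE d i F) := by
  have h : pderivE d i F = fun p => fderiv ℝ F p (0, EuclideanSpace.single i 1) := by
    funext p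
    exact pderivE_eq_fderiv ((hF.differentiable (by simp)) p) i
  rw [h]
  exact contDiff_fderiv_apply hF _

lemma advE_eq {u : PS d → EuclideanSpace ℝ (Fin d)} {F : PS d → ℝ}
    (hF : Differentiable ℝ F) :
    advE d u F = fun p => fderiv ℝ F p (1, 0)
      + ∑ j : Fin d, u p j * fderiv ℝ F p (0, EuclideanSpace.single j 1) := by
  funext p
  simp only [advE, deriv_tslice (hF p)]
  congr 1
  refine Finset.sum_congr rfl fun j _ => ?_
  rw [pderivE_eq_fderiv (hF p)]

lemma contDiff_advE {u : PS d → EuclideanSpace ℝ (Fin d)} {F : PS d → ℝ}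
    (hu : ContDiff ℝ (⊤ : ℕ∞) u) (hF : ContDiff ℝ (⊤ : ℕ∞) F) :
    ContDiff ℝ (⊤ : ℕ∞) (advE d u F) := by
  rw [advE_eq (hF.differentiable (by simp))]
  refine (contDiff_fderiv_apply hF _).add (ContDiff.sum fun j _ => ?_)
  exact (((EuclideanSpace.proj j).contDiff).comp hu).mul (contDiff_fderiv_apply hF _)

lemma contDiff_nablaE {F : PS d → ℝ} (hF : ContDiff ℝ (⊤ : ℕ∞) F) :
    ∀ a : List (Fin d), ContDiff ℝ (⊤ : ℕ∞) (nablaE d a F)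
  | [] => hF
  | i :: a => contDiff_pderivE (contDiff_nablaE hF a) i

lemma contDiff_advE_iter {u : PS d → EuclideanSpace ℝ (Fin d)} {F : PS d → ℝ}
    (hu : ContDiff ℝ (⊤ : ℕ∞) u) (hF : ContDiff ℝ (⊤ : ℕ∞) F) (r : ℕ) :
    ContDiff ℝ (⊤ : ℕ∞) ((advE d u)^[r] F) := by
  induction r with
  | zero => exact hF
  | succ r ih => rw [Function.iterate_succ_apply']; exact contDiff_advE hu ih

lemma pderivE_const (i : Fin d) (c : ℝ) (p : PS d) :
    pderivE d i (fun _ => c) p = 0 := by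
  simp [pderivE]

lemma pderivE_add {F G : PS d → ℝ} (hF : ContDiff ℝ (⊤ : ℕ∞) F) (hG : ContDiff ℝ (⊤ : ℕ∞) G)
    (i : Fin d) (p : PS d) :
    pderivE d i (fun q => F q + G q) p = pderivE d i F p + pderivE d i G p := by
  have hF' := slice_hasFDerivAt ((hF.differentiable (by simp)) p)
  have hG' := slice_hasFDerivAt ((hG.differentiable (by simp)) p)
  simp only [pderivE]
  rw [fderiv_fun_add hF'.differentiableAt hG'.differentiableAt]
  simp

lemma pderivE_mul {F G : PS d → ℝ} (hF : ContDiff ℝ (⊤ : ℕ∞) F) (hG : ContDiff ℝ (⊤ : ℕ∞) G)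
    (i : Fin d) (p : PS d) :
    pderivE d i (fun q => F q * G q) p
      = pderivE d i F p * G p + F p * pderivE d i G p := by
  have hF' := slice_hasFDerivAt ((hF.differentiable (by simp)) p)
  have hG' := slice_hasFDerivAt ((hG.differentiable (by simp)) p)
  simp only [pderivE]
  rw [fderiv_fun_mul hF'.differentiableAt hG'.differentiableAt]
  simp
  ring

lemma contDiff_listProd : ∀ (l : List (PS d → ℝ)), (∀ f ∈ l, ContDiff ℝ (⊤ : ℕ∞) f) →
    ContDiff ℝ (⊤ : ℕ∞) (fun q => (l.map (· q)).prod)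
  | [], _ => by simpa using contDiff_const
  | f :: l, h => by
      simp only [List.map_cons, List.prod_cons]
      exact (h f (by simp)).mul (contDiff_listProd l (fun g hg => h g (by simp [hg])))

lemma contDiff_listSum : ∀ (l : List (PS d → ℝ)), (∀ f ∈ l, ContDiff ℝ (⊤ : ℕ∞) f) →
    ContDiff ℝ (⊤ : ℕ∞) (fun q => (l.map (· q)).sum)
  | [], _ => by simpa using contDiff_const
  | f :: l, h => by
      simp only [List.map_cons, List.sum_cons]
      exact (h f (by simp)).add (contDiff_listSum l (fun g hg => h g (by simp [hg])))

lemma pderivE_listSum (i : Fin d) :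
    ∀ (l : List (PS d → ℝ)), (∀ f ∈ l, ContDiff ℝ (⊤ : ℕ∞) f) → ∀ p,
    pderivE d i (fun q => (l.map (· q)).sum) p = (l.map (fun f => pderivE d i f p)).sum
  | [], _, p => by
      simp only [List.map_nil, List.sum_nil]
      exact pderivE_const i 0 p
  | f :: l, h, p => by
      simp only [List.map_cons, List.sum_cons]
      rw [pderivE_add (h f (by simp)) (contDiff_listSum l (fun g hg => h g (by simp [hg]))) i p,
        pderivE_listSum i l (fun g hg => h g (by simp [hg])) p]

lemma pderivE_listProd (i : Fin d) :
    ∀ (l : List (PS d → ℝ)), (∀ f ∈ l, ContDiff ℝ (⊤ : ℕ∞) f) → ∀ p,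
    pderivE d i (fun q => (l.map (· q)).prod) p
      = ((List.range l.length).map
          (fun j => ((l.set j (pderivE d i (l.getD j 0))).map (· p)).prod)).sum
  | [], _, p => by
      simp only [List.map_nil, List.prod_nil, List.length_nil, List.range_zero,
        List.sum_nil]
      exact pderivE_const i 1 p
  | f :: l, h, p => by
      have hf := h f (by simp)
      have hl : ∀ g ∈ l, ContDiff ℝ (⊤ : ℕ∞) g := fun g hg => h g (by simp [hg])
      simp only [List.map_cons, List.prod_cons]
      rw [pderivE_mul hf (contDiff_listProd l hl) i p, pderivE_listProd i l hl p]
      simp only [List.length_cons, List.range_succ_eq_map, List.map_cons, List.sum_cons,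
        List.map_map]
      congr 1
      rw [← List.sum_map_mul_left]
      refine congrArg List.sum (List.map_congr_left fun j hj => ?_)
      simp [Function.comp]

/-- basis vectors of the target space indexed by `Fin m ⊕ Fin n` -/
noncomputable def eW (m n : ℕ) : Fin m ⊕ Fin n → WS m n :=
  Sum.elim (fun i => (Pi.single i 1, 0)) (fun j => (0, Pi.single j 1))

lemma decompW (v : WS m n) : v = ∑ k : Fin m ⊕ Fin n, Sum.elim v.1 v.2 k • eW m n k := by
  rw [Fintype.sum_sum_type]
  refine Prod.ext ?_ ?_ <;>
    simp [eW, Prod.fst_sum, Prod.snd_sum, ← Pi.single_smul, Finset.univ_sum_single]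

lemma clm_eval (Φ : WS m n →L[ℝ] ℝ) (v : WS m n) :
    Φ v = ∑ k : Fin m ⊕ Fin n, Sum.elim v.1 v.2 k * Φ (eW m n k) := by
  conv_lhs => rw [decompW v]
  rw [map_sum]
  simp [smul_eq_mul]

/-- iterated partial derivatives on the target space -/
noncomputable def pdsW : List (Fin m ⊕ Fin n) → (WS m n → ℝ) → WS m n → ℝ
  | [], H => H
  | k :: β, H => fun w => fderiv ℝ (pdsW β H) w (eW m n k)

lemma contDiffOn_pdsW {U : Set (WS m n)} (hU : IsOpen U) {H : WS m n → ℝ}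
    (hH : ContDiffOn ℝ (⊤ : ℕ∞) H U) :
    ∀ β : List (Fin m ⊕ Fin n), ContDiffOn ℝ (⊤ : ℕ∞) (pdsW β H) U
  | [] => hH
  | k :: β => ((contDiffOn_pdsW hU hH β).fderiv_of_isOpen hU (by simp)).clm_apply
      contDiffOn_const

section Comp
variable (F₁ : Fin m → PS d → ℝ) (F₂ : Fin n → PS d → ℝ)

/-- the combined map into the target space -/
def Fm : PS d → WS m n := fun p => (fun i => F₁ i p, fun j => F₂ j p)

/-- scalar components -/
def Fc : Fin m ⊕ Fin n → PS d → ℝ := Sum.elim F₁ F₂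

variable {F₁ F₂}

lemma contDiff_Fc (hF₁ : ∀ i, ContDiff ℝ (⊤ : ℕ∞) (F₁ i)) (hF₂ : ∀ j, ContDiff ℝ (⊤ : ℕ∞) (F₂ j))
    (k : Fin m ⊕ Fin n) : ContDiff ℝ (⊤ : ℕ∞) (Fc F₁ F₂ k) := by
  cases k with
  | inl i => exact hF₁ i
  | inr j => exact hF₂ j

lemma contDiff_Fm (hF₁ : ∀ i, ContDiff ℝ (⊤ : ℕ∞) (F₁ i)) (hF₂ : ∀ j, ContDiff ℝ (⊤ : ℕ∞) (F₂ j)) :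
    ContDiff ℝ (⊤ : ℕ∞) (Fm F₁ F₂) :=
  (contDiff_pi.2 hF₁).prodMk (contDiff_pi.2 hF₂)

lemma Fm_hasFDerivAt (hF₁ : ∀ i, ContDiff ℝ (⊤ : ℕ∞) (F₁ i)) (hF₂ : ∀ j, ContDiff ℝ (⊤ : ℕ∞) (F₂ j))
    (p : PS d) :
    HasFDerivAt (Fm F₁ F₂)
      ((ContinuousLinearMap.pi fun i => fderiv ℝ (F₁ i) p).prod
        (ContinuousLinearMap.pi fun j => fderiv ℝ (F₂ j) p)) p := by
  refine HasFDerivAt.prodMk ?_ ?_ <;> rw [hasFDerivAt_pi]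
  · exact fun i => (((hF₁ i).differentiable (by simp)) p).hasFDerivAt
  · exact fun j => (((hF₂ j).differentiable (by simp)) p).hasFDerivAt

lemma fderiv_comp_apply {U : Set (WS m n)} (hU : IsOpen U) {H : WS m n → ℝ}
    (hH : ContDiffOn ℝ (⊤ : ℕ∞) H U) (hmem : ∀ p : PS d, Fm F₁ F₂ p ∈ U)
    (hF₁ : ∀ i, ContDiff ℝ (⊤ : ℕ∞) (F₁ i)) (hF₂ : ∀ j, ContDiff ℝ (⊤ : ℕ∞) (F₂ j))
    (p : PS d) (v : PS d) :
    fderiv ℝ (fun q => H (Fm F₁ F₂ q)) p v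
      = ∑ k : Fin m ⊕ Fin n,
          fderiv ℝ (Fc F₁ F₂ k) p v * fderiv ℝ H (Fm F₁ F₂ p) (eW m n k) := by
  have hHd : DifferentiableAt ℝ H (Fm F₁ F₂ p) :=
    (hH.contDiffAt (hU.mem_nhds (hmem p))).differentiableAt (by simp)
  have hD := Fm_hasFDerivAt hF₁ hF₂ (p := p)
  have hcomp : HasFDerivAt (fun q => H (Fm F₁ F₂ q))
      ((fderiv ℝ H (Fm F₁ F₂ p)).comp _) p := hHd.hasFDerivAt.comp p hD
  rw [hcomp.fderiv, ContinuousLinearMap.comp_apply, clm_eval]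
  refine Finset.sum_congr rfl fun k _ => ?_
  congr 1
  cases k with
  | inl i =>
      have : Fc F₁ F₂ (Sum.inl i) = F₁ i := rfl
      rw [this]
      simp [ContinuousLinearMap.pi_apply]
  | inr j =>
      have : Fc F₁ F₂ (Sum.inr j) = F₂ j := rfl
      rw [this]
      simp [ContinuousLinearMap.pi_apply]

lemma diff_comp {U : Set (WS m n)} (hU : IsOpen U) {H : WS m n → ℝ}
    (hH : ContDiffOn ℝ (⊤ : ℕ∞) H U) (hmem : ∀ p : PS d, Fm F₁ F₂ p ∈ U)
    (hF₁ : ∀ i, ContDiff ℝ (⊤ : ℕ∞) (F₁ i)) (hF₂ : ∀ j, ContDiff ℝ (⊤ : ℕ∞) (F₂ j)) :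
    Differentiable ℝ (fun q => H (Fm F₁ F₂ q)) := fun p =>
  ((hH.contDiffAt (hU.mem_nhds (hmem p))).differentiableAt (by simp)).comp p
    (((contDiff_Fm hF₁ hF₂).differentiable (by simp)) p)

lemma pderivE_comp {U : Set (WS m n)} (hU : IsOpen U) {H : WS m n → ℝ}
    (hH : ContDiffOn ℝ (⊤ : ℕ∞) H U) (hmem : ∀ p : PS d, Fm F₁ F₂ p ∈ U)
    (hF₁ : ∀ i, ContDiff ℝ (⊤ : ℕ∞) (F₁ i)) (hF₂ : ∀ j, ContDiff ℝ (⊤ : ℕ∞) (F₂ j))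
    (i : Fin d) (p : PS d) :
    pderivE d i (fun q => H (Fm F₁ F₂ q)) p
      = ∑ k : Fin m ⊕ Fin n,
          pderivE d i (Fc F₁ F₂ k) p * fderiv ℝ H (Fm F₁ F₂ p) (eW m n k) := by
  rw [pderivE_eq_fderiv (diff_comp hU hH hmem hF₁ hF₂ p) i,
    fderiv_comp_apply hU hH hmem hF₁ hF₂ p _]
  refine Finset.sum_congr rfl fun k _ => ?_
  rw [pderivE_eq_fderiv (((contDiff_Fc hF₁ hF₂ k).differentiable (by simp)) p) i]

lemma advE_comp {u : PS d → EuclideanSpace ℝ (Fin d)}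
    {U : Set (WS m n)} (hU : IsOpen U) {H : WS m n → ℝ}
    (hH : ContDiffOn ℝ (⊤ : ℕ∞) H U) (hmem : ∀ p : PS d, Fm F₁ F₂ p ∈ U)
    (hF₁ : ∀ i, ContDiff ℝ (⊤ : ℕ∞) (F₁ i)) (hF₂ : ∀ j, ContDiff ℝ (⊤ : ℕ∞) (F₂ j))
    (p : PS d) :
    advE d u (fun q => H (Fm F₁ F₂ q)) p
      = ∑ k : Fin m ⊕ Fin n,
          advE d u (Fc F₁ F₂ k) p * fderiv ℝ H (Fm F₁ F₂ p) (eW m n k) := by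
  rw [advE_eq (diff_comp hU hH hmem hF₁ hF₂)]
  simp only
  rw [fderiv_comp_apply hU hH hmem hF₁ hF₂ p _]
  have hj : ∀ j : Fin d, u p j * fderiv ℝ (fun q => H (Fm F₁ F₂ q)) p
      (0, EuclideanSpace.single j 1)
      = ∑ k : Fin m ⊕ Fin n, u p j * (fderiv ℝ (Fc F₁ F₂ k) p
          (0, EuclideanSpace.single j 1) * fderiv ℝ H (Fm F₁ F₂ p) (eW m n k)) := by
    intro j
    rw [fderiv_comp_apply hU hH hmem hF₁ hF₂ p _, Finset.mul_sum]
  rw [Finset.sum_congr rfl (fun j _ => hj j), Finset.sum_comm,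
    ← Finset.sum_add_distrib]
  refine Finset.sum_congr rfl fun k _ => ?_
  rw [advE_eq ((contDiff_Fc hF₁ hF₂ k).differentiable (by simp))]
  simp only
  ring_nf
  rw [Finset.mul_sum]
  congr 1
  exact Finset.sum_congr rfl fun j _ => by ring

end Comp

/-! ### Terms -/

def rOf (c : (Fin m ⊕ Fin n) × List (Fin d) × Bool) : ℕ := cond c.2.2 1 0

noncomputable def pieceFun (u : PS d → EuclideanSpace ℝ (Fin d))
    (F₁ : Fin m → PS d → ℝ) (F₂ : Fin n → PS d → ℝ)
    (c : (Fin m ⊕ Fin n) × List (Fin d) × Bool) : PS d → ℝ :=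
  nablaE d c.2.1 ((advE d u)^[rOf c] (Fc F₁ F₂ c.1))

noncomputable def termFun (u : PS d → EuclideanSpace ℝ (Fin d))
    (F₁ : Fin m → PS d → ℝ) (F₂ : Fin n → PS d → ℝ) (H : WS m n → ℝ)
    (t : List (Fin m ⊕ Fin n) × List ((Fin m ⊕ Fin n) × List (Fin d) × Bool)) :
    PS d → ℝ :=
  fun p => pdsW t.1 H (Fm F₁ F₂ p) * (t.2.map (fun c => pieceFun u F₁ F₂ c p)).prod

def extP (i : Fin d) (c : (Fin m ⊕ Fin n) × List (Fin d) × Bool) :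
    (Fin m ⊕ Fin n) × List (Fin d) × Bool := (c.1, i :: c.2.1, c.2.2)

section Main
variable {u : PS d → EuclideanSpace ℝ (Fin d)}
    {F₁ : Fin m → PS d → ℝ} {F₂ : Fin n → PS d → ℝ}
    {U : Set (WS m n)} {H : WS m n → ℝ}

lemma contDiff_pieceFun (hu : ContDiff ℝ (⊤ : ℕ∞) u) (hF₁ : ∀ i, ContDiff ℝ (⊤ : ℕ∞) (F₁ i))
    (hF₂ : ∀ j, ContDiff ℝ (⊤ : ℕ∞) (F₂ j)) (c : (Fin m ⊕ Fin n) × List (Fin d) × Bool) :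
    ContDiff ℝ (⊤ : ℕ∞) (pieceFun u F₁ F₂ c) :=
  contDiff_nablaE (contDiff_advE_iter hu (contDiff_Fc hF₁ hF₂ c.1) _) _

lemma contDiff_pdsW_comp (hU : IsOpen U) (hH : ContDiffOn ℝ (⊤ : ℕ∞) H U)
    (hmem : ∀ p : PS d, Fm F₁ F₂ p ∈ U)
    (hF₁ : ∀ i, ContDiff ℝ (⊤ : ℕ∞) (F₁ i)) (hF₂ : ∀ j, ContDiff ℝ (⊤ : ℕ∞) (F₂ j))
    (β : List (Fin m ⊕ Fin n)) :
    ContDiff ℝ (⊤ : ℕ∞) (fun q => pdsW β H (Fm F₁ F₂ q)) := by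
  rw [← contDiffOn_univ]
  exact ContDiffOn.comp (contDiffOn_pdsW hU hH β)
    ((contDiff_Fm hF₁ hF₂).contDiffOn) (fun p _ => hmem p)

lemma contDiff_termFun (hu : ContDiff ℝ (⊤ : ℕ∞) u) (hU : IsOpen U) (hH : ContDiffOn ℝ (⊤ : ℕ∞) H U)
    (hmem : ∀ p : PS d, Fm F₁ F₂ p ∈ U)
    (hF₁ : ∀ i, ContDiff ℝ (⊤ : ℕ∞) (F₁ i)) (hF₂ : ∀ j, ContDiff ℝ (⊤ : ℕ∞) (F₂ j))
    (t : List (Fin m ⊕ Fin n) × List ((Fin m ⊕ Fin n) × List (Fin d) × Bool)) :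
    ContDiff ℝ (⊤ : ℕ∞) (termFun u F₁ F₂ H t) := by
  have h2 : ContDiff ℝ (⊤ : ℕ∞) (fun q => ((t.2.map (pieceFun u F₁ F₂)).map (· q)).prod) :=
    contDiff_listProd _ (by
      intro f hf
      rw [List.mem_map] at hf
      obtain ⟨c, _, rfl⟩ := hf
      exact contDiff_pieceFun hu hF₁ hF₂ c)
  have h2' : ContDiff ℝ (⊤ : ℕ∞) (fun q => (t.2.map (fun c => pieceFun u F₁ F₂ c q)).prod) := by
    simpa [List.map_map, Function.comp_def] using h2
  exact (contDiff_pdsW_comp hU hH hmem hF₁ hF₂ t.1).mul h2'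

/-- one spatial derivative of a term -/
lemma pderivE_termFun (k₀ : Fin m ⊕ Fin n)
    (hu : ContDiff ℝ (⊤ : ℕ∞) u) (hU : IsOpen U) (hH : ContDiffOn ℝ (⊤ : ℕ∞) H U)
    (hmem : ∀ p : PS d, Fm F₁ F₂ p ∈ U)
    (hF₁ : ∀ i, ContDiff ℝ (⊤ : ℕ∞) (F₁ i)) (hF₂ : ∀ j, ContDiff ℝ (⊤ : ℕ∞) (F₂ j))
    (i : Fin d)
    (t : List (Fin m ⊕ Fin n) × List ((Fin m ⊕ Fin n) × List (Fin d) × Bool))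
    (p : PS d) :
    pderivE d i (termFun u F₁ F₂ H t) p
      = (((Finset.univ : Finset (Fin m ⊕ Fin n)).toList.map
            (fun k => termFun u F₁ F₂ H (k :: t.1, (k, [i], false) :: t.2) p)).sum
        + ((List.range t.2.length).map
            (fun j => termFun u F₁ F₂ H
              (t.1, t.2.set j (extP i (t.2.getD j (k₀, [], false)))) p)).sum) := by
  have hg : ContDiff ℝ (⊤ : ℕ∞) (fun q => pdsW t.1 H (Fm F₁ F₂ q)) :=
    contDiff_pdsW_comp hU hH hmem hF₁ hF₂ t.1
  have hl : ∀ f ∈ t.2.map (pieceFun u F₁ F₂), ContDiff ℝ (⊤ : ℕ∞) f := by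
    intro f hf
    rw [List.mem_map] at hf
    obtain ⟨c, _, rfl⟩ := hf
    exact contDiff_pieceFun hu hF₁ hF₂ c
  have hP : ContDiff ℝ (⊤ : ℕ∞) (fun q => ((t.2.map (pieceFun u F₁ F₂)).map (· q)).prod) :=
    contDiff_listProd _ hl
  have hterm : termFun u F₁ F₂ H t
      = fun q => pdsW t.1 H (Fm F₁ F₂ q)
          * ((t.2.map (pieceFun u F₁ F₂)).map (· q)).prod := by
    funext q
    rw [List.map_map]
    rfl
  rw [hterm, pderivE_mul hg hP i p]
  congr 1
  · -- derivative hits the pdsW ∘ Fm factor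
    rw [pderivE_comp hU (contDiffOn_pdsW hU hH t.1) hmem hF₁ hF₂ i p,
      ← Finset.sum_map_toList, ← List.sum_map_mul_right]
    rw [List.map_map]
    refine congrArg List.sum (List.map_congr_left fun k _ => ?_)
    simp only [Function.comp, termFun, List.map_cons, List.prod_cons]
    have h1 : pdsW (k :: t.1) H (Fm F₁ F₂ p)
        = fderiv ℝ (pdsW t.1 H) (Fm F₁ F₂ p) (eW m n k) := rfl
    have h2 : pieceFun u F₁ F₂ (k, [i], false) p = pderivE d i (Fc F₁ F₂ k) p := rfl
    rw [h1, h2]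
    have h3 : List.map ((fun x => x p) ∘ pieceFun u F₁ F₂) t.2
        = List.map (fun c => pieceFun u F₁ F₂ c p) t.2 := rfl
    rw [h3]
    ring
  · -- derivative hits one of the pieces
    rw [pderivE_listProd i _ hl p, ← List.sum_map_mul_left, List.length_map]
    refine congrArg List.sum (List.map_congr_left fun j hj => ?_)
    rw [List.mem_range] at hj
    have hgetD : (t.2.map (pieceFun u F₁ F₂)).getD j 0
        = pieceFun u F₁ F₂ (t.2.getD j (k₀, [], false)) := by
      rw [List.getD_eq_getElem _ _ (by simpa using hj), List.getD_eq_getElem _ _ hj,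
        List.getElem_map]
    have hset : (t.2.map (pieceFun u F₁ F₂)).set j
          (pderivE d i ((t.2.map (pieceFun u F₁ F₂)).getD j 0))
        = (t.2.set j (extP i (t.2.getD j (k₀, [], false)))).map (pieceFun u F₁ F₂) := by
      rw [hgetD, List.map_set]
      rfl
    rw [hset]
    simp only [termFun, List.map_map]
    rfl

end Main


section Helpers

lemma sum_map_add' {α : Type*} (f g : α → ℕ) :
    ∀ l : List α, (l.map (fun c => f c + g c)).sum = (l.map f).sum + (l.map g).sum
  | [] => rfl
  | c :: l => by simp [sum_map_add' f g l]; omega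

lemma length_le_sum_map {α : Type*} (f : α → ℕ) :
    ∀ l : List α, (∀ c ∈ l, 1 ≤ f c) → l.length ≤ (l.map f).sum
  | [], _ => le_refl 0
  | c :: l, h => by
      simp only [List.length_cons, List.map_cons, List.sum_cons]
      have := length_le_sum_map f l (fun x hx => h x (by simp [hx]))
      have := h c (by simp)
      omega

lemma sum_map_set' {α : Type*} (f : α → ℕ) (c₀ : α) :
    ∀ (l : List α) (j : ℕ) (x : α), j < l.length →
      ((l.set j x).map f).sum + f (l.getD j c₀) = (l.map f).sum + f x
  | [], j, x, h => by simp at h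
  | c :: l, 0, x, h => by simp; omega
  | c :: l, j + 1, x, h => by
      simp only [List.set_cons_succ, List.map_cons, List.sum_cons, List.getD_cons_succ]
      have := sum_map_set' f c₀ l j x (by simpa using h)
      omega

lemma sum_map_flatMap' {α β : Type*} (f : β → ℝ) (g : α → List β) :
    ∀ l : List α,
      ((l.flatMap g).map f).sum = (l.map (fun x => ((g x).map f).sum)).sum
  | [] => rfl
  | x :: l => by
      simp only [List.flatMap_cons, List.map_append, List.sum_append, List.map_cons,
        List.sum_cons, sum_map_flatMap' f g l]

lemma abs_list_sum_le : ∀ l : List ℝ, |l.sum| ≤ (l.map (fun x => |x|)).sum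
  | [] => by simp
  | x :: l => by
      simp only [List.sum_cons, List.map_cons]
      exact (abs_add_le _ _).trans (by gcongr; exact abs_list_sum_le l)

end Helpers

section Main2
variable {u : PS d → EuclideanSpace ℝ (Fin d)}
    {F₁ : Fin m → PS d → ℝ} {F₂ : Fin n → PS d → ℝ}
    {U : Set (WS m n)} {H : WS m n → ℝ}

/-- step data: all terms produced by one spatial derivative of a term -/
noncomputable def stepT (k₀ : Fin m ⊕ Fin n) (i : Fin d)
    (t : List (Fin m ⊕ Fin n) × List ((Fin m ⊕ Fin n) × List (Fin d) × Bool)) :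
    List (List (Fin m ⊕ Fin n) × List ((Fin m ⊕ Fin n) × List (Fin d) × Bool)) :=
  ((Finset.univ : Finset (Fin m ⊕ Fin n)).toList.map
      (fun k => (k :: t.1, (k, [i], false) :: t.2)))
    ++ ((List.range t.2.length).map
      (fun j => (t.1, t.2.set j (extP i (t.2.getD j (k₀, [], false))))))

lemma represent (k₀ : Fin m ⊕ Fin n)
    (hu : ContDiff ℝ (⊤ : ℕ∞) u) (hU : IsOpen U) (hH : ContDiffOn ℝ (⊤ : ℕ∞) H U)
    (hmem : ∀ p : PS d, Fm F₁ F₂ p ∈ U)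
    (hF₁ : ∀ i, ContDiff ℝ (⊤ : ℕ∞) (F₁ i)) (hF₂ : ∀ j, ContDiff ℝ (⊤ : ℕ∞) (F₂ j)) :
    ∀ (a : List (Fin d)) (r : ℕ), r ≤ 1 →
    ∃ T : List (List (Fin m ⊕ Fin n) × List ((Fin m ⊕ Fin n) × List (Fin d) × Bool)),
      (∀ p, nablaE d a ((advE d u)^[r] (fun q => H (Fm F₁ F₂ q))) p
          = (T.map (fun t => termFun u F₁ F₂ H t p)).sum)
      ∧ (∀ t ∈ T, t.1.length = t.2.length
          ∧ (t.2.map (fun c => c.2.1.length)).sum = a.length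
          ∧ (t.2.map rOf).sum = r
          ∧ ∀ c ∈ t.2, 1 ≤ c.2.1.length + rOf c)
      ∧ T.length ≤ (m + n + a.length + r) ^ (a.length + r) := by
  intro a
  induction a with
  | nil =>
      rintro (_ | (_ | r)) hr
      · -- r = 0
        refine ⟨[([], [])], fun p => ?_, ?_, by simp⟩
        · simp [nablaE, termFun, pdsW, Function.iterate_zero]
        · rintro t ht
          simp only [List.mem_singleton] at ht
          subst ht
          simp [rOf]
      · -- r = 1
        refine ⟨(Finset.univ : Finset (Fin m ⊕ Fin n)).toList.map
            (fun k => ([k], [(k, [], true)])), fun p => ?_, ?_, ?_⟩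
        · have h1 : nablaE d [] ((advE d u)^[1] (fun q => H (Fm F₁ F₂ q))) p
              = advE d u (fun q => H (Fm F₁ F₂ q)) p := by
            rw [Function.iterate_one]; rfl
          rw [h1, advE_comp hU hH hmem hF₁ hF₂ p, ← Finset.sum_map_toList, List.map_map]
          refine congrArg List.sum (List.map_congr_left fun k _ => ?_)
          have h2 : termFun u F₁ F₂ H ([k], [(k, [], true)]) p
              = pdsW [k] H (Fm F₁ F₂ p) * (pieceFun u F₁ F₂ (k, [], true) p * 1) := rfl
          have h3 : pieceFun u F₁ F₂ (k, [], true) p = advE d u (Fc F₁ F₂ k) p := by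
            simp [pieceFun, rOf, nablaE, Function.iterate_one]
          have h4 : pdsW [k] H (Fm F₁ F₂ p)
              = fderiv ℝ H (Fm F₁ F₂ p) (eW m n k) := rfl
          simp only [Function.comp_apply, h2, h3, h4]
          ring
        · rintro t ht
          simp only [List.mem_map] at ht
          obtain ⟨k, _, rfl⟩ := ht
          simp [rOf]
        · simp [Finset.length_toList]
      · omega
  | cons i a' ih =>
      rintro r hr
      obtain ⟨T, hTe, hTinv, hTlen⟩ := ih r hr
      refine ⟨T.flatMap (stepT k₀ i), fun p => ?_, ?_, ?_⟩
      · -- the identity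
        have h1 : nablaE d (i :: a') ((advE d u)^[r] (fun q => H (Fm F₁ F₂ q)))
            = pderivE d i (nablaE d a' ((advE d u)^[r] (fun q => H (Fm F₁ F₂ q)))) := rfl
        have h2 : nablaE d a' ((advE d u)^[r] (fun q => H (Fm F₁ F₂ q)))
            = fun q => ((T.map (termFun u F₁ F₂ H)).map (· q)).sum := by
          funext q
          rw [List.map_map]
          exact hTe q
        have hsm : ∀ f ∈ T.map (termFun u F₁ F₂ H), ContDiff ℝ (⊤ : ℕ∞) f := by
          intro f hf
          rw [List.mem_map] at hf
          obtain ⟨t, _, rfl⟩ := hf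
          exact contDiff_termFun hu hU hH hmem hF₁ hF₂ t
        rw [h1, h2, pderivE_listSum i _ hsm p, List.map_map, sum_map_flatMap']
        refine congrArg List.sum (List.map_congr_left fun t _ => ?_)
        have h5 := pderivE_termFun k₀ hu hU hH hmem hF₁ hF₂ i t p
        simp only [Function.comp_apply]
        rw [h5, stepT, List.map_append, List.sum_append, List.map_map, List.map_map]
        rfl
      · -- invariants
        rintro t' ht'
        rw [List.mem_flatMap] at ht'
        obtain ⟨t, htT, hstep⟩ := ht'
        obtain ⟨hlen, hq, hrs, hpc⟩ := hTinv t htT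
        rw [stepT, List.mem_append] at hstep
        rcases hstep with hstep | hstep
        · rw [List.mem_map] at hstep
          obtain ⟨k, _, rfl⟩ := hstep
          refine ⟨by simp [hlen], by simp [hq, Nat.add_comm], by simpa [rOf] using hrs, ?_⟩
          rintro c hc
          rcases List.mem_cons.1 hc with rfl | hc
          · simp [rOf]
          · exact hpc c hc
        · rw [List.mem_map] at hstep
          obtain ⟨j, hj, rfl⟩ := hstep
          rw [List.mem_range] at hj
          have hq' := sum_map_set' (fun c => c.2.1.length) (k₀, [], false) t.2 j
            (extP i (t.2.getD j (k₀, [], false))) hj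
          have hr' := sum_map_set' rOf (k₀, [], false) t.2 j
            (extP i (t.2.getD j (k₀, [], false))) hj
          have hre : rOf (extP i (t.2.getD j (k₀, [], false)))
              = rOf (t.2.getD j (k₀, [], false)) := rfl
          have hqe : (extP i (t.2.getD j (k₀, [], false))).2.1.length
              = (t.2.getD j (k₀, [], false)).2.1.length + 1 := by simp [extP]
          beta_reduce at hq' hr'
          rw [hqe, hq] at hq'
          rw [hre, hrs] at hr'
          refine ⟨by simp [hlen], ?_, ?_, ?_⟩
          · show (List.map (fun c => c.2.1.length)
                (t.2.set j (extP i (t.2.getD j (k₀, [], false))))).sum = (i :: a').length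
            beta_reduce
            simp only [List.length_cons]
            omega
          · show (List.map rOf (t.2.set j (extP i (t.2.getD j (k₀, [], false))))).sum = r
            omega
          rintro c hc
          rcases List.mem_or_eq_of_mem_set hc with hc | rfl
          · exact hpc c hc
          · refine le_trans (by omega) (Nat.le_add_right _ _)
      · -- length bound
        rw [List.length_flatMap]
        have hsteplen : ∀ t ∈ T, (stepT k₀ i t).length ≤ m + n + a'.length + r := by
          intro t htT
          obtain ⟨hlen, hq, hrs, hpc⟩ := hTinv t htT
          have h6 : t.2.length ≤ a'.length + r := by
            have h7 := length_le_sum_map (fun c => c.2.1.length + rOf c) t.2 hpc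
            rw [sum_map_add'] at h7
            omega
          have hcard : (Finset.univ : Finset (Fin m ⊕ Fin n)).card = m + n := by
            simp
          simp only [stepT, List.length_append, List.length_map, Finset.length_toList,
            List.length_range, hcard]
          omega
        have h8 : ((T.map (fun t => (stepT k₀ i t).length)).sum)
            ≤ T.length * (m + n + a'.length + r) := by
          have := List.sum_le_card_nsmul (T.map (fun t => (stepT k₀ i t).length))
            (m + n + a'.length + r) (by
              intro x hx
              rw [List.mem_map] at hx
              obtain ⟨t, htT, rfl⟩ := hx
              exact hsteplen t htT)
          simpa [smul_eq_mul] using this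
        calc (T.map (fun t => (stepT k₀ i t).length)).sum
            ≤ T.length * (m + n + a'.length + r) := h8
          _ ≤ (m + n + a'.length + r) ^ (a'.length + r) * (m + n + a'.length + r) :=
              Nat.mul_le_mul_right _ hTlen
          _ = (m + n + a'.length + r) ^ (a'.length + r + 1) := by rw [pow_succ]
          _ ≤ (m + n + (i :: a').length + r) ^ ((i :: a').length + r) := by
              simp only [List.length_cons]
              have : a'.length + r + 1 = a'.length + 1 + r := by omega
              rw [this]
              exact Nat.pow_le_pow_left (by omega) _
      
end Main2


/-! ### Bounds -/

lemma max_add_le_max {x y L : ℝ} (hx : 0 ≤ x) (hy : 0 ≤ y) (hL : 1 ≤ L) :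
    max (x + 1 - L) 0 + max (y + 1 - L) 0 ≤ max (x + y + 1 - L) 0 := by
  rcases le_total (x + 1 - L) 0 with h1 | h1
  · rw [max_eq_right h1, zero_add]
    exact max_le_max (by linarith) le_rfl
  · rcases le_total (y + 1 - L) 0 with h2 | h2
    · rw [max_eq_right h2, add_zero]
      exact max_le_max (by linarith) le_rfl
    · rw [max_eq_left h1, max_eq_left h2]
      exact le_trans (by linarith) (le_max_left _ _)

lemma sum_exp_le {L : ℝ} (hL : 1 ≤ L) :
    ∀ qs : List ℕ,
      (qs.map (fun q : ℕ => max ((q : ℝ) + 1 - L) 0)).sum ≤ max ((qs.sum : ℝ) + 1 - L) 0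
  | [] => by simp
  | q :: qs => by
      simp only [List.map_cons, List.sum_cons]
      calc max ((q:ℝ) + 1 - L) 0 + (qs.map (fun q : ℕ => max ((q:ℝ) + 1 - L) 0)).sum
          ≤ max ((q:ℝ) + 1 - L) 0 + max ((qs.sum : ℝ) + 1 - L) 0 := by
            have := sum_exp_le hL qs
            linarith
        _ ≤ max ((q:ℝ) + (qs.sum:ℝ) + 1 - L) 0 :=
            max_add_le_max (by positivity) (by positivity) hL
        _ = max (((q + qs.sum : ℕ) : ℝ) + 1 - L) 0 := by
            congr 1
            push_cast
            ring

lemma elem_le_sum : ∀ (l : List ℕ) (x : ℕ), x ∈ l → x ≤ l.sum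
  | c :: l, x, h => by
      rcases List.mem_cons.1 h with rfl | h
      · simp
      · have := elem_le_sum l x h
        simp only [List.sum_cons]
        omega

section Bound
variable {u : PS d → EuclideanSpace ℝ (Fin d)}
    {F₁ : Fin m → PS d → ℝ} {F₂ : Fin n → PS d → ℝ}

lemma prod_pieces_bound (M R L : ℕ) (Nh Ξ E : ℝ)
    (hNh : 1 ≤ Nh) (hΞ : 1 ≤ Ξ) (hE : 0 < E) (hR : R ≤ 1) (hL : 1 ≤ L)
    (hyp1 : ∀ (i : Fin m) (r : ℕ) (a : List (Fin d)), r ≤ R → a.length + r ≤ M →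
          ∀ (t : ℝ) (x : EuclideanSpace ℝ (Fin d)),
            |nablaE d a ((advE d u)^[r] (F₁ i)) (t, x)| ≤
              Nh ^ (max ((a.length : ℝ) + (r : ℝ) - (L : ℝ)) 0) * Ξ ^ a.length *
                (Ξ * E) ^ r)
    (hyp2 : ∀ (i : Fin n) (r : ℕ) (a : List (Fin d)), r ≤ R → a.length + r ≤ M →
          ∀ (t : ℝ) (x : EuclideanSpace ℝ (Fin d)),
            |nablaE d a ((advE d u)^[r] (F₂ i)) (t, x)| ≤
              Nh ^ (max ((a.length : ℝ) + 1 - (L : ℝ)) 0) * Ξ ^ a.length *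
                (Ξ * E) ^ r)
    (p : PS d) :
    ∀ ps : List ((Fin m ⊕ Fin n) × List (Fin d) × Bool),
      (∀ c ∈ ps, c.2.1.length + rOf c ≤ M ∧ rOf c ≤ R) →
      |(ps.map (fun c => pieceFun u F₁ F₂ c p)).prod|
        ≤ Nh ^ ((ps.map (fun c => max ((c.2.1.length : ℝ) + 1 - (L:ℝ)) 0)).sum)
          * Ξ ^ ((ps.map (fun c => c.2.1.length)).sum)
          * (Ξ * E) ^ ((ps.map rOf).sum)
  | [], _ => by simp
  | c :: ps, h => by
      have hc := h c (by simp)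
      have hNh0 : (0:ℝ) < Nh := by linarith
      have hpiece : |pieceFun u F₁ F₂ c p|
          ≤ Nh ^ (max ((c.2.1.length : ℝ) + 1 - (L:ℝ)) 0) * Ξ ^ c.2.1.length
            * (Ξ * E) ^ (rOf c) := by
        cases hk : c.1 with
        | inl i =>
            have h1 := hyp1 i (rOf c) c.2.1 hc.2 hc.1 p.1 p.2
            have h2 : |pieceFun u F₁ F₂ c p|
                ≤ Nh ^ (max ((c.2.1.length : ℝ) + (rOf c : ℝ) - (L:ℝ)) 0)
                  * Ξ ^ c.2.1.length * (Ξ * E) ^ (rOf c) := by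
              simpa [pieceFun, Fc, hk] using h1
            refine h2.trans ?_
            have hexp : max ((c.2.1.length : ℝ) + (rOf c : ℝ) - (L:ℝ)) 0
                ≤ max ((c.2.1.length : ℝ) + 1 - (L:ℝ)) 0 := by
              have h3 : (rOf c : ℝ) ≤ 1 := by
                have := hc.2.trans hR
                exact_mod_cast this
              exact max_le_max (by linarith) le_rfl
            have h4 := Real.rpow_le_rpow_of_exponent_le hNh hexp
            have hrest : (0:ℝ) ≤ Ξ ^ c.2.1.length * (Ξ * E) ^ (rOf c) := by
              positivity
            calc Nh ^ (max ((c.2.1.length : ℝ) + (rOf c : ℝ) - (L:ℝ)) 0)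
                  * Ξ ^ c.2.1.length * (Ξ * E) ^ (rOf c)
                = Nh ^ (max ((c.2.1.length : ℝ) + (rOf c : ℝ) - (L:ℝ)) 0)
                  * (Ξ ^ c.2.1.length * (Ξ * E) ^ (rOf c)) := by ring
              _ ≤ Nh ^ (max ((c.2.1.length : ℝ) + 1 - (L:ℝ)) 0)
                  * (Ξ ^ c.2.1.length * (Ξ * E) ^ (rOf c)) :=
                  mul_le_mul_of_nonneg_right h4 hrest
              _ = Nh ^ (max ((c.2.1.length : ℝ) + 1 - (L:ℝ)) 0)
                  * Ξ ^ c.2.1.length * (Ξ * E) ^ (rOf c) := by ring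
        | inr j =>
            have h1 := hyp2 j (rOf c) c.2.1 hc.2 hc.1 p.1 p.2
            simpa [pieceFun, Fc, hk] using h1
      have hIH := prod_pieces_bound M R L Nh Ξ E hNh hΞ hE hR hL hyp1 hyp2 p ps
        (fun c hc => h c (by simp [hc]))
      simp only [List.map_cons, List.prod_cons, List.sum_cons]
      rw [abs_mul]
      have hb1 : (0:ℝ) ≤ |pieceFun u F₁ F₂ c p| := abs_nonneg _
      have hb2 : (0:ℝ) ≤ |(ps.map (fun c => pieceFun u F₁ F₂ c p)).prod| := abs_nonneg _
      calc |pieceFun u F₁ F₂ c p| * |(ps.map (fun c => pieceFun u F₁ F₂ c p)).prod|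
          ≤ (Nh ^ (max ((c.2.1.length : ℝ) + 1 - (L:ℝ)) 0) * Ξ ^ c.2.1.length
              * (Ξ * E) ^ (rOf c))
            * (Nh ^ ((ps.map (fun c => max ((c.2.1.length : ℝ) + 1 - (L:ℝ)) 0)).sum)
              * Ξ ^ ((ps.map (fun c => c.2.1.length)).sum)
              * (Ξ * E) ^ ((ps.map rOf).sum)) := by
            exact mul_le_mul hpiece hIH hb2 (by positivity)
        _ = Nh ^ (max ((c.2.1.length : ℝ) + 1 - (L:ℝ)) 0
              + (ps.map (fun c => max ((c.2.1.length : ℝ) + 1 - (L:ℝ)) 0)).sum)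
            * Ξ ^ (c.2.1.length + (ps.map (fun c => c.2.1.length)).sum)
            * (Ξ * E) ^ (rOf c + (ps.map rOf).sum) := by
            rw [Real.rpow_add (by linarith), pow_add, pow_add]
            ring

end Bound
end SWCR

/-- Chain rule for start-weighted norms of a composition `G(F₁, F₂)`, where `F₁` obeys
stress-type weighted bounds with exponent `(|a|+r-L)₊` and `F₂` obeys phase-gradient
type bounds with exponent `(|a|+1-L)₊`, and `G` is smooth on an open neighborhood of
the product `V₁ × V₂` of the compact ranges; the conclusion carries the exponent
`(|a|+1-L)₊`, with `C = C(d, m, n, M, G, V₁, V₂)`. -/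
theorem start_weighted_norm_chain_rule (d m n : ℕ) (hd : 1 ≤ d) (hm : 1 ≤ m) (hn : 1 ≤ n)
    (M : ℕ)
    (V₁ : Set (Fin m → ℝ)) (V₂ : Set (Fin n → ℝ)) (U : Set ((Fin m → ℝ) × (Fin n → ℝ)))
    (hV₁ : IsCompact V₁) (hV₂ : IsCompact V₂) (hU : IsOpen U) (hVU : V₁ ×ˢ V₂ ⊆ U)
    (G : (Fin m → ℝ) × (Fin n → ℝ) → ℝ) (hG : ContDiffOn ℝ (⊤ : ℕ∞) G U) :
    ∃ C : ℝ, 0 < C ∧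
      ∀ (R : ℕ), R ≤ 1 →
      ∀ (L : ℕ), 1 ≤ L →
      ∀ (Nh Ξ E : ℝ), 1 ≤ Nh → 1 ≤ Ξ → 0 < E →
      ∀ u : ℝ × EuclideanSpace ℝ (Fin d) → EuclideanSpace ℝ (Fin d),
        ContDiff ℝ (⊤ : ℕ∞) u →
      ∀ (F₁ : Fin m → (ℝ × EuclideanSpace ℝ (Fin d) → ℝ))
        (F₂ : Fin n → (ℝ × EuclideanSpace ℝ (Fin d) → ℝ)),
        (∀ i, ContDiff ℝ (⊤ : ℕ∞) (F₁ i)) → (∀ i, ContDiff ℝ (⊤ : ℕ∞) (F₂ i)) →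
        (∀ p, (fun i => F₁ i p) ∈ V₁) → (∀ p, (fun i => F₂ i p) ∈ V₂) →
        (∀ (i : Fin m) (r : ℕ) (a : List (Fin d)), r ≤ R → a.length + r ≤ M →
          ∀ (t : ℝ) (x : EuclideanSpace ℝ (Fin d)),
            |nablaE d a ((advE d u)^[r] (F₁ i)) (t, x)| ≤
              Nh ^ (max ((a.length : ℝ) + (r : ℝ) - (L : ℝ)) 0) * Ξ ^ a.length *
                (Ξ * E) ^ r) →
        (∀ (i : Fin n) (r : ℕ) (a : List (Fin d)), r ≤ R → a.length + r ≤ M →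
          ∀ (t : ℝ) (x : EuclideanSpace ℝ (Fin d)),
            |nablaE d a ((advE d u)^[r] (F₂ i)) (t, x)| ≤
              Nh ^ (max ((a.length : ℝ) + 1 - (L : ℝ)) 0) * Ξ ^ a.length *
                (Ξ * E) ^ r) →
      ∀ (r : ℕ) (a : List (Fin d)), r ≤ R → a.length + r ≤ M →
        ∀ (t : ℝ) (x : EuclideanSpace ℝ (Fin d)),
          |nablaE d a ((advE d u)^[r]
              (fun p => G ((fun i => F₁ i p), (fun i => F₂ i p)))) (t, x)| ≤
            C * Nh ^ (max ((a.length : ℝ) + 1 - (L : ℝ)) 0) * Ξ ^ a.length *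
              (Ξ * E) ^ r := by
  classical
  have hVc : IsCompact (V₁ ×ˢ V₂) := hV₁.prod hV₂
  have hbd : ∀ β : List (Fin m ⊕ Fin n),
      ∃ Cb : ℝ, ∀ w ∈ V₁ ×ˢ V₂, |SWCR.pdsW β G w| ≤ Cb := by
    intro β
    obtain ⟨Cb, hCb⟩ := hVc.exists_bound_of_continuousOn
      (((SWCR.contDiffOn_pdsW hU hG β).continuousOn).mono hVU)
    exact ⟨Cb, fun w hw => by simpa [Real.norm_eq_abs] using hCb w hw⟩
  choose g hg using hbd
  have hfin : {β : List (Fin m ⊕ Fin n) | β.length ≤ M}.Finite :=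
    List.finite_length_le _ M
  obtain ⟨b, hb⟩ := (hfin.image g).bddAbove
  set C0 : ℝ := max b 0 with hC0
  have hC0nn : 0 ≤ C0 := le_max_right _ _
  have hC0b : ∀ β : List (Fin m ⊕ Fin n), β.length ≤ M →
      ∀ w ∈ V₁ ×ˢ V₂, |SWCR.pdsW β G w| ≤ C0 := fun β hβ w hw =>
    (hg β w hw).trans (le_trans (hb (Set.mem_image_of_mem g hβ)) (le_max_left _ _))
  set K : ℕ := (m + n + M) ^ M with hK
  have hK1 : 1 ≤ K := Nat.one_le_pow _ _ (by omega)
  refine ⟨(K : ℝ) * (C0 + 1), by positivity, ?_⟩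
  intro R hR L hL Nh Ξ E hNh hΞ hE u hu F₁ F₂ hF₁ hF₂ hV₁mem hV₂mem hyp1 hyp2
    r a hrR haM τ x
  have hmem : ∀ q, SWCR.Fm F₁ F₂ q ∈ U := fun q => hVU ⟨hV₁mem q, hV₂mem q⟩
  have hmemV : ∀ q, SWCR.Fm F₁ F₂ q ∈ V₁ ×ˢ V₂ := fun q => ⟨hV₁mem q, hV₂mem q⟩
  obtain ⟨T, hTe, hTinv, hTlen⟩ := SWCR.represent (Sum.inl ⟨0, hm⟩) hu hU hG hmem
    hF₁ hF₂ a r (hrR.trans hR)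
  set p : SWCR.PS d := ((τ, x) : ℝ × EuclideanSpace ℝ (Fin d)) with hp
  have hgoal : nablaE d a ((advE d u)^[r]
      (fun q => G ((fun i => F₁ i q), (fun i => F₂ i q)))) p
      = (T.map (fun t' => SWCR.termFun u F₁ F₂ G t' p)).sum := hTe p
  rw [hgoal]
  set X : ℝ := Nh ^ (max ((a.length : ℝ) + 1 - (L:ℝ)) 0) * Ξ ^ a.length * (Ξ * E) ^ r
    with hX
  have hXnn : 0 ≤ X := by positivity
  have hterm : ∀ t' ∈ T, |SWCR.termFun u F₁ F₂ G t' p| ≤ C0 * X := by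
    intro t' ht'
    obtain ⟨hlen, hq, hrs, hpc⟩ := hTinv t' ht'
    have hsums : t'.2.length ≤ a.length + r := by
      have h7 := SWCR.length_le_sum_map (fun c => c.2.1.length + SWCR.rOf c) t'.2 hpc
      rw [SWCR.sum_map_add'] at h7
      omega
    have hβM : t'.1.length ≤ M := by omega
    have hA : |SWCR.pdsW t'.1 G (SWCR.Fm F₁ F₂ p)| ≤ C0 :=
      hC0b t'.1 hβM _ (hmemV p)
    have hpccond : ∀ c ∈ t'.2, c.2.1.length + SWCR.rOf c ≤ M ∧ SWCR.rOf c ≤ R := by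
      intro c hc
      constructor
      · have h1 : c.2.1.length ≤ (t'.2.map (fun c => c.2.1.length)).sum :=
          SWCR.elem_le_sum _ _ (List.mem_map_of_mem hc)
        have h2 : SWCR.rOf c ≤ (t'.2.map SWCR.rOf).sum :=
          SWCR.elem_le_sum _ _ (List.mem_map_of_mem hc)
        omega
      · have h2 : SWCR.rOf c ≤ (t'.2.map SWCR.rOf).sum :=
          SWCR.elem_le_sum _ _ (List.mem_map_of_mem hc)
        omega
    have hB := SWCR.prod_pieces_bound M R L Nh Ξ E hNh hΞ hE hR hL hyp1 hyp2 p
      t'.2 hpccond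
    have hBX : |(t'.2.map (fun c => SWCR.pieceFun u F₁ F₂ c p)).prod| ≤ X := by
      refine hB.trans ?_
      have hexp : ((t'.2.map (fun c => max ((c.2.1.length : ℝ) + 1 - (L:ℝ)) 0)).sum)
          ≤ max ((a.length : ℝ) + 1 - (L:ℝ)) 0 := by
        have h8 := SWCR.sum_exp_le (L := (L:ℝ)) (by exact_mod_cast hL)
          (t'.2.map (fun c => c.2.1.length))
        rw [List.map_map] at h8
        rw [hq] at h8
        exact h8
      have h9 := Real.rpow_le_rpow_of_exponent_le hNh hexp
      rw [hX, hq, hrs]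
      have hrest : (0:ℝ) ≤ Ξ ^ a.length * (Ξ * E) ^ r := by positivity
      calc Nh ^ ((t'.2.map (fun c => max ((c.2.1.length : ℝ) + 1 - (L:ℝ)) 0)).sum)
            * Ξ ^ a.length * (Ξ * E) ^ r
          = Nh ^ ((t'.2.map (fun c => max ((c.2.1.length : ℝ) + 1 - (L:ℝ)) 0)).sum)
            * (Ξ ^ a.length * (Ξ * E) ^ r) := by ring
        _ ≤ Nh ^ (max ((a.length : ℝ) + 1 - (L:ℝ)) 0)
            * (Ξ ^ a.length * (Ξ * E) ^ r) := mul_le_mul_of_nonneg_right h9 hrest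
        _ = Nh ^ (max ((a.length : ℝ) + 1 - (L:ℝ)) 0) * Ξ ^ a.length
            * (Ξ * E) ^ r := by ring
    have habs : |SWCR.termFun u F₁ F₂ G t' p|
        = |SWCR.pdsW t'.1 G (SWCR.Fm F₁ F₂ p)|
          * |(t'.2.map (fun c => SWCR.pieceFun u F₁ F₂ c p)).prod| := by
      rw [SWCR.termFun, abs_mul]
    rw [habs]
    exact mul_le_mul hA hBX (abs_nonneg _) hC0nn
  have hTK : T.length ≤ K := by
    refine hTlen.trans ?_
    calc (m + n + a.length + r) ^ (a.length + r)
        ≤ (m + n + M) ^ (a.length + r) := Nat.pow_le_pow_left (by omega) _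
      _ ≤ (m + n + M) ^ M := Nat.pow_le_pow_right (by omega) (by omega)
  calc |(T.map (fun t' => SWCR.termFun u F₁ F₂ G t' p)).sum|
      ≤ ((T.map (fun t' => SWCR.termFun u F₁ F₂ G t' p)).map (fun y => |y|)).sum :=
        SWCR.abs_list_sum_le _
    _ ≤ ((T.map (fun t' => SWCR.termFun u F₁ F₂ G t' p)).map (fun y => |y|)).length
          • (C0 * X) := by
        refine List.sum_le_card_nsmul _ _ ?_
        intro y hy
        rw [List.map_map, List.mem_map] at hy
        obtain ⟨t', ht', rfl⟩ := hy
        exact hterm t' ht'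
    _ = (T.length : ℝ) * (C0 * X) := by
        simp [smul_eq_mul]
    _ ≤ (K : ℝ) * ((C0 + 1) * X) := by
        have h10 : (T.length : ℝ) ≤ (K : ℝ) := by exact_mod_cast hTK
        have h11 : C0 * X ≤ (C0 + 1) * X := by nlinarith
        exact mul_le_mul h10 h11 (by positivity) (by positivity)
    _ = (K : ℝ) * (C0 + 1) * Nh ^ (max ((a.length : ℝ) + 1 - (L:ℝ)) 0)
          * Ξ ^ a.length * (Ξ * E) ^ r := by
        rw [hX]; ring
end

section
/- Let d ≥ 1 and T > 0. Let u, v : [0,T] × ℝ^d → ℝ^d be bounded and continuously differentiable with A := sup_{t,x} ‖D_x u(t,x)‖ < ∞ (operator norm of the spatial derivative). Let ξ, ξ̃ : [0,T] × ℝ^d → ℝ be twice continuously differentiable with bounded first and second spatial derivatives, satisfying the transport equations ∂_t ξ + u·∇ξ = 0 and ∂_t ξ̃ + (u+v)·∇ξ̃ = 0 pointwise, with ∇ξ(0,·) = ∇ξ̃(0,·). Assume also that ∇(v·∇ξ̃) is bounded and continuous. Then for every t ∈ [0,T]: sup_x |∇ξ(t,x) − ∇ξ̃(t,x)| ≤ e^{At}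 ∫_0^t sup_x |∇(v·∇ξ̃)(s,x)| ds. -/
/-!
Let `X` be the characteristic of `u` ending at `(t, x)`, which exists on all of `[0, t]` because
`u` is bounded and Lipschitz in space, and let `η s = ∇ξ(s, X s) - ∇ξ̃(s, X s)`, so `η 0 = 0`.
Differentiating the two transport equations in space and using the symmetry of second
derivatives gives `η' = -η ∘ D_x u + ∇(v·∇ξ̃)(s, X s)`, hence
`‖η'‖ ≤ A ‖η‖ + sup_y |∇(v·∇ξ̃)(s, y)|`. Grönwall's inequality with this time-dependent
forcing term bounds `‖η t‖`.
-/

open MeasureTheory Set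

open Function Real

section Gronwall

theorem ContinuousOn.hasDerivWithinAt_integral_Ici {F : Type*} [NormedAddCommGroup F]
    [NormedSpace ℝ F] [CompleteSpace F] {h : ℝ → F} {a b x : ℝ} (hh : ContinuousOn h (Icc a b))
    (hx : x ∈ Ico a b) :
    HasDerivWithinAt (fun y => ∫ z in a..y, h z) (h x) (Ici x) x := by
  have : Fact (x ∈ Icc a b) := ⟨Ico_subset_Icc_self hx⟩
  refine (intervalIntegral.integral_hasDerivWithinAt_right ?_
    (hh.stronglyMeasurableAtFilter_nhdsWithin measurableSet_Icc x)
    (hh x this.out)).mono_of_mem_nhdsWithin (Icc_mem_nhdsGE_of_mem hx)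
  exact (hh.mono (Icc_subset_Icc le_rfl hx.2.le)).intervalIntegrable_of_Icc hx.1

theorem ContinuousOn.continuousOn_integral_Icc {F : Type*} [NormedAddCommGroup F]
    [NormedSpace ℝ F] {h : ℝ → F} {a b : ℝ} (hh : ContinuousOn h (Icc a b)) (hab : a ≤ b) :
    ContinuousOn (fun y => ∫ z in a..y, h z) (Icc a b) := by
  simpa only [uIcc_of_le hab] using intervalIntegral.continuousOn_primitive_interval
    (hh.integrableOn_Icc.mono_set (uIcc_of_le hab).subset)

variable {E : Type*} [NormedAddCommGroup E] [NormedSpace ℝ E]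

theorem norm_le_exp_mul_integral_of_norm_deriv_right_le {f f' : ℝ → E} {γ : ℝ → ℝ}
    {K a b : ℝ} (hK : 0 ≤ K) (hab : a ≤ b) (hf : ContinuousOn f (Icc a b))
    (hf' : ∀ x ∈ Ico a b, HasDerivWithinAt f (f' x) (Ici x) x)
    (hγ : ContinuousOn γ (Icc a b)) (hγ₀ : ∀ x ∈ Icc a b, 0 ≤ γ x) (ha : f a = 0)
    (bound : ∀ x ∈ Ico a b, ‖f' x‖ ≤ K * ‖f x‖ + γ x) :
    ‖f b‖ ≤ exp (K * (b - a)) * ∫ x in a..b, γ x := by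
  set R := fun y => ∫ z in a..y, ‖f z‖
  set Γ := fun y => ∫ z in a..y, γ z
  have hR : ∀ x ∈ Ico a b, HasDerivWithinAt R ‖f x‖ (Ici x) x :=
    fun x hx => hf.norm.hasDerivWithinAt_integral_Ici hx
  have hRc : ContinuousOn R (Icc a b) := hf.norm.continuousOn_integral_Icc hab
  have hΓ_le : ∀ x ∈ Icc a b, Γ x ≤ Γ b := fun x hx =>
    intervalIntegral.integral_mono_interval le_rfl hx.1 hx.2
      ((ae_restrict_mem measurableSet_Ioc).mono fun z hz => hγ₀ z (Ioc_subset_Icc_self hz))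
      (hγ.intervalIntegrable_of_Icc hab)
  -- `‖f‖ ≤ K R + Γ` by fencing, and then `φ = K R + Γ b` satisfies `φ' ≤ K φ` on `[a, b]`
  have h_fence : ∀ x ∈ Icc a b, ‖f x‖ ≤ K * R x + Γ x :=
    image_norm_le_of_norm_deriv_right_le_deriv_boundary' hf hf' (by simp [R, Γ, ha])
      ((hRc.const_smul K).add (hγ.continuousOn_integral_Icc hab))
      (fun x hx => ((hR x hx).const_mul K).add (hγ.hasDerivWithinAt_integral_Ici hx)) bound
  have h_gronwall : ∀ x ∈ Icc a b, K * R x + Γ b ≤ gronwallBound (Γ b) K 0 (x - a) :=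
    le_gronwallBound_of_liminf_deriv_right_le ((hRc.const_smul K).add continuousOn_const)
      (fun x hx r hr => (((hR x hx).const_mul K).add_const (Γ b)).liminf_right_slope_le hr)
      (by simp [R]) fun x hx => by
        have := h_fence x (Ico_subset_Icc_self hx)
        have := hΓ_le x (Ico_subset_Icc_self hx)
        nlinarith
  calc ‖f b‖ ≤ K * R b + Γ b := h_fence b ⟨hab, le_rfl⟩
    _ ≤ gronwallBound (Γ b) K 0 (b - a) := h_gronwall b ⟨hab, le_rfl⟩
    _ = exp (K * (b - a)) * Γ b := by rw [gronwallBound_ε0, mul_comm]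

end Gronwall

section SupMeasurable

variable {α E : Type*} [TopologicalSpace E] [TopologicalSpace.SeparableSpace E]

theorem Continuous.measurable_iSup_right [TopologicalSpace α] [MeasurableSpace α]
    [OpensMeasurableSpace α] {g : α × E → ℝ} (hg : Continuous g) :
    Measurable fun s => ⨆ y, g (s, y) := by
  obtain ⟨S, hS_countable, hS_dense⟩ := TopologicalSpace.exists_countable_dense E
  have : Countable S := hS_countable.to_subtype
  have hS : (fun s => ⨆ y, g (s, y)) = fun s => ⨆ y : S, g (s, y) :=
    funext fun s => (hS_dense.ciSup' (hg.comp (Continuous.prodMk_right s))).symm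
  rw [hS]
  exact Measurable.iSup fun y => (hg.comp (continuous_id.prodMk continuous_const)).measurable

theorem Continuous.intervalIntegrable_iSup_right [Nonempty E] {g : ℝ × E → ℝ} (hg : Continuous g)
    (hg₀ : ∀ p, 0 ≤ g p) {a b C : ℝ} (hab : a ≤ b) (hC : ∀ s ∈ Icc a b, ∀ y, g (s, y) ≤ C) :
    IntervalIntegrable (fun s => ⨆ y, g (s, y)) volume a b := by
  refine (intervalIntegrable_const (c := C)).mono_fun'
    hg.measurable_iSup_right.aestronglyMeasurable ?_
  rw [uIoc_of_le hab]
  filter_upwards [ae_restrict_mem measurableSet_Ioc] with s hs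
  rw [Real.norm_of_nonneg (Real.iSup_nonneg fun y => hg₀ _)]
  exact ciSup_le (hC s (Ioc_subset_Icc_self hs))

end SupMeasurable

theorem exists_forall_mem_Icc_hasDerivWithinAt_of_lipschitzWith {E : Type*} [NormedAddCommGroup E]
    [NormedSpace ℝ E] [CompleteSpace E] {f : ℝ → E → E} {a b L : ℝ} {K : NNReal}
    (hlip : ∀ t ∈ Icc a b, LipschitzWith K (f t)) (hcont : ∀ x, ContinuousOn (f · x) (Icc a b))
    (hbound : ∀ t ∈ Icc a b, ∀ x, ‖f t x‖ ≤ L) {t₀ : ℝ} (ht₀ : t₀ ∈ Icc a b) (x₀ : E) :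
    ∃ X : ℝ → E, X t₀ = x₀ ∧ ∀ t ∈ Icc a b, HasDerivWithinAt X (f t (X t)) (Icc a b) t := by
  have hL : 0 ≤ L := (norm_nonneg _).trans (hbound t₀ ht₀ x₀)
  have hPL : IsPicardLindelof f (tmin := a) (tmax := b) ⟨t₀, ht₀⟩ x₀
      ⟨L * (b - a), mul_nonneg hL (by linarith [ht₀.1, ht₀.2])⟩ 0 ⟨L, hL⟩ K :=
    { lipschitzOnWith := fun t ht => (hlip t ht).lipschitzOnWith
      continuousOn := fun x _ => hcont x
      norm_le := fun t ht x _ => hbound t ht x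
      mul_max_le := by
        show L * max (b - t₀) (t₀ - a) ≤ L * (b - a) - 0
        rw [sub_zero]
        exact mul_le_mul_of_nonneg_left (max_le (by linarith [ht₀.1]) (by linarith [ht₀.2])) hL }
  exact hPL.exists_eq_forall_mem_Icc_hasDerivWithinAt₀

section PartialDerivatives

variable {E F : Type*} [NormedAddCommGroup E] [NormedSpace ℝ E] [NormedAddCommGroup F]
  [NormedSpace ℝ F] {f : ℝ → E → F}

theorem hasFDerivAt_of_differentiableAt_uncurry {t : ℝ} {x : E}
    (hf : DifferentiableAt ℝ (uncurry f) (t, x)) :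
    HasFDerivAt (f t) ((fderiv ℝ (uncurry f) (t, x)).comp (.inr ℝ ℝ E)) x :=
  hf.hasFDerivAt.comp x (hasFDerivAt_prodMk_right t x)

theorem hasDerivAt_of_differentiableAt_uncurry {t : ℝ} {x : E}
    (hf : DifferentiableAt ℝ (uncurry f) (t, x)) :
    HasDerivAt (f · x) (fderiv ℝ (uncurry f) (t, x) (1, 0)) t := by
  exact hf.hasFDerivAt.comp_hasDerivAt t ((hasDerivAt_id' t).prodMk (hasDerivAt_const t x))

theorem fderiv_eq_of_differentiable_uncurry (hf : Differentiable ℝ (uncurry f)) :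
    (fun p : ℝ × E => fderiv ℝ (f p.1) p.2) = fun p => (fderiv ℝ (uncurry f) p).comp (.inr ℝ ℝ E) :=
  funext fun p => (hasFDerivAt_of_differentiableAt_uncurry (hf p)).fderiv

theorem differentiable_of_differentiable_uncurry (hf : Differentiable ℝ (uncurry f)) (t : ℝ) :
    Differentiable ℝ (f t) :=
  fun x => (hasFDerivAt_of_differentiableAt_uncurry (hf (t, x))).differentiableAt

theorem ContDiff.differentiableAt_fderiv_of_uncurry (hf : ContDiff ℝ 2 (uncurry f)) (t : ℝ)
    (x : E) : DifferentiableAt ℝ (fderiv ℝ (f t)) x := by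
  have h := congrFun (fderiv_eq_of_differentiable_uncurry (hf.differentiable two_ne_zero))
  have hD : Differentiable ℝ (fderiv ℝ (uncurry f)) :=
    (hf.fderiv_right (m := 1) le_rfl).differentiable one_ne_zero
  rw [show fderiv ℝ (f t) = fun y => (fderiv ℝ (uncurry f) (t, y)).comp (.inr ℝ ℝ E) from
    funext fun y => h (t, y)]
  exact ((hD _).comp x ((differentiableAt_const t).prodMk differentiableAt_id)).clm_comp
    (differentiableAt_const _)

end PartialDerivatives

section Transport

variable {E : Type*} [NormedAddCommGroup E] [NormedSpace ℝ E]

def SolvesTransportAt (ξ : ℝ → E → ℝ) (b : ℝ → E → E) (t : ℝ) : Prop :=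
  ∀ x, deriv (fun s => ξ s x) t + fderiv ℝ (ξ t) x (b t x) = 0

theorem SolvesTransportAt.hasDerivWithinAt_fderiv_comp {ξ : ℝ → E → ℝ} {b : ℝ → E → E}
    {t : ℝ} {X : ℝ → E} {w : E} {s : Set ℝ} (hξ : ContDiff ℝ 2 (uncurry ξ))
    (htr : SolvesTransportAt ξ b t) (hX : HasDerivWithinAt X w s t) :
    HasDerivWithinAt (fun r => fderiv ℝ (ξ r) (X r))
      (-fderiv ℝ (fun y => fderiv ℝ (ξ t) y (b t y - w)) (X t)) s t := by
  have hd : Differentiable ℝ (uncurry ξ) := hξ.differentiable two_ne_zero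
  set D := fderiv ℝ (uncurry ξ)
  set H := fderiv ℝ D (t, X t)
  have hH : HasFDerivAt D H (t, X t) :=
    ((hξ.fderiv_right (m := 1) le_rfl).differentiable one_ne_zero _).hasFDerivAt
  have hgrad : ∀ r y, fderiv ℝ (ξ r) y = (D (r, y)).comp (.inr ℝ ℝ E) :=
    fun r y => congrFun (fderiv_eq_of_differentiable_uncurry hd) (r, y)
  -- Differentiating `Dξ (t, y) (1, w) = -∇ξ(t, y) · (b t y - w)` in `y` and using the symmetry
  -- of `D²ξ` gives the derivative of `∇ξ` along `X`.
  have hdir : (fun y => fderiv ℝ (ξ t) y (b t y - w)) = fun y => -D (t, y) (1, w) := by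
    funext y
    have h := htr y
    rw [(hasDerivAt_of_differentiableAt_uncurry (hd (t, y))).deriv, hgrad] at h
    rw [hgrad, show ((1 : ℝ), w) = (1, 0) + (0, w) by simp, map_add]
    simp only [ContinuousLinearMap.comp_apply, ContinuousLinearMap.inr_apply, map_sub] at h ⊢
    linarith
  have hspace : HasFDerivAt (fun y => D (t, y) (1, w))
      ((H.comp (.inr ℝ ℝ E)).flip (1, w)) (X t) := by
    have := (hH.comp (X t) (hasFDerivAt_prodMk_right t (X t))).clm_apply
      (hasFDerivAt_const ((1 : ℝ), w) (X t))
    rwa [ContinuousLinearMap.comp_zero, zero_add] at this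
  have hcurve : HasDerivWithinAt (fun r => D (r, X r)) (H (1, w)) s t :=
    hH.comp_hasDerivWithinAt t ((hasDerivWithinAt_id t s).prodMk hX)
  have htime := hcurve.clm_comp (hasDerivWithinAt_const t s (ContinuousLinearMap.inr ℝ ℝ E))
  rw [ContinuousLinearMap.comp_zero, add_zero] at htime
  convert htime using 1
  · exact funext fun r => hgrad r (X r)
  · rw [hdir, fderiv_fun_neg, hspace.fderiv, neg_neg]
    ext e
    exact hξ.contDiffAt.isSymmSndFDerivAt (by simp) (0, e) (1, w)

theorem fderiv_clm_apply_sub_self {F G : Type*} [NormedAddCommGroup F] [NormedSpace ℝ F]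
    [NormedAddCommGroup G] [NormedSpace ℝ G] {L : E → F →L[ℝ] G} {c : E → F} {x : E}
    (hL : DifferentiableAt ℝ L x) (hc : DifferentiableAt ℝ c x) :
    fderiv ℝ (fun y => L y (c y - c x)) x = (L x).comp (fderiv ℝ c x) := by
  rw [fderiv_clm_apply hL (hc.sub_const _), fderiv_sub_const, sub_self, map_zero, add_zero]

theorem SolvesTransportAt.hasDerivWithinAt_fderiv_of_add {ξ : ℝ → E → ℝ} {u v : ℝ → E → E}
    {t : ℝ} {X : ℝ → E} {s : Set ℝ} (hξ : ContDiff ℝ 2 (uncurry ξ))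
    (htr : SolvesTransportAt ξ (fun r y => u r y + v r y) t)
    (hu : DifferentiableAt ℝ (u t) (X t)) (hv : DifferentiableAt ℝ (v t) (X t))
    (hX : HasDerivWithinAt X (u t (X t)) s t) :
    HasDerivWithinAt (fun r => fderiv ℝ (ξ r) (X r))
      (-((fderiv ℝ (ξ t) (X t)).comp (fderiv ℝ (u t) (X t))
        + fderiv ℝ (fun y => fderiv ℝ (ξ t) y (v t y)) (X t))) s t := by
  convert htr.hasDerivWithinAt_fderiv_comp hξ hX using 2
  have hL := hξ.differentiableAt_fderiv_of_uncurry t (X t)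
  have hsplit : (fun y => fderiv ℝ (ξ t) y (u t y + v t y - u t (X t)))
      = fun y => fderiv ℝ (ξ t) y (u t y - u t (X t)) + fderiv ℝ (ξ t) y (v t y) :=
    funext fun y => by rw [← map_add, sub_add_eq_add_sub]
  rw [hsplit, fderiv_fun_add (hL.clm_apply (hu.sub_const _)) (hL.clm_apply hv),
    fderiv_clm_apply_sub_self hL hu]

theorem hasDerivWithinAt_fderiv_sub_fderiv {ξ ξ' : ℝ → E → ℝ} {u v : ℝ → E → E}
    {t : ℝ} {X : ℝ → E} {s : Set ℝ} (hξ : ContDiff ℝ 2 (uncurry ξ))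
    (hξ' : ContDiff ℝ 2 (uncurry ξ')) (htr : SolvesTransportAt ξ u t)
    (htr' : SolvesTransportAt ξ' (fun r y => u r y + v r y) t)
    (hu : DifferentiableAt ℝ (u t) (X t)) (hv : DifferentiableAt ℝ (v t) (X t))
    (hX : HasDerivWithinAt X (u t (X t)) s t) :
    HasDerivWithinAt (fun r => fderiv ℝ (ξ r) (X r) - fderiv ℝ (ξ' r) (X r))
      (-(fderiv ℝ (ξ t) (X t) - fderiv ℝ (ξ' t) (X t)).comp (fderiv ℝ (u t) (X t))
        + fderiv ℝ (fun y => fderiv ℝ (ξ' t) y (v t y)) (X t)) s t := by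
  have h := SolvesTransportAt.hasDerivWithinAt_fderiv_of_add (v := fun _ _ => 0) hξ
    (by simpa [SolvesTransportAt] using htr) hu (differentiableAt_const 0) hX
  refine (h.fun_sub (htr'.hasDerivWithinAt_fderiv_of_add hξ' hu hv hX)).congr_deriv ?_
  simp only [map_zero, fderiv_fun_const, Pi.zero_apply, add_zero, ContinuousLinearMap.sub_comp]
  abel

end Transport

theorem phase_gradient_stability_general
    (d : ℕ) (T : ℝ)
    (u v : ℝ → EuclideanSpace ℝ (Fin d) → EuclideanSpace ℝ (Fin d))
    (hu : ContDiff ℝ 1 (fun p : ℝ × EuclideanSpace ℝ (Fin d) => u p.1 p.2))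
    (hv : ContDiff ℝ 1 (fun p : ℝ × EuclideanSpace ℝ (Fin d) => v p.1 p.2))
    (Bu : ℝ) (huv_bd : ∀ t ∈ Icc (0:ℝ) T, ∀ x, ‖u t x‖ ≤ Bu ∧ ‖v t x‖ ≤ Bu)
    (A : ℝ) (hA : ∀ t ∈ Icc (0:ℝ) T, ∀ x, ‖fderiv ℝ (u t) x‖ ≤ A)
    (ξ ξ' : ℝ → EuclideanSpace ℝ (Fin d) → ℝ)
    (hξ : ContDiff ℝ 2 (fun p : ℝ × EuclideanSpace ℝ (Fin d) => ξ p.1 p.2))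
    (hξ' : ContDiff ℝ 2 (fun p : ℝ × EuclideanSpace ℝ (Fin d) => ξ' p.1 p.2))
    (htransport : ∀ t ∈ Icc (0:ℝ) T, ∀ x,
      deriv (fun s => ξ s x) t + fderiv ℝ (ξ t) x (u t x) = 0)
    (htransport' : ∀ t ∈ Icc (0:ℝ) T, ∀ x,
      deriv (fun s => ξ' s x) t + fderiv ℝ (ξ' t) x (u t x + v t x) = 0)
    (hinit : ∀ x, fderiv ℝ (ξ 0) x = fderiv ℝ (ξ' 0) x)
    (Bg : ℝ)
    (hg_bd : ∀ t ∈ Icc (0:ℝ) T, ∀ x,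
      ‖fderiv ℝ (fun y => fderiv ℝ (ξ' t) y (v t y)) x‖ ≤ Bg)
    (hg_cont : Continuous (fun p : ℝ × EuclideanSpace ℝ (Fin d) =>
      fderiv ℝ (fun y => fderiv ℝ (ξ' p.1) y (v p.1 y)) p.2)) :
    ∀ t ∈ Icc (0:ℝ) T, ∀ x,
      ‖fderiv ℝ (ξ t) x - fderiv ℝ (ξ' t) x‖ ≤
        Real.exp (A * t) *
          ∫ s in (0:ℝ)..t, ⨆ y, ‖fderiv ℝ (fun z => fderiv ℝ (ξ' s) z (v s z)) y‖ := by
  intro t₀ ht₀ x₀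
  have hA₀ : 0 ≤ A := (norm_nonneg _).trans (hA t₀ ht₀ x₀)
  have hsub : Icc 0 t₀ ⊆ Icc 0 T := Icc_subset_Icc le_rfl ht₀.2
  have hud := differentiable_of_differentiable_uncurry (f := u) (hu.differentiable one_ne_zero)
  have hvd := differentiable_of_differentiable_uncurry (f := v) (hv.differentiable one_ne_zero)
  obtain ⟨X, hXt₀, hX⟩ := exists_forall_mem_Icc_hasDerivWithinAt_of_lipschitzWith
    (fun s hs => lipschitzWith_of_nnnorm_fderiv_le (hud s) fun y =>
      (Real.le_toNNReal_iff_coe_le hA₀).2 (hA s (hsub hs) y))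
    (fun y => (hu.continuous.comp (continuous_id.prodMk continuous_const)).continuousOn)
    (fun s hs y => (huv_bd s (hsub hs) y).1) ⟨ht₀.1, le_rfl⟩ x₀
  have hη : ∀ s ∈ Icc 0 t₀, _ := fun s hs => hasDerivWithinAt_fderiv_sub_fderiv hξ hξ'
    (htransport s (hsub hs)) (htransport' s (hsub hs)) (hud s (X s)) (hvd s (X s)) (hX s hs)
  have hγ : ContinuousOn (fun s => ‖fderiv ℝ (fun y => fderiv ℝ (ξ' s) y (v s y)) (X s)‖)
      (Icc 0 t₀) :=
    (hg_cont.comp_continuousOn (continuousOn_id.prodMk fun s hs =>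
      (hX s hs).continuousWithinAt)).norm
  have hgronwall := norm_le_exp_mul_integral_of_norm_deriv_right_le hA₀ ht₀.1
    (fun s hs => (hη s hs).continuousWithinAt)
    (fun s hs => (hη s (Ico_subset_Icc_self hs)).mono_of_mem_nhdsWithin (Icc_mem_nhdsGE_of_mem hs))
    hγ (fun _ _ => norm_nonneg _) (by simp [hinit]) fun s hs => by
      refine (norm_add_le _ _).trans (add_le_add_left ?_ _)
      rw [norm_neg, mul_comm A]
      exact (ContinuousLinearMap.opNorm_comp_le _ _).trans
        (by gcongr; exact hA s (hsub (Ico_subset_Icc_self hs)) (X s))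
  rw [hXt₀, sub_zero] at hgronwall
  refine hgronwall.trans (mul_le_mul_of_nonneg_left ?_ (Real.exp_pos _).le)
  exact intervalIntegral.integral_mono_on ht₀.1 (hγ.intervalIntegrable_of_Icc ht₀.1)
    (hg_cont.norm.intervalIntegrable_iSup_right (fun _ => norm_nonneg _) ht₀.1
      fun s hs => hg_bd s (hsub hs))
    fun s hs => le_ciSup ⟨Bg, by rintro _ ⟨y, rfl⟩; exact hg_bd s (hsub hs) y⟩ (X s)

/-- Stability of transported phase gradients: if `ξ` is transported by `u` and `ξ̃` by
`u + v`, with the same initial gradients, `‖D_x u‖ ≤ A`, and all data suitably bounded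
and regular on `[0,T] × ℝ^d`, then
`sup_x |∇ξ(t,x) − ∇ξ̃(t,x)| ≤ e^{At} ∫₀ᵗ sup_x |∇(v·∇ξ̃)(s,x)| ds`. -/
theorem phase_gradient_stability
    (d : ℕ) (hd : 1 ≤ d) (T : ℝ) (hT : 0 < T)
    (u v : ℝ → EuclideanSpace ℝ (Fin d) → EuclideanSpace ℝ (Fin d))
    (hu : ContDiff ℝ 1 (fun p : ℝ × EuclideanSpace ℝ (Fin d) => u p.1 p.2))
    (hv : ContDiff ℝ 1 (fun p : ℝ × EuclideanSpace ℝ (Fin d) => v p.1 p.2))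
    (Bu : ℝ) (huv_bd : ∀ t ∈ Icc (0:ℝ) T, ∀ x, ‖u t x‖ ≤ Bu ∧ ‖v t x‖ ≤ Bu)
    (A : ℝ) (hA : ∀ t ∈ Icc (0:ℝ) T, ∀ x, ‖fderiv ℝ (u t) x‖ ≤ A)
    (ξ ξ' : ℝ → EuclideanSpace ℝ (Fin d) → ℝ)
    (hξ : ContDiff ℝ 2 (fun p : ℝ × EuclideanSpace ℝ (Fin d) => ξ p.1 p.2))
    (hξ' : ContDiff ℝ 2 (fun p : ℝ × EuclideanSpace ℝ (Fin d) => ξ' p.1 p.2))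
    (B : ℝ)
    (hξ_bd : ∀ t ∈ Icc (0:ℝ) T, ∀ x,
      ‖fderiv ℝ (ξ t) x‖ ≤ B ∧ ‖iteratedFDeriv ℝ 2 (ξ t) x‖ ≤ B ∧
      ‖fderiv ℝ (ξ' t) x‖ ≤ B ∧ ‖iteratedFDeriv ℝ 2 (ξ' t) x‖ ≤ B)
    (htransport : ∀ t ∈ Icc (0:ℝ) T, ∀ x,
      deriv (fun s => ξ s x) t + fderiv ℝ (ξ t) x (u t x) = 0)
    (htransport' : ∀ t ∈ Icc (0:ℝ) T, ∀ x,
      deriv (fun s => ξ' s x) t + fderiv ℝ (ξ' t) x (u t x + v t x) = 0)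
    (hinit : ∀ x, fderiv ℝ (ξ 0) x = fderiv ℝ (ξ' 0) x)
    (Bg : ℝ)
    (hg_bd : ∀ t ∈ Icc (0:ℝ) T, ∀ x,
      ‖fderiv ℝ (fun y => fderiv ℝ (ξ' t) y (v t y)) x‖ ≤ Bg)
    (hg_cont : Continuous (fun p : ℝ × EuclideanSpace ℝ (Fin d) =>
      fderiv ℝ (fun y => fderiv ℝ (ξ' p.1) y (v p.1 y)) p.2)) :
    ∀ t ∈ Icc (0:ℝ) T, ∀ x,
      ‖fderiv ℝ (ξ t) x - fderiv ℝ (ξ' t) x‖ ≤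
        Real.exp (A * t) *
          ∫ s in (0:ℝ)..t, ⨆ y, ‖fderiv ℝ (fun z => fderiv ℝ (ξ' s) z (v s z)) y‖ :=
  phase_gradient_stability_general d T u v hu hv Bu huv_bd A hA ξ ξ' hξ hξ' htransport htransport'
    hinit Bg hg_bd hg_cont
end

section
/- There exists δ₀ ∈ (0,1) such that the following holds. Let δ ∈ (0, δ₀], ε ∈ (0, δ³], Ĉ ≥ 1, Ξ₀ ≥ 1, and D_{u,0} ≥ D_{R,0} > 0. For Z ≥ 1 define sequences recursively by N_k = Ĉ² Z² (D_{u,k}/D_{R,k})^{−1} D_{R,k}^{−2δ}, Ξ_{k+1} = Ĉ N_k Ξ_k, D_{u,k+1} = D_{R,k}, and D_{R,k+1} = D_{R,k}^{1+δ} / Z. Then there exists Z₀ ≥ 1, depending on δ, ε, Ĉ, Ξ₀, D_{u,0}, D_{R,0}, such that for every Z ≥ Z₀: (i) D_{R,k+1} ≤ D_{R,k}/2 for every k ≥ 0 and D_{R,k} ≤ 1 for every k ≥ 1; and (ii) Z^{−2+2ε} Ξ_k^{ε} (D_{u,k}/D_{R,k})^{2−ε} D_{R,k}^{2δ(1−ε)}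 ≤ 1 for every k ≥ 0. -/
/-!
On a logarithmic scale the recursions are affine. Writing `a_k = log D_{R,k}` and `z = log Z`,
the gap `w_k = z - δ a_k` is multiplied by `1 + δ` at each step, so it stays above `log Ĉ` once
it starts there, while `log Ξ` grows by at most `3 log Ĉ + 2 w_k`. Hence the invariant
`3ε log Ĉ + ε log Ξ_k ≤ γ w_k`, `γ = 2δ - 3ε - 2δε`, propagates as soon as `5ε ≤ δγ`, which
`ε ≤ δ³` guarantees. For `k ≥ 1` the logarithm of the admissibility quantity is
`3ε log Ĉ + ε log Ξ_{k-1} - γ w_{k-1} - ε log (D_{u,k-1} / D_{R,k-1})`, so the invariant is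
exactly what is needed; the case `k = 0` and the start of the induction only ask for `Z` large.
-/

open Real

section Exponents

variable {δ ε : ℝ}

theorem three_mul_le_of_le_pow_three (hδ : 0 < δ) (hδ4 : δ ≤ 1 / 4) (hεδ : ε ≤ δ ^ 3) :
    3 * ε ≤ δ := by
  nlinarith [mul_pos hδ hδ]

theorem le_two_mul_sub_of_le_pow_three (hδ : 0 < δ) (hδ4 : δ ≤ 1 / 4) (hε : 0 < ε)
    (hεδ : ε ≤ δ ^ 3) : δ ≤ 2 * δ - 3 * ε - 2 * δ * ε := by
  nlinarith [mul_pos hδ hδ, mul_le_mul_of_nonneg_left hεδ hδ.le]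

theorem five_mul_le_of_le_pow_three (hδ : 0 < δ) (hδ4 : δ ≤ 1 / 4) (hε : 0 < ε)
    (hεδ : ε ≤ δ ^ 3) : 5 * ε ≤ δ * (2 * δ - 3 * ε - 2 * δ * ε) := by
  nlinarith [mul_le_mul_of_nonneg_left (le_two_mul_sub_of_le_pow_three hδ hδ4 hε hεδ) hδ.le,
    mul_pos hδ hδ]

end Exponents

theorem rpow_one_add_div_le {x M δ Z : ℝ} (hx : 0 < x) (hxM : x ≤ M) (hM : 1 ≤ M)
    (hδ0 : 0 ≤ δ) (hδ1 : δ ≤ 1) (hZ : 2 * M ^ 2 ≤ Z) : x ^ (1 + δ) / Z ≤ x / (2 * M) := by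
  have hxδ : x ^ δ ≤ M :=
    (rpow_le_rpow hx.le hxM hδ0).trans (rpow_le_self_of_one_le hM hδ1)
  rw [rpow_add hx, rpow_one, div_le_div_iff₀ (by nlinarith) (by positivity)]
  calc x * x ^ δ * (2 * M) ≤ x * M * (2 * M) := by gcongr
    _ = x * (2 * M ^ 2) := by ring
    _ ≤ x * Z := by gcongr

theorem pos_and_halving_of_rpow_div {δ Z M : ℝ} {D : ℕ → ℝ} (hδ0 : 0 ≤ δ) (hδ1 : δ ≤ 1)
    (hM : 1 ≤ M) (hZ : 2 * M ^ 2 ≤ Z) (h0 : 0 < D 0) (h0M : D 0 ≤ M)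
    (hrec : ∀ k, D (k + 1) = D k ^ (1 + δ) / Z) :
    (∀ k, 0 < D k) ∧ (∀ k, D (k + 1) ≤ D k / 2) ∧ ∀ k, 1 ≤ k → D k ≤ 1 := by
  have hZpos : 0 < Z := by nlinarith
  have hbound : ∀ k, 0 < D k ∧ D k ≤ M := by
    intro k
    induction k with
    | zero => exact ⟨h0, h0M⟩
    | succ k ih =>
      have hstep := rpow_one_add_div_le ih.1 ih.2 hM hδ0 hδ1 hZ
      rw [hrec]
      refine ⟨by have := ih.1; positivity, hstep.trans ?_⟩
      rw [div_le_iff₀ (by positivity)]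
      nlinarith [ih.2]
  have hstep k := hrec k ▸ rpow_one_add_div_le (hbound k).1 (hbound k).2 hM hδ0 hδ1 hZ
  refine ⟨fun k => (hbound k).1, fun k => (hstep k).trans ?_, fun k hk => ?_⟩
  · exact div_le_div_of_nonneg_left (hbound k).1.le two_pos (by linarith)
  · obtain ⟨j, rfl⟩ := Nat.exists_eq_add_of_le' hk
    refine (hstep j).trans ?_
    rw [div_le_one (by positivity)]
    linarith [(hbound j).2]

section LogScale

variable {δ ε c z : ℝ} {a u x : ℕ → ℝ}

theorem gap_eq_pow_mul (ha : ∀ k, a (k + 1) = (1 + δ) * a k - z) (k : ℕ) :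
    z - δ * a k = (1 + δ) ^ k * (z - δ * a 0) := by
  induction k with
  | zero => ring
  | succ k ih => rw [ha, pow_succ, mul_right_comm, ← ih]; ring

theorem le_gap (ha : ∀ k, a (k + 1) = (1 + δ) * a k - z) (hδ : 0 ≤ δ) (hc : 0 ≤ c)
    (hc0 : c ≤ z - δ * a 0) (k : ℕ) : c ≤ z - δ * a k := by
  rw [gap_eq_pow_mul ha]
  exact hc0.trans (le_mul_of_one_le_left (hc.trans hc0) (one_le_pow₀ (by linarith)))

theorem log_admissible_invariant (ha : ∀ k, a (k + 1) = (1 + δ) * a k - z)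
    (hx : ∀ k, x (k + 1) = 3 * c + 2 * z - (u k - a k) - 2 * δ * a k + x k)
    (hau : ∀ k, a k ≤ u k) (hδ : 0 ≤ δ) (hε : 0 ≤ ε)
    (hεγ : 5 * ε ≤ δ * (2 * δ - 3 * ε - 2 * δ * ε)) (hc : 0 ≤ c) (hc0 : c ≤ z - δ * a 0)
    (h0 : 3 * ε * c + ε * x 0 ≤ (2 * δ - 3 * ε - 2 * δ * ε) * (z - δ * a 0)) (k : ℕ) :
    3 * ε * c + ε * x k ≤ (2 * δ - 3 * ε - 2 * δ * ε) * (z - δ * a k) := by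
  induction k with
  | zero => exact h0
  | succ k ih =>
    set γ := 2 * δ - 3 * ε - 2 * δ * ε
    have hck := le_gap ha hδ hc hc0 k
    calc 3 * ε * c + ε * x (k + 1)
        = (3 * ε * c + ε * x k) + 3 * ε * c + 2 * ε * (z - δ * a k) - ε * (u k - a k) := by
          rw [hx]; ring
      _ ≤ γ * (z - δ * a k) + 5 * ε * (z - δ * a k) := by
          linarith [mul_le_mul_of_nonneg_left (hau k) hε, mul_le_mul_of_nonneg_left hck hε]
      _ ≤ γ * (z - δ * a k) + δ * γ * (z - δ * a k) := by
          gcongr; exact hc.trans hck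
      _ = γ * (z - δ * a (k + 1)) := by rw [ha]; ring

theorem log_admissible_zero {m ξ v r : ℝ} (hδ : 0 ≤ δ) (hδ1 : δ ≤ 1) (hε3 : 3 * ε ≤ 1)
    (hc : 0 ≤ c) (hξ : 0 ≤ ξ) (hm : 0 ≤ m) (hrm : r ≤ m) (hrv : r ≤ v)
    (hz : 2 * m + c + ξ + 2 * (v - r) ≤ z) :
    (-2 + 2 * ε) * z + ε * ξ + (2 - ε) * (v - r) + 2 * δ * (1 - ε) * r ≤ 0 := by
  have h1 : 0 ≤ 1 - ε := by linarith
  nlinarith [mul_le_mul_of_nonneg_left hz h1, mul_le_mul_of_nonneg_left hrm (mul_nonneg hδ h1),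
    mul_le_mul_of_nonneg_right hδ1 (mul_nonneg hm h1), mul_nonneg (by linarith : 0 ≤ 2 - 3 * ε) hξ,
    mul_nonneg (by linarith : 0 ≤ 2 - 3 * ε) (sub_nonneg.2 hrv), mul_nonneg h1 hc]

theorem log_admissible {m : ℝ} (hδ : 0 < δ) (hδ4 : δ ≤ 1 / 4) (hε : 0 < ε) (hεδ : ε ≤ δ ^ 3)
    (ha : ∀ k, a (k + 1) = (1 + δ) * a k - z) (hu : ∀ k, u (k + 1) = a k)
    (hx : ∀ k, x (k + 1) = 3 * c + 2 * z - (u k - a k) - 2 * δ * a k + x k)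
    (hau : ∀ k, a k ≤ u k) (hc : 0 ≤ c) (hx0 : 0 ≤ x 0) (hm : 0 ≤ m) (ham : a 0 ≤ m)
    (hz : 2 * m + c + x 0 + 2 * (u 0 - a 0) ≤ z) (k : ℕ) :
    (-2 + 2 * ε) * z + ε * x k + (2 - ε) * (u k - a k) + 2 * δ * (1 - ε) * a k ≤ 0 := by
  have h3ε := three_mul_le_of_le_pow_three hδ hδ4 hεδ
  have hγ := le_two_mul_sub_of_le_pow_three hδ hδ4 hε hεδ
  have hδa : δ * a 0 ≤ m :=
    (mul_le_mul_of_nonneg_left ham hδ.le).trans (mul_le_of_le_one_left hm (by linarith))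
  have hw0 : c + x 0 ≤ z - δ * a 0 := by linarith [hau 0]
  cases k with
  | zero => exact log_admissible_zero hδ.le (by linarith) (by linarith) hc hx0 hm ham (hau 0) hz
  | succ k =>
    have h0 : 3 * ε * c + ε * x 0 ≤ (2 * δ - 3 * ε - 2 * δ * ε) * (z - δ * a 0) :=
      calc 3 * ε * c + ε * x 0 ≤ 3 * ε * (c + x 0) := by linarith [mul_nonneg hε.le hx0]
        _ ≤ (2 * δ - 3 * ε - 2 * δ * ε) * (z - δ * a 0) := by
          gcongr
          · linarith
          · linarith
    have hinv := log_admissible_invariant ha hx hau hδ.le hε.le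
      (five_mul_le_of_le_pow_three hδ hδ4 hε hεδ) hc (by linarith) h0 k
    calc (-2 + 2 * ε) * z + ε * x (k + 1) + (2 - ε) * (u (k + 1) - a (k + 1))
          + 2 * δ * (1 - ε) * a (k + 1)
        = (3 * ε * c + ε * x k) - (2 * δ - 3 * ε - 2 * δ * ε) * (z - δ * a k)
          - ε * (u k - a k) := by rw [hx, hu, ha]; ring
      _ ≤ 0 := by linarith [mul_nonneg hε.le (sub_nonneg.2 (hau k))]

end LogScale

theorem pos_of_succ_eq_mul {f g : ℕ → ℝ} (h0 : 0 < g 0) (hf : ∀ k, 0 < f k)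
    (hrec : ∀ k, g (k + 1) = f k * g k) (k : ℕ) : 0 < g k := by
  induction k with
  | zero => exact h0
  | succ k ih => rw [hrec]; exact mul_pos (hf k) ih

theorem log_mul_step_factor {δ Ch Z v r ξ : ℝ} (hCh : 0 < Ch) (hZ : 0 < Z) (hv : 0 < v)
    (hr : 0 < r) (hξ : 0 < ξ) :
    log (Ch * (Ch ^ 2 * Z ^ 2 * (v / r)⁻¹ * r ^ (-(2 * δ))) * ξ) =
      3 * log Ch + 2 * log Z - (log v - log r) - 2 * δ * log r + log ξ := by
  rw [log_mul (by positivity) hξ.ne', log_mul hCh.ne' (by positivity),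
    log_mul (by positivity) (by positivity), log_mul (by positivity) (by positivity),
    log_mul (by positivity) (by positivity), log_pow, log_pow, log_inv, log_div hv.ne' hr.ne',
    log_rpow hr]
  push_cast; ring

theorem admissibility_le_one_iff {δ ε Z ξ v r : ℝ} (hZ : 0 < Z) (hξ : 0 < ξ) (hv : 0 < v)
    (hr : 0 < r) :
    Z ^ (-2 + 2 * ε) * ξ ^ ε * (v / r) ^ (2 - ε) * r ^ (2 * δ * (1 - ε)) ≤ 1 ↔
      (-2 + 2 * ε) * log Z + ε * log ξ + (2 - ε) * (log v - log r) +
        2 * δ * (1 - ε) * log r ≤ 0 := by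
  rw [← log_nonpos_iff (by positivity), log_mul (by positivity) (by positivity),
    log_mul (by positivity) (by positivity), log_mul (by positivity) (by positivity),
    log_rpow hZ, log_rpow hξ, log_rpow (by positivity), log_rpow hr, log_div hv.ne' hr.ne']

theorem log_sq_mul_le_log {M C ξ v r Z : ℝ} (hM : 1 ≤ M) (hC : 0 < C) (hξ : 0 < ξ) (hr : 0 < r)
    (hv : 0 < v) (hZ : M ^ 2 * (C * ξ * (v / r) ^ 2) ≤ Z) :
    2 * log M + log C + log ξ + 2 * (log v - log r) ≤ log Z := by
  have hM0 : 0 < M := by linarith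
  have := log_le_log (by positivity) hZ
  rw [log_mul (by positivity) (by positivity), log_mul (by positivity) (by positivity),
    log_mul (by positivity) (by positivity), log_pow, log_pow, log_div hv.ne' hr.ne'] at this
  push_cast at this
  linarith

/-- Admissibility of the parameter evolution: there is a `δ₀ ∈ (0,1)` such that for all
`δ ∈ (0,δ₀]`, `ε ∈ (0,δ³]`, `Ĉ ≥ 1`, `Ξ₀ ≥ 1` and `D_{u,0} ≥ D_{R,0} > 0`, there is a
`Z₀ ≥ 1` such that for all `Z ≥ Z₀` the sequences defined by the recursions
`N_k = Ĉ²Z²(D_{u,k}/D_{R,k})⁻¹ D_{R,k}^{-2δ}`, `Ξ_{k+1} = ĈN_kΞ_k`,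
`D_{u,k+1} = D_{R,k}`, `D_{R,k+1} = D_{R,k}^{1+δ}/Z` satisfy geometric decay
`D_{R,k+1} ≤ D_{R,k}/2`, `D_{R,k} ≤ 1` for `k ≥ 1`, and the admissibility condition
`Z^{-2+2ε} Ξ_k^ε (D_{u,k}/D_{R,k})^{2-ε} D_{R,k}^{2δ(1-ε)} ≤ 1` for all `k`. -/
theorem parameter_evolution_admissibility :
    ∃ δ₀ : ℝ, 0 < δ₀ ∧ δ₀ < 1 ∧
      ∀ δ ε Ch Ξ₀ Du₀ DR₀ : ℝ,
        0 < δ → δ ≤ δ₀ → 0 < ε → ε ≤ δ ^ 3 → 1 ≤ Ch → 1 ≤ Ξ₀ → 0 < DR₀ → DR₀ ≤ Du₀ →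
        ∃ Z₀ : ℝ, 1 ≤ Z₀ ∧
          ∀ Z : ℝ, Z₀ ≤ Z →
          ∀ N Ξs Du DR : ℕ → ℝ,
            Ξs 0 = Ξ₀ → Du 0 = Du₀ → DR 0 = DR₀ →
            (∀ k, N k = Ch ^ 2 * Z ^ 2 * (Du k / DR k)⁻¹ * DR k ^ (-(2 * δ))) →
            (∀ k, Ξs (k + 1) = Ch * N k * Ξs k) →
            (∀ k, Du (k + 1) = DR k) →
            (∀ k, DR (k + 1) = DR k ^ (1 + δ) / Z) →
            (∀ k, DR (k + 1) ≤ DR k / 2) ∧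
            (∀ k, 1 ≤ k → DR k ≤ 1) ∧
            (∀ k, Z ^ (-2 + 2 * ε) * Ξs k ^ ε * (Du k / DR k) ^ (2 - ε) *
                DR k ^ (2 * δ * (1 - ε)) ≤ 1) := by
  refine ⟨1 / 4, by norm_num, by norm_num, ?_⟩
  intro δ ε Ch Ξ₀ Du₀ DR₀ hδ hδ4 hε hεδ hCh hΞ₀ hDR₀ hDu₀
  set M := max 1 DR₀
  have hM : 1 ≤ M := le_max_left _ _
  have hL : 1 ≤ Ch * Ξ₀ * (Du₀ / DR₀) ^ 2 :=
    one_le_mul_of_one_le_of_one_le (one_le_mul_of_one_le_of_one_le hCh hΞ₀)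
      (one_le_pow₀ ((one_le_div hDR₀).2 hDu₀))
  refine ⟨2 * M ^ 2 * (Ch * Ξ₀ * (Du₀ / DR₀) ^ 2), by nlinarith, ?_⟩
  intro Z hZ N Ξs Du DR hΞs0 hDu0 hDR0 hN hΞrec hDurec hDRrec
  have hZpos : 0 < Z := by nlinarith
  obtain ⟨hDR, hhalf, hle1⟩ := pos_and_halving_of_rpow_div hδ.le (by linarith) hM
    ((le_mul_of_one_le_right (by positivity) hL).trans hZ) (hDR0 ▸ hDR₀)
    (hDR0 ▸ le_max_right 1 DR₀) hDRrec
  have hDRDu : ∀ k, DR k ≤ Du k := by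
    rintro (_ | k)
    · rwa [hDR0, hDu0]
    · rw [hDurec]; linarith [hhalf k, hDR k]
  have hDu k : 0 < Du k := (hDR k).trans_le (hDRDu k)
  have hΞ := pos_of_succ_eq_mul (hΞs0 ▸ by positivity)
    (fun k => by rw [hN]; have := hDR k; have := hDu k; positivity) hΞrec
  refine ⟨hhalf, hle1, fun k => ?_⟩
  rw [admissibility_le_one_iff hZpos (hΞ k) (hDu k) (hDR k)]
  refine log_admissible (a := fun k => log (DR k)) (u := fun k => log (Du k))
    (x := fun k => log (Ξs k)) (m := log M) hδ hδ4 hε hεδ (fun k => ?_) (fun k => by rw [hDurec])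
    (fun k => ?_) (fun k => log_le_log (hDR k) (hDRDu k)) (log_nonneg hCh)
    (hΞs0 ▸ log_nonneg hΞ₀) (log_nonneg hM) (hDR0 ▸ log_le_log hDR₀ (le_max_right 1 DR₀)) ?_ k
  · rw [hDRrec, log_div (by have := hDR k; positivity) hZpos.ne', log_rpow (hDR k)]
  · rw [hΞrec, hN, log_mul_step_factor (by linarith) hZpos (hDu k) (hDR k) (hΞ k)]
  · rw [hΞs0, hDu0, hDR0]
    exact log_sq_mul_le_log hM (by linarith) (by linarith) hDR₀ (by linarith)
      (by nlinarith)
end
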